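/- arXiv:2102.05536 — 12 statements merged into one kernel-verified Lean document; each statement's English description precedes it below -/
import Mathlib

section
/- For every non-trivial product distribution P on {0,1}^n (i.e., with 0 < p_j < 1 for all j, where p_j = Pr[z_j = 1]) and every antichain A ⊆ {0,1}^n (viewed as subsets of [n] under inclusion), the probability that a P-random point lies in A is at most the maximum over ℓ ∈ {0,1,...,n} of Pr_{z∼P}[|z| = ℓ], where |z| denotes the number of ones in z. -/
/-!
The level weights `w ℓ = P[|z| = ℓ]` are log-concave, and adding the coordinates one at a time
(Harper's product theorem) shows that the product-weighted cube has the normalized matching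
property: a family `B` on level `ℓ` satisfies `P[B] / w ℓ ≤ P[∂⁺B] / w (ℓ + 1)`. Replacing the
lowest level of an antichain by its upper shadow therefore never decreases
`∑ s ∈ A, P[s] / w |s|` and keeps an antichain, which yields the LYM inequality
`∑ s ∈ A, P[s] / w |s| ≤ 1`, and so `P[A] ≤ max ℓ, w ℓ`.
-/

open Finset

section ProductWeight

variable {α : Type*} [DecidableEq α] {p : α → ℝ} {σ : Finset α} {x : α}

-- `P[z = t]` for the product distribution on the subsets of `σ`; only `t ∩ σ` matters, so the
-- cube can be grown one coordinate at a time.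
noncomputable def prodWeight (p : α → ℝ) (σ t : Finset α) : ℝ :=
  ∏ j ∈ σ, if j ∈ t then p j else 1 - p j

noncomputable def familyWeight (p : α → ℝ) (σ : Finset α) (B : Finset (Finset α)) : ℝ :=
  ∑ t ∈ B, prodWeight p σ t

noncomputable def levelWeight (p : α → ℝ) (σ : Finset α) (ℓ : ℕ) : ℝ :=
  familyWeight p σ (σ.powersetCard ℓ)

def upShadowIn (σ : Finset α) (ℓ : ℕ) (B : Finset (Finset α)) : Finset (Finset α) :=
  (σ.powersetCard (ℓ + 1)).filter fun t => ∃ s ∈ B, s ⊂ t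

def raiseLevel (σ : Finset α) (m : ℕ) (A : Finset (Finset α)) : Finset (Finset α) :=
  A.filter (·.card ≠ m) ∪ upShadowIn σ m (A.filter (·.card = m))

noncomputable def lymSum (p : α → ℝ) (σ : Finset α) (A : Finset (Finset α)) : ℝ :=
  ∑ s ∈ A, prodWeight p σ s / levelWeight p σ s.card

lemma prodWeight_pos (hp : ∀ j, 0 < p j ∧ p j < 1) (σ t : Finset α) : 0 < prodWeight p σ t :=
  prod_pos fun j _ => by split_ifs <;> linarith [hp j]

lemma familyWeight_nonneg (hp : ∀ j, 0 < p j ∧ p j < 1) (σ : Finset α) (B : Finset (Finset α)) :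
    0 ≤ familyWeight p σ B :=
  sum_nonneg fun t _ => (prodWeight_pos hp σ t).le

lemma familyWeight_mono (hp : ∀ j, 0 < p j ∧ p j < 1) (σ : Finset α) {B C : Finset (Finset α)}
    (h : B ⊆ C) : familyWeight p σ B ≤ familyWeight p σ C :=
  sum_le_sum_of_subset_of_nonneg h fun t _ _ => (prodWeight_pos hp σ t).le

lemma levelWeight_nonneg (hp : ∀ j, 0 < p j ∧ p j < 1) (σ : Finset α) (ℓ : ℕ) :
    0 ≤ levelWeight p σ ℓ :=
  familyWeight_nonneg hp σ _

lemma levelWeight_eq_zero {ℓ : ℕ} (h : σ.card < ℓ) : levelWeight p σ ℓ = 0 := by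
  simp [levelWeight, familyWeight, powersetCard_eq_empty.2 h]

lemma levelWeight_pos (hp : ∀ j, 0 < p j ∧ p j < 1) {ℓ : ℕ} (h : ℓ ≤ σ.card) :
    0 < levelWeight p σ ℓ := by
  obtain ⟨t, hts, rfl⟩ := exists_subset_card_eq h
  exact sum_pos (fun s _ => prodWeight_pos hp σ s) ⟨t, mem_powersetCard.2 ⟨hts, rfl⟩⟩

lemma prodWeight_congr {t t' : Finset α} (h : ∀ j ∈ σ, j ∈ t ↔ j ∈ t') :
    prodWeight p σ t = prodWeight p σ t' :=
  prod_congr rfl fun j hj => by simp only [h j hj]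

lemma prodWeight_insert (hx : x ∉ σ) (t : Finset α) :
    prodWeight p (insert x σ) t = (if x ∈ t then p x else 1 - p x) * prodWeight p σ t :=
  prod_insert hx

lemma familyWeight_insert (hx : x ∉ σ) (B : Finset (Finset α)) :
    familyWeight p (insert x σ) B =
      (1 - p x) * familyWeight p σ (B.filter (x ∉ ·)) +
        p x * familyWeight p σ (B.filter (x ∈ ·)) := by
  simp only [familyWeight, prodWeight_insert hx, ite_mul, sum_ite, mul_sum]
  ring

lemma familyWeight_image_erase (hx : x ∉ σ) {B : Finset (Finset α)} (hB : ∀ t ∈ B, x ∈ t) :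
    familyWeight p σ (B.image (·.erase x)) = familyWeight p σ B := by
  rw [familyWeight, sum_image fun a ha b hb => erase_injOn' x (hB a ha) (hB b hb)]
  exact sum_congr rfl fun t _ =>
    prodWeight_congr fun j hj => by simp [ne_of_mem_of_not_mem hj hx]

lemma levelWeight_insert_zero (hx : x ∉ σ) :
    levelWeight p (insert x σ) 0 = (1 - p x) * levelWeight p σ 0 := by
  simp [levelWeight, familyWeight, prodWeight_insert hx]

lemma levelWeight_insert_succ (hx : x ∉ σ) (ℓ : ℕ) :
    levelWeight p (insert x σ) (ℓ + 1) =
      (1 - p x) * levelWeight p σ (ℓ + 1) + p x * levelWeight p σ ℓ := by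
  have hx' : ∀ t ∈ σ.powersetCard ℓ, x ∉ t := fun t ht hxt =>
    hx ((mem_powersetCard.1 ht).1 hxt)
  rw [levelWeight, powersetCard_succ_insert hx, familyWeight, sum_union,
    sum_image fun a ha b hb hab => by
      rw [← erase_insert (hx' a ha), ← erase_insert (hx' b hb)]
      exact congrArg (·.erase x) hab]
  · simp only [levelWeight, familyWeight, mul_sum]
    congr 1
    · refine sum_congr rfl fun t ht => ?_
      rw [prodWeight_insert hx, if_neg fun hxt => hx ((mem_powersetCard.1 ht).1 hxt)]
    · refine sum_congr rfl fun t ht => ?_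
      rw [prodWeight_insert hx, if_pos (mem_insert_self x t)]
      congr 1
      exact prodWeight_congr fun j hj => by simp [ne_of_mem_of_not_mem hj hx]
  · refine disjoint_left.2 fun t ht ht' => ?_
    obtain ⟨u, -, rfl⟩ := mem_image.1 ht'
    exact hx ((mem_powersetCard.1 ht).1 (mem_insert_self x u))

lemma mix_mul_le_sq {a b c d u v : ℝ} (hu : 0 ≤ u) (hv : 0 ≤ v) (hac : a * c ≤ b ^ 2)
    (hbd : b * d ≤ c ^ 2) (had : a * d ≤ b * c) :
    (u * b + v * a) * (u * d + v * c) ≤ (u * c + v * b) ^ 2 := by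
  nlinarith [mul_nonneg (mul_nonneg hu hu) (sub_nonneg.2 hbd),
    mul_nonneg (mul_nonneg hu hv) (sub_nonneg.2 had),
    mul_nonneg (mul_nonneg hv hv) (sub_nonneg.2 hac)]

lemma mul_le_mul_of_mul_le_sq {a b c d : ℝ} (hd : 0 ≤ d) (hb : 0 < b) (hc : 0 < c)
    (hac : a * c ≤ b ^ 2) (hbd : b * d ≤ c ^ 2) : a * d ≤ b * c := by
  have : (a * d) * (b * c) ≤ (b * c) * (b * c) := by
    nlinarith [mul_le_mul hac hbd (by positivity) (by positivity)]
  exact le_of_mul_le_mul_right this (by positivity)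

theorem levelWeight_mul_le_sq (hp : ∀ j, 0 < p j ∧ p j < 1) (σ : Finset α) (ℓ : ℕ) :
    levelWeight p σ ℓ * levelWeight p σ (ℓ + 2) ≤ levelWeight p σ (ℓ + 1) ^ 2 := by
  induction σ using Finset.induction_on generalizing ℓ with
  | empty =>
    rw [levelWeight_eq_zero (ℓ := ℓ + 2) (by simp), mul_zero]
    positivity
  | insert x σ hx ih =>
    have hu : 0 ≤ 1 - p x := by linarith [hp x]
    have hv : 0 ≤ p x := (hp x).1.le
    cases ℓ with
    | zero =>
      have := mix_mul_le_sq (a := 0) hu hv (by simpa using sq_nonneg _) (ih 0)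
        (by simpa using mul_nonneg (levelWeight_nonneg hp σ 0) (levelWeight_nonneg hp σ 1))
      rw [mul_zero, add_zero] at this
      rwa [levelWeight_insert_zero hx, levelWeight_insert_succ hx, levelWeight_insert_succ hx]
    | succ m =>
      have had : levelWeight p σ m * levelWeight p σ (m + 3) ≤
          levelWeight p σ (m + 1) * levelWeight p σ (m + 2) := by
        by_cases hm : σ.card < m + 3
        · rw [levelWeight_eq_zero hm, mul_zero]
          exact mul_nonneg (levelWeight_nonneg hp σ _) (levelWeight_nonneg hp σ _)
        · exact mul_le_mul_of_mul_le_sq (levelWeight_nonneg hp σ _)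
            (levelWeight_pos hp (by omega)) (levelWeight_pos hp (by omega)) (ih m) (ih (m + 1))
      rw [levelWeight_insert_succ hx, levelWeight_insert_succ hx, levelWeight_insert_succ hx]
      exact mix_mul_le_sq hu hv (ih m) (ih (m + 1)) had

-- In normalized form this is a rearrangement inequality: the larger of `A₀ / w₁` and `A₁ / w₀`
-- is at most `U / w₁`, the smaller at most `S₀ / w₂`, and `w₀ * w₂ ≤ w₁ ^ 2`.
lemma normalizedMatching_crossTerm {A₀ A₁ S₀ S₁ U w₀ w₁ w₂ : ℝ} (hw₀ : 0 < w₀) (hw₁ : 0 < w₁)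
    (hw₂ : 0 ≤ w₂) (h₀ : A₀ * w₂ ≤ S₀ * w₁) (h₁ : A₁ * w₁ ≤ S₁ * w₀) (hA₀ : A₀ ≤ U)
    (hS₁ : S₁ ≤ U) (hw : w₀ * w₂ ≤ w₁ ^ 2) :
    A₀ * w₁ + A₁ * w₂ ≤ S₀ * w₀ + U * w₁ := by
  rcases le_or_gt (A₁ * w₁) (A₀ * w₀) with h | h
  · have : A₁ * w₂ * w₁ ≤ S₀ * w₀ * w₁ := by
      nlinarith [mul_le_mul_of_nonneg_right h hw₂, mul_le_mul_of_nonneg_right h₀ hw₀.le]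
    nlinarith [le_of_mul_le_mul_right this hw₁]
  · have : (A₀ * w₁ + A₁ * w₂) * (w₁ * w₀) ≤ (S₀ * w₀ + U * w₁) * (w₁ * w₀) := by
      nlinarith [mul_le_mul_of_nonneg_right h₀ (mul_nonneg hw₀.le hw₀.le),
        mul_le_mul_of_nonneg_right h₁ (mul_nonneg hw₁.le hw₁.le),
        mul_le_mul_of_nonneg_right hS₁ (mul_nonneg (mul_nonneg hw₀.le hw₁.le) hw₁.le),
        mul_nonneg (sub_pos.2 h).le (sub_nonneg.2 hw)]
    exact le_of_mul_le_mul_right this (mul_pos hw₁ hw₀)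

-- The step `σ ↦ insert x σ` of normalized matching, with `u = 1 - p x` and `v = p x`: `A₀`, `A₁`
-- weigh the parts of `B` without and with `x`, `S₀`, `U` bound the two parts of its shadow, and
-- `w₀, w₁, w₂` are consecutive level weights of the smaller cube.
lemma normalizedMatching_mix {u v A₀ A₁ S₀ S₁ U w₀ w₁ w₂ : ℝ} (hu : 0 ≤ u) (hv : 0 ≤ v)
    (hw₀ : 0 < w₀) (hw₁ : 0 < w₁) (hw₂ : 0 ≤ w₂) (h₀ : A₀ * w₂ ≤ S₀ * w₁)
    (h₁ : A₁ * w₁ ≤ S₁ * w₀) (hA₀ : A₀ ≤ U) (hS₁ : S₁ ≤ U) (hw : w₀ * w₂ ≤ w₁ ^ 2) :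
    (u * A₀ + v * A₁) * (u * w₂ + v * w₁) ≤ (u * S₀ + v * U) * (u * w₁ + v * w₀) := by
  have hv₂ : A₁ * w₁ ≤ U * w₀ := h₁.trans (mul_le_mul_of_nonneg_right hS₁ hw₀.le)
  nlinarith [mul_nonneg (mul_nonneg hu hu) (sub_nonneg.2 h₀),
    mul_nonneg (mul_nonneg hu hv)
      (sub_nonneg.2 (normalizedMatching_crossTerm hw₀ hw₁ hw₂ h₀ h₁ hA₀ hS₁ hw)),
    mul_nonneg (mul_nonneg hv hv) (sub_nonneg.2 hv₂)]

lemma mem_upShadowIn {ℓ : ℕ} {B : Finset (Finset α)} {t : Finset α} :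
    t ∈ upShadowIn σ ℓ B ↔ t ⊆ σ ∧ t.card = ℓ + 1 ∧ ∃ s ∈ B, s ⊂ t := by
  rw [upShadowIn, mem_filter, mem_powersetCard, and_assoc]

lemma filter_notMem_subset_powersetCard {k : ℕ} {B : Finset (Finset α)}
    (hB : B ⊆ (insert x σ).powersetCard k) : B.filter (x ∉ ·) ⊆ σ.powersetCard k := by
  intro t ht
  obtain ⟨htB, hxt⟩ := mem_filter.1 ht
  obtain ⟨htσ, htk⟩ := mem_powersetCard.1 (hB htB)
  exact mem_powersetCard.2 ⟨(subset_insert_iff_of_notMem hxt).1 htσ, htk⟩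

lemma image_erase_filter_mem_subset_powersetCard {k : ℕ} {B : Finset (Finset α)}
    (hB : B ⊆ (insert x σ).powersetCard (k + 1)) :
    (B.filter (x ∈ ·)).image (·.erase x) ⊆ σ.powersetCard k := by
  intro t ht
  obtain ⟨s, hs, rfl⟩ := mem_image.1 ht
  obtain ⟨hsB, hxs⟩ := mem_filter.1 hs
  obtain ⟨hsσ, hsk⟩ := mem_powersetCard.1 (hB hsB)
  exact mem_powersetCard.2
    ⟨subset_insert_iff.1 hsσ, by rw [card_erase_of_mem hxs, hsk, Nat.add_sub_cancel]⟩

lemma upShadowIn_filter_notMem_subset (hx : x ∉ σ) (k : ℕ) (B : Finset (Finset α)) :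
    upShadowIn σ k (B.filter (x ∉ ·)) ⊆ (upShadowIn (insert x σ) k B).filter (x ∉ ·) := by
  intro t ht
  obtain ⟨htσ, htk, s, hs, hst⟩ := mem_upShadowIn.1 ht
  exact mem_filter.2
    ⟨mem_upShadowIn.2 ⟨htσ.trans (subset_insert x σ), htk, s, (mem_filter.1 hs).1, hst⟩,
      fun hxt => hx (htσ hxt)⟩

lemma union_upShadowIn_subset (hx : x ∉ σ) {k : ℕ} {B : Finset (Finset α)}
    (hB : B ⊆ (insert x σ).powersetCard (k + 1)) :
    B.filter (x ∉ ·) ∪ upShadowIn σ k ((B.filter (x ∈ ·)).image (·.erase x)) ⊆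
      ((upShadowIn (insert x σ) (k + 1) B).filter (x ∈ ·)).image (·.erase x) := by
  intro t ht
  suffices h : t ⊆ σ ∧ t.card = k + 1 ∧ ∃ s ∈ B, s ⊂ insert x t by
    obtain ⟨htσ, htk, hst⟩ := h
    have hxt : x ∉ t := fun hxt => hx (htσ hxt)
    refine mem_image.2 ⟨insert x t, mem_filter.2 ⟨mem_upShadowIn.2 ⟨insert_subset_insert x htσ,
      by rw [card_insert_of_notMem hxt, htk], hst⟩, mem_insert_self x t⟩, erase_insert hxt⟩
  rcases mem_union.1 ht with ht | ht
  · obtain ⟨htσ, htk⟩ := mem_powersetCard.1 (filter_notMem_subset_powersetCard hB ht)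
    exact ⟨htσ, htk, t, (mem_filter.1 ht).1, ssubset_insert (mem_filter.1 ht).2⟩
  · obtain ⟨htσ, htk, _, hs', hst⟩ := mem_upShadowIn.1 ht
    obtain ⟨s, hs, rfl⟩ := mem_image.1 hs'
    obtain ⟨hsB, hxs⟩ := mem_filter.1 hs
    have hxt : x ∉ t := fun hxt => hx (htσ hxt)
    refine ⟨htσ, htk, s, hsB, ?_⟩
    rw [← insert_erase hxs]
    exact (insert_subset_insert x hst.subset).ssubset_of_not_subset fun h =>
      hst.2 ((subset_insert_iff_of_notMem hxt).1 ((subset_insert x t).trans h))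

lemma normalizedMatching_zero (hp : ∀ j, 0 < p j ∧ p j < 1) (σ : Finset α)
    {B : Finset (Finset α)} (hB : B ⊆ σ.powersetCard 0) :
    familyWeight p σ B * levelWeight p σ 1 ≤
      familyWeight p σ (upShadowIn σ 0 B) * levelWeight p σ 0 := by
  rw [powersetCard_zero, subset_singleton_iff] at hB
  rcases hB with rfl | rfl
  · simp only [familyWeight, sum_empty, zero_mul]
    exact mul_nonneg (familyWeight_nonneg hp σ _) (levelWeight_nonneg hp σ 0)
  · have : upShadowIn σ 0 {∅} = σ.powersetCard 1 :=
      filter_true_of_mem fun t ht => ⟨∅, mem_singleton_self _,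
        empty_ssubset.2 (card_pos.1 (by rw [(mem_powersetCard.1 ht).2]; norm_num))⟩
    rw [this, ← powersetCard_zero σ]
    exact (mul_comm _ _).le

theorem normalizedMatching (hp : ∀ j, 0 < p j ∧ p j < 1) (σ : Finset α) (ℓ : ℕ)
    {B : Finset (Finset α)} (hB : B ⊆ σ.powersetCard ℓ) :
    familyWeight p σ B * levelWeight p σ (ℓ + 1) ≤
      familyWeight p σ (upShadowIn σ ℓ B) * levelWeight p σ ℓ := by
  induction σ using Finset.induction_on generalizing ℓ B with
  | empty =>
    rw [levelWeight_eq_zero (by simp), mul_zero]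
    exact mul_nonneg (familyWeight_nonneg hp _ _) (levelWeight_nonneg hp _ _)
  | insert x σ hx ih =>
    cases ℓ with
    | zero => exact normalizedMatching_zero hp _ hB
    | succ m =>
      by_cases hm : σ.card < m + 1
      · rw [levelWeight_eq_zero (by rw [card_insert_of_notMem hx]; omega), mul_zero]
        exact mul_nonneg (familyWeight_nonneg hp _ _) (levelWeight_nonneg hp _ _)
      have hu : 0 ≤ 1 - p x := by linarith [hp x]
      have hv : 0 ≤ p x := (hp x).1.le
      set B₀ := B.filter (x ∉ ·)
      set B₁ := (B.filter (x ∈ ·)).image (·.erase x)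
      set S := upShadowIn (insert x σ) (m + 1) B
      have hB₀ := filter_notMem_subset_powersetCard hB
      have hB₁ := image_erase_filter_mem_subset_powersetCard hB
      have hS : (1 - p x) * familyWeight p σ (upShadowIn σ (m + 1) B₀) +
          p x * familyWeight p σ (B₀ ∪ upShadowIn σ m B₁) ≤ familyWeight p (insert x σ) S := by
        rw [familyWeight_insert hx, ← familyWeight_image_erase hx (B := S.filter (x ∈ ·))
          fun t ht => (mem_filter.1 ht).2]
        gcongr
        · exact familyWeight_mono hp σ (upShadowIn_filter_notMem_subset hx _ _)
        · exact familyWeight_mono hp σ (union_upShadowIn_subset hx hB)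
      rw [familyWeight_insert hx, ← familyWeight_image_erase hx (B := B.filter (x ∈ ·))
        fun t ht => (mem_filter.1 ht).2, levelWeight_insert_succ hx, levelWeight_insert_succ hx]
      calc _ ≤ _ := normalizedMatching_mix hu hv (levelWeight_pos hp (by omega))
              (levelWeight_pos hp (by omega)) (levelWeight_nonneg hp σ _) (ih _ hB₀) (ih _ hB₁)
              (familyWeight_mono hp σ subset_union_left) (familyWeight_mono hp σ subset_union_right)
              (levelWeight_mul_le_sq hp σ m)
        _ ≤ _ := mul_le_mul_of_nonneg_right hS (add_nonneg
              (mul_nonneg hu (levelWeight_nonneg hp σ _)) (mul_nonneg hv (levelWeight_nonneg hp σ _)))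

section LYM

variable {A : Finset (Finset α)} {m : ℕ}

lemma lymSum_eq_of_subset_powersetCard {ℓ : ℕ} {B : Finset (Finset α)}
    (h : B ⊆ σ.powersetCard ℓ) : lymSum p σ B = familyWeight p σ B / levelWeight p σ ℓ := by
  rw [lymSum, familyWeight, sum_div]
  exact sum_congr rfl fun s hs => by rw [(mem_powersetCard.1 (h hs)).2]

lemma isAntichain_raiseLevel (hA : IsAntichain (· ⊂ ·) (A : Set (Finset α)))
    (hAm : ∀ s ∈ A, m ≤ s.card) : IsAntichain (· ⊂ ·) (raiseLevel σ m A : Set (Finset α)) := by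
  intro a ha b hb hne hab
  rw [mem_coe, raiseLevel, mem_union] at ha hb
  rcases hb with hb | hb
  · have hbA := (mem_filter.1 hb).1
    rcases ha with ha | ha
    · exact hA (mem_coe.2 (mem_filter.1 ha).1) (mem_coe.2 hbA) hne hab
    · obtain ⟨-, -, s, hs, hsa⟩ := mem_upShadowIn.1 ha
      exact hA (mem_coe.2 (mem_filter.1 hs).1) (mem_coe.2 hbA) (hsa.trans hab).ne (hsa.trans hab)
  · have hb := (mem_upShadowIn.1 hb).2.1
    have ha : m + 1 ≤ a.card := by
      rcases ha with ha | ha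
      · have := hAm a (mem_filter.1 ha).1
        have := (mem_filter.1 ha).2
        omega
      · exact (mem_upShadowIn.1 ha).2.1.ge
    have := card_lt_card hab
    omega

lemma subset_of_mem_raiseLevel (hAσ : ∀ s ∈ A, s ⊆ σ) : ∀ s ∈ raiseLevel σ m A, s ⊆ σ := by
  intro s hs
  rcases mem_union.1 hs with hs | hs
  · exact hAσ s (mem_filter.1 hs).1
  · exact (mem_upShadowIn.1 hs).1

lemma le_card_of_mem_raiseLevel (hAm : ∀ s ∈ A, m ≤ s.card) :
    ∀ s ∈ raiseLevel σ m A, m + 1 ≤ s.card := by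
  intro s hs
  rcases mem_union.1 hs with hs | hs
  · have := hAm s (mem_filter.1 hs).1
    have := (mem_filter.1 hs).2
    omega
  · exact (mem_upShadowIn.1 hs).2.1.ge

lemma lymSum_le_lymSum_raiseLevel (hp : ∀ j, 0 < p j ∧ p j < 1)
    (hA : IsAntichain (· ⊂ ·) (A : Set (Finset α))) (hAσ : ∀ s ∈ A, s ⊆ σ)
    (hm : m < σ.card) : lymSum p σ A ≤ lymSum p σ (raiseLevel σ m A) := by
  set T := A.filter (·.card = m)
  have hT : T ⊆ σ.powersetCard m := fun s hs =>
    mem_powersetCard.2 ⟨hAσ s (mem_filter.1 hs).1, (mem_filter.1 hs).2⟩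
  have hdisj : Disjoint (A.filter (·.card ≠ m)) (upShadowIn σ m T) := by
    refine disjoint_left.2 fun t ht htT => ?_
    obtain ⟨-, -, s, hs, hst⟩ := mem_upShadowIn.1 htT
    exact hA (mem_coe.2 (mem_filter.1 hs).1) (mem_coe.2 (mem_filter.1 ht).1) hst.ne hst
  have hmatch : familyWeight p σ T / levelWeight p σ m ≤
      familyWeight p σ (upShadowIn σ m T) / levelWeight p σ (m + 1) := by
    rw [div_le_div_iff₀ (levelWeight_pos hp hm.le) (levelWeight_pos hp hm)]
    exact normalizedMatching hp σ m hT
  calc lymSum p σ A = lymSum p σ (A.filter (·.card ≠ m)) + lymSum p σ T :=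
        (sum_filter_not_add_sum_filter A _ _).symm
    _ ≤ lymSum p σ (A.filter (·.card ≠ m)) + lymSum p σ (upShadowIn σ m T) := by
        rw [lymSum_eq_of_subset_powersetCard hT,
          lymSum_eq_of_subset_powersetCard (B := upShadowIn σ m T) (filter_subset _ _)]
        gcongr
    _ = lymSum p σ (raiseLevel σ m A) := (sum_union hdisj).symm

theorem lymSum_le_one (hp : ∀ j, 0 < p j ∧ p j < 1)
    (hA : IsAntichain (· ⊂ ·) (A : Set (Finset α))) (hAσ : ∀ s ∈ A, s ⊆ σ) :
    lymSum p σ A ≤ 1 := by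
  suffices h : ∀ m ≤ σ.card, ∀ A : Finset (Finset α), IsAntichain (· ⊂ ·) (A : Set (Finset α)) →
      (∀ s ∈ A, s ⊆ σ) → (∀ s ∈ A, m ≤ s.card) → lymSum p σ A ≤ 1 from
    h 0 (Nat.zero_le _) A hA hAσ fun _ _ => Nat.zero_le _
  intro m hm
  induction hm using Nat.decreasingInduction with
  | self =>
    intro A _ hAσ hAm
    have hAtop : A ⊆ σ.powersetCard σ.card := fun s hs =>
      mem_powersetCard.2 ⟨hAσ s hs, le_antisymm (card_le_card (hAσ s hs)) (hAm s hs)⟩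
    rw [lymSum_eq_of_subset_powersetCard hAtop, div_le_one (levelWeight_pos hp le_rfl)]
    exact familyWeight_mono hp σ hAtop
  | of_succ m hm ih =>
    intro A hA hAσ hAm
    exact (lymSum_le_lymSum_raiseLevel hp hA hAσ hm).trans (ih _ (isAntichain_raiseLevel hA hAm)
      (subset_of_mem_raiseLevel hAσ) (le_card_of_mem_raiseLevel hAm))

theorem familyWeight_le_of_isAntichain (hp : ∀ j, 0 < p j ∧ p j < 1)
    (hA : IsAntichain (· ⊂ ·) (A : Set (Finset α))) (hAσ : ∀ s ∈ A, s ⊆ σ) {M : ℝ}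
    (hM : ∀ ℓ ≤ σ.card, levelWeight p σ ℓ ≤ M) : familyWeight p σ A ≤ M := by
  have hw : ∀ s ∈ A, 0 < levelWeight p σ s.card := fun s hs =>
    levelWeight_pos hp (card_le_card (hAσ s hs))
  calc familyWeight p σ A
      = ∑ s ∈ A, prodWeight p σ s / levelWeight p σ s.card * levelWeight p σ s.card :=
        sum_congr rfl fun s hs => (div_mul_cancel₀ _ (hw s hs).ne').symm
    _ ≤ ∑ s ∈ A, prodWeight p σ s / levelWeight p σ s.card * M :=
        sum_le_sum fun s hs => mul_le_mul_of_nonneg_left (hM _ (card_le_card (hAσ s hs)))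
          (div_nonneg (prodWeight_pos hp σ s).le (hw s hs).le)
    _ = lymSum p σ A * M := (sum_mul _ _ _).symm
    _ ≤ M := mul_le_of_le_one_left
        ((levelWeight_pos hp (Nat.zero_le _)).le.trans (hM 0 (Nat.zero_le _)))
        (lymSum_le_one hp hA hAσ)

end LYM

end ProductWeight

/-- Sperner's lemma for general product measures: for a non-trivial product
distribution `P` on `{0,1}^n` (identified with subsets of `[n]`) and any antichain `A`,
`Pr[z ∈ A] ≤ max_ℓ Pr[|z| = ℓ]`. -/
theorem sperner_product_measure (n : ℕ) (p : Fin n → ℝ)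
    (hp : ∀ j, 0 < p j ∧ p j < 1)
    (A : Finset (Finset (Fin n)))
    (hA : IsAntichain (· ⊂ ·) (A : Set (Finset (Fin n)))) :
    (∑ s ∈ A, ∏ j, if j ∈ s then p j else 1 - p j) ≤
      (Finset.range (n + 1)).sup' Finset.nonempty_range_add_one (fun ℓ =>
        ∑ s ∈ (Finset.univ : Finset (Fin n)).powersetCard ℓ,
          ∏ j, if j ∈ s then p j else 1 - p j) :=
  familyWeight_le_of_isAntichain hp hA (fun s _ => subset_univ s) fun ℓ hℓ =>
    le_sup' (fun ℓ => levelWeight p univ ℓ) (mem_range.2 (by simpa using Nat.lt_succ_of_le hℓ))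
end

section
/- For every non-trivial product distribution P on {0,1}^n and every antichain A ⊆ {0,1}^n, the sum over ℓ ∈ {0,1,...,n} of the conditional probabilities Pr_{z∼P}[z ∈ A | |z| = ℓ] is at most 1. -/
/-!
Put `r j = p j / (1 - p j)`. Conditioned on `|z| = ℓ`, the product distribution gives an `ℓ`-set
`s` probability proportional to `∏ j ∈ s, r j`, so the sum to bound is `∑ ℓ, w(𝒜 # ℓ) / e ℓ`,
where `w` is the `r`-weight of a family and `e ℓ` the `ℓ`-th elementary symmetric polynomial of
the `r j`. As in Lubell's proof through falling families, it suffices to have the weighted local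
LYM inequality `w(𝒜) * e m ≤ w(∂ 𝒜) * e (m + 1)` for `𝒜` inside level `m + 1`. It is proved by
induction on the ground set, splitting `𝒜` according to a new point `a`: the sets avoiding `a` are
handled by the induction hypothesis at level `m + 1`, those containing `a` at level `m`, and the
two bounds are glued using the log-concavity `e (m - 1) * e (m + 1) ≤ e m ^ 2`.
-/

open Finset FinsetFamily

namespace Finset

theorem eq_empty_of_subset_powersetCard {α : Type*} {U : Finset α} {k : ℕ}
    {𝒜 : Finset (Finset α)} (h𝒜 : 𝒜 ⊆ U.powersetCard k) (hk : #U < k) : 𝒜 = ∅ :=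
  subset_empty.1 (powersetCard_eq_empty.2 hk ▸ h𝒜)

section Subfamily

variable {α : Type*} [DecidableEq α] {a : α} {U : Finset α}

theorem nonMemberSubfamily_powersetCard_insert (ha : a ∉ U) (k : ℕ) :
    (powersetCard k (insert a U)).nonMemberSubfamily a = powersetCard k U := by
  ext s
  simp only [mem_nonMemberSubfamily, mem_powersetCard]
  constructor
  · rintro ⟨⟨hsU, hk⟩, has⟩
    exact ⟨(subset_insert_iff_of_notMem has).1 hsU, hk⟩
  · rintro ⟨hsU, hk⟩
    exact ⟨⟨hsU.trans (subset_insert a U), hk⟩, fun h => ha (hsU h)⟩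

theorem memberSubfamily_powersetCard_succ_insert (ha : a ∉ U) (k : ℕ) :
    (powersetCard (k + 1) (insert a U)).memberSubfamily a = powersetCard k U := by
  ext s
  simp only [mem_memberSubfamily, mem_powersetCard]
  constructor
  · rintro ⟨⟨hsU, hk⟩, has⟩
    rw [card_insert_of_notMem has] at hk
    exact ⟨(subset_insert_iff_of_notMem has).1 ((subset_insert a s).trans hsU), by omega⟩
  · rintro ⟨hsU, hk⟩
    have has : a ∉ s := fun h => ha (hsU h)
    exact ⟨⟨insert_subset_insert a hsU, by rw [card_insert_of_notMem has, hk]⟩, has⟩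

theorem shadow_nonMemberSubfamily_union_memberSubfamily_subset (𝒜 : Finset (Finset α)) :
    ∂ (𝒜.nonMemberSubfamily a) ∪ 𝒜.memberSubfamily a ⊆ (∂ 𝒜).nonMemberSubfamily a := by
  intro s hs
  rw [mem_nonMemberSubfamily]
  rcases mem_union.1 hs with hs | hs
  · obtain ⟨t, ht, b, hbt, rfl⟩ := mem_shadow_iff.1 hs
    rw [mem_nonMemberSubfamily] at ht
    exact ⟨mem_shadow_iff.2 ⟨t, ht.1, b, hbt, rfl⟩, fun h => ht.2 (mem_of_mem_erase h)⟩
  · obtain ⟨hs, has⟩ := mem_memberSubfamily.1 hs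
    exact ⟨mem_shadow_iff.2 ⟨insert a s, hs, a, mem_insert_self a s, erase_insert has⟩, has⟩

theorem shadow_memberSubfamily_subset (𝒜 : Finset (Finset α)) :
    ∂ (𝒜.memberSubfamily a) ⊆ (∂ 𝒜).memberSubfamily a := by
  intro s hs
  obtain ⟨t, ht, b, hbt, rfl⟩ := mem_shadow_iff.1 hs
  obtain ⟨ht, hat⟩ := mem_memberSubfamily.1 ht
  have hba : b ≠ a := fun h => hat (h ▸ hbt)
  refine mem_memberSubfamily.2 ⟨mem_shadow_iff.2 ⟨insert a t, ht, b, mem_insert_of_mem hbt, ?_⟩,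
    fun h => hat (mem_of_mem_erase h)⟩
  rw [erase_insert_of_ne hba.symm]

end Subfamily

section Algebra

variable {α R : Type*} [CommSemiring R] {r : α → R}

def familyWeight (r : α → R) (𝒜 : Finset (Finset α)) : R := ∑ s ∈ 𝒜, ∏ i ∈ s, r i

def levelWeight (r : α → R) (U : Finset α) (k : ℕ) : R := familyWeight r (U.powersetCard k)

theorem familyWeight_union [DecidableEq α] {𝒜 ℬ : Finset (Finset α)} (h : Disjoint 𝒜 ℬ) :
    familyWeight r (𝒜 ∪ ℬ) = familyWeight r 𝒜 + familyWeight r ℬ :=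
  sum_union h

theorem familyWeight_eq_nonMemberSubfamily_add_memberSubfamily [DecidableEq α] (a : α)
    (𝒜 : Finset (Finset α)) :
    familyWeight r 𝒜 =
      familyWeight r (𝒜.nonMemberSubfamily a) + r a * familyWeight r (𝒜.memberSubfamily a) := by
  have hinj : Set.InjOn (insert a) (𝒜.memberSubfamily a : Set (Finset α)) := fun s hs t ht hst => by
    rw [← erase_insert (mem_memberSubfamily.1 hs).2, hst, erase_insert (mem_memberSubfamily.1 ht).2]
  rw [familyWeight, familyWeight, familyWeight, ← sum_filter_not_add_sum_filter _ (a ∈ ·),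
    ← image_insert_memberSubfamily, sum_image hinj, mul_sum]
  congr 1
  exact sum_congr rfl fun s hs => prod_insert (mem_memberSubfamily.1 hs).2

theorem levelWeight_zero (r : α → R) (U : Finset α) : levelWeight r U 0 = 1 := by
  simp [levelWeight, familyWeight]

theorem levelWeight_eq_zero {U : Finset α} {k : ℕ} (h : #U < k) : levelWeight r U k = 0 := by
  rw [levelWeight, powersetCard_eq_empty.2 h, familyWeight, sum_empty]

theorem levelWeight_insert_succ [DecidableEq α] {a : α} {U : Finset α} (ha : a ∉ U) (k : ℕ) :
    levelWeight r (insert a U) (k + 1) = levelWeight r U (k + 1) + r a * levelWeight r U k := by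
  rw [levelWeight, familyWeight_eq_nonMemberSubfamily_add_memberSubfamily a,
    nonMemberSubfamily_powersetCard_insert ha, memberSubfamily_powersetCard_succ_insert ha]
  rfl

end Algebra

section Order

variable {α 𝕜 : Type*} [Field 𝕜] [LinearOrder 𝕜] [IsStrictOrderedRing 𝕜] {r : α → 𝕜}

theorem familyWeight_nonneg (hr : ∀ i, 0 ≤ r i) (𝒜 : Finset (Finset α)) :
    0 ≤ familyWeight r 𝒜 :=
  sum_nonneg fun _ _ => prod_nonneg fun i _ => hr i

theorem familyWeight_mono (hr : ∀ i, 0 ≤ r i) {𝒜 ℬ : Finset (Finset α)} (h : 𝒜 ⊆ ℬ) :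
    familyWeight r 𝒜 ≤ familyWeight r ℬ :=
  sum_le_sum_of_subset_of_nonneg h fun _ _ _ => prod_nonneg fun i _ => hr i

theorem levelWeight_pos (hr : ∀ i, 0 < r i) {U : Finset α} {k : ℕ} (h : k ≤ #U) :
    0 < levelWeight r U k := by
  obtain ⟨s, hs⟩ := powersetCard_nonempty.2 h
  exact sum_pos' (fun t _ => prod_nonneg fun i _ => (hr i).le) ⟨s, hs, prod_pos fun i _ => hr i⟩

/- Log-concavity of elementary symmetric polynomials, in the chained form that the induction on
`U` requires. -/
theorem levelWeight_succ_mul_le_mul_succ (hr : ∀ i, 0 ≤ r i) (U : Finset α) {k l : ℕ}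
    (hkl : k ≤ l) :
    levelWeight r U (l + 1) * levelWeight r U k ≤ levelWeight r U l * levelWeight r U (k + 1) := by
  classical
  induction U using Finset.induction_on generalizing k l with
  | empty =>
    rw [levelWeight_eq_zero (by simp), zero_mul]
    exact mul_nonneg (familyWeight_nonneg hr _) (familyWeight_nonneg hr _)
  | @insert a U ha ih =>
    obtain rfl | hlt := hkl.eq_or_lt
    · exact (mul_comm _ _).le
    obtain ⟨l, rfl⟩ : ∃ l', l = l' + 1 := ⟨l - 1, by omega⟩
    have he : ∀ j, 0 ≤ levelWeight r U j := fun j => familyWeight_nonneg hr _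
    have hra := hr a
    cases k with
    | zero =>
      have h₁ := ih (k := 0) (l := l + 1) (Nat.zero_le _)
      simp only [levelWeight_insert_succ ha, levelWeight_zero, zero_add, mul_one] at h₁ ⊢
      nlinarith [mul_nonneg (mul_nonneg hra (he l)) (he 1), mul_nonneg (mul_nonneg hra hra) (he l)]
    | succ k =>
      have h₁ := ih (k := k + 1) (l := l + 1) (by omega)
      have h₂ := mul_le_mul_of_nonneg_left (ih (k := k) (l := l) (by omega)) (mul_nonneg hra hra)
      have h₃ := mul_le_mul_of_nonneg_left
        ((ih (k := k) (l := l + 1) (by omega)).trans (ih (k := k + 1) (l := l) (by omega))) hra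
      simp only [levelWeight_insert_succ ha]
      nlinarith

/- `Y` dominates both `X` and `b`; weighting these two bounds by `Q * R + c * P * R` and by
`c * (Q ^ 2 - P * R) ≥ 0` (log-concavity) makes the induction close. -/
theorem local_lym_induction_step {a b c X Y Z P Q R : 𝕜} (hc : 0 ≤ c) (hP : 0 ≤ P) (hQ : 0 < Q)
    (hR : 0 ≤ R) (ha : a * Q ≤ X * R) (hb : b * P ≤ Z * Q) (hPR : P * R ≤ Q ^ 2) (hXY : X ≤ Y)
    (hbY : b ≤ Y) :
    (a + c * b) * (Q + c * P) ≤ (Y + c * Z) * (R + c * Q) := by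
  have h₁ := mul_le_mul_of_nonneg_right hb (mul_nonneg hc (add_nonneg hR (mul_nonneg hc hQ.le)))
  have h₂ := mul_le_mul_of_nonneg_right hXY
    (add_nonneg (mul_nonneg hQ.le hR) (mul_nonneg (mul_nonneg hc hP) hR))
  have h₃ := mul_le_mul_of_nonneg_right hbY (mul_nonneg hc (sub_nonneg.2 hPR))
  have h₄ := mul_le_mul_of_nonneg_right ha (add_nonneg hQ.le (mul_nonneg hc hP))
  refine le_of_mul_le_mul_left ?_ hQ
  nlinarith

theorem local_lubell_yamamoto_meshalkin_inequality_familyWeight_mul [DecidableEq α]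
    (hr : ∀ i, 0 < r i) (U : Finset α) {m : ℕ} {𝒜 : Finset (Finset α)}
    (h𝒜 : 𝒜 ⊆ U.powersetCard (m + 1)) :
    familyWeight r 𝒜 * levelWeight r U m ≤ familyWeight r (∂ 𝒜) * levelWeight r U (m + 1) := by
  have hr₀ : ∀ i, 0 ≤ r i := fun i => (hr i).le
  have hsmall : ∀ {V : Finset α} {m : ℕ} {ℬ : Finset (Finset α)},
      ℬ ⊆ V.powersetCard (m + 1) → #V < m + 1 →
        familyWeight r ℬ * levelWeight r V m ≤ familyWeight r (∂ ℬ) * levelWeight r V (m + 1) :=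
    fun hℬ hV => by
      rw [eq_empty_of_subset_powersetCard hℬ hV, familyWeight, sum_empty, zero_mul]
      exact mul_nonneg (familyWeight_nonneg hr₀ _) (familyWeight_nonneg hr₀ _)
  induction U using Finset.induction_on generalizing m 𝒜 with
  | empty => exact hsmall h𝒜 (by simp)
  | @insert a U ha ih =>
    by_cases hm : #U < m
    · exact hsmall h𝒜 (by rw [card_insert_of_notMem ha]; omega)
    have h₀ : 𝒜.nonMemberSubfamily a ⊆ U.powersetCard (m + 1) :=
      nonMemberSubfamily_powersetCard_insert ha (m + 1) ▸ filter_subset_filter _ h𝒜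
    have h₁ : 𝒜.memberSubfamily a ⊆ U.powersetCard m :=
      memberSubfamily_powersetCard_succ_insert ha m ▸
        image_subset_image (filter_subset_filter _ h𝒜)
    -- `P` plays the role of `e (m - 1)`, which has to be read as `0` when `m = 0`.
    obtain ⟨P, hP, hlevel, hb, hPR⟩ : ∃ P, 0 ≤ P ∧
        levelWeight r (insert a U) m = levelWeight r U m + r a * P ∧
        familyWeight r (𝒜.memberSubfamily a) * P ≤
          familyWeight r (∂ (𝒜.memberSubfamily a)) * levelWeight r U m ∧
        P * levelWeight r U (m + 1) ≤ levelWeight r U m ^ 2 := by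
      cases m with
      | zero =>
        refine ⟨0, le_rfl, by simp [levelWeight_zero], ?_, by simp [levelWeight_zero]⟩
        rw [mul_zero]
        exact mul_nonneg (familyWeight_nonneg hr₀ _) (familyWeight_nonneg hr₀ _)
      | succ k =>
        exact ⟨levelWeight r U k, familyWeight_nonneg hr₀ _, levelWeight_insert_succ ha k, ih h₁,
          by rw [sq, mul_comm]; exact levelWeight_succ_mul_le_mul_succ hr₀ U k.le_succ⟩
    rw [familyWeight_eq_nonMemberSubfamily_add_memberSubfamily a 𝒜,
      familyWeight_eq_nonMemberSubfamily_add_memberSubfamily a (∂ 𝒜), hlevel,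
      levelWeight_insert_succ ha]
    refine (local_lym_induction_step (hr a).le hP (levelWeight_pos hr (not_lt.1 hm))
      (familyWeight_nonneg hr₀ _) (ih h₀) hb hPR
      (familyWeight_mono hr₀ subset_union_left) (familyWeight_mono hr₀ subset_union_right)).trans
      (mul_le_mul_of_nonneg_right (add_le_add ?_ (mul_le_mul_of_nonneg_left ?_ (hr a).le)) ?_)
    · exact familyWeight_mono hr₀ (shadow_nonMemberSubfamily_union_memberSubfamily_subset 𝒜)
    · exact familyWeight_mono hr₀ (shadow_memberSubfamily_subset 𝒜)
    · exact add_nonneg (familyWeight_nonneg hr₀ _) (mul_nonneg (hr a).le (familyWeight_nonneg hr₀ _))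

theorem local_lubell_yamamoto_meshalkin_inequality_familyWeight_div [DecidableEq α]
    (hr : ∀ i, 0 < r i) {U : Finset α} {m : ℕ} (hm : m + 1 ≤ #U) {𝒜 : Finset (Finset α)}
    (h𝒜 : 𝒜 ⊆ U.powersetCard (m + 1)) :
    familyWeight r 𝒜 / levelWeight r U (m + 1) ≤ familyWeight r (∂ 𝒜) / levelWeight r U m := by
  rw [div_le_div_iff₀ (levelWeight_pos hr hm) (levelWeight_pos hr (by omega))]
  exact local_lubell_yamamoto_meshalkin_inequality_familyWeight_mul hr U h𝒜

variable [Fintype α] [DecidableEq α] {𝒜 : Finset (Finset α)}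

theorem le_familyWeight_falling_div_levelWeight (hr : ∀ i, 0 < r i) {k : ℕ}
    (hk : k ≤ Fintype.card α) (h𝒜 : IsAntichain (· ⊆ ·) (𝒜 : Set (Finset α))) :
    ∑ i ∈ range (k + 1), familyWeight r (𝒜 # (Fintype.card α - i)) /
        levelWeight r univ (Fintype.card α - i) ≤
      familyWeight r (falling (Fintype.card α - k) 𝒜) /
        levelWeight r univ (Fintype.card α - k) := by
  induction k with
  | zero =>
    rw [sum_range_one]
    exact div_le_div_of_nonneg_right (familyWeight_mono (fun i => (hr i).le)
      (slice_subset_falling _ _)) (familyWeight_nonneg (fun i => (hr i).le) _)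
  | succ k ih =>
    rw [sum_range_succ, ← slice_union_shadow_falling_succ,
      familyWeight_union (h𝒜.disjoint_slice_shadow_falling), add_div, add_comm]
    have hk' : Fintype.card α - (k + 1) + 1 = Fintype.card α - k := by omega
    grw [ih (k.le_succ.trans hk)]
    rw [← hk']
    grw [local_lubell_yamamoto_meshalkin_inequality_familyWeight_div hr (by rw [card_univ]; omega)
      (subset_powersetCard_univ_iff.2 (sized_falling _ _))]

theorem lubell_yamamoto_meshalkin_inequality_sum_familyWeight_div_levelWeight
    (hr : ∀ i, 0 < r i) (h𝒜 : IsAntichain (· ⊆ ·) (𝒜 : Set (Finset α))) :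
    ∑ k ∈ range (Fintype.card α + 1), familyWeight r (𝒜 # k) / levelWeight r univ k ≤ 1 := by
  rw [← sum_flip]
  refine (le_familyWeight_falling_div_levelWeight hr le_rfl h𝒜).trans ?_
  rw [Nat.sub_self, levelWeight_zero, div_one]
  refine (familyWeight_mono (fun i => (hr i).le) (falling_zero_subset 𝒜)).trans ?_
  simp [familyWeight]

end Order

theorem prod_ite_mem_eq_prod_one_sub_mul_prod_div {ι K : Type*} [Fintype ι] [DecidableEq ι]
    [Field K] {p : ι → K} (hp : ∀ j, p j ≠ 1) (s : Finset ι) :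
    ∏ j, (if j ∈ s then p j else 1 - p j) = (∏ j, (1 - p j)) * ∏ j ∈ s, p j / (1 - p j) := by
  rw [← Fintype.prod_ite_mem s, ← prod_mul_distrib]
  refine prod_congr rfl fun j _ => ?_
  split_ifs
  · rw [mul_div_cancel₀ _ (sub_ne_zero.2 (hp j).symm)]
  · rw [mul_one]

end Finset

/-- LYM inequality for general product measures: for a non-trivial product
distribution `P` on `{0,1}^n` and any antichain `A`,
`∑_ℓ Pr[z ∈ A | |z| = ℓ] ≤ 1`. -/
theorem lym_product_measure (n : ℕ) (p : Fin n → ℝ)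
    (hp : ∀ j, 0 < p j ∧ p j < 1)
    (A : Finset (Finset (Fin n)))
    (hA : IsAntichain (· ⊂ ·) (A : Set (Finset (Fin n)))) :
    ∑ ℓ ∈ Finset.range (n + 1),
      (∑ s ∈ A.filter (fun s => s.card = ℓ), ∏ j, if j ∈ s then p j else 1 - p j) /
        (∑ s ∈ (Finset.univ : Finset (Fin n)).powersetCard ℓ,
          ∏ j, if j ∈ s then p j else 1 - p j) ≤ 1 := by
  have hq : ∀ j, 0 < 1 - p j := fun j => sub_pos.2 (hp j).2
  have hA' : IsAntichain (· ⊆ ·) (A : Set (Finset (Fin n))) :=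
    isAntichain_iff_forall_not_lt.2 fun _ hs _ ht hst => hA hs ht hst.ne hst
  have hlym := lubell_yamamoto_meshalkin_inequality_sum_familyWeight_div_levelWeight
    (r := fun j => p j / (1 - p j)) (fun j => div_pos (hp j).1 (hq j)) hA'
  rw [Fintype.card_fin] at hlym
  refine le_of_eq_of_le (sum_congr rfl fun ℓ _ => ?_) hlym
  simp only [prod_ite_mem_eq_prod_one_sub_mul_prod_div fun j => (hp j).2.ne, ← mul_sum]
  exact mul_div_mul_left _ _ (prod_ne_zero_iff.2 fun j _ => (hq j).ne')
end

section
/- Let P be a non-trivial product distribution on {0,1}^n, and for each ℓ let P_ℓ denote the distribution of z ∼ P conditioned on |z| = ℓ. Then there exists a probability distribution on maximal chains ∅ = c_0 ⊂ c_1 ⊂ ... ⊂ c_n = [n] of subsets of [n] such that for every ℓ ∈ {0,1,...,n}, the random set c_ℓ is distributed according to P_ℓ. -/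
/-!
With odds `r j = p j / (1 - p j)`, the law `P_ℓ` gives `s` the weight `∏ j ∈ s, r j / e_ℓ(r)`,
where `e_ℓ` is the elementary symmetric polynomial. Build the chain by inserting the coordinates
`0, 1, …, n - 1` one at a time: if the chain on the first `k` coordinates has the right level laws,
put `k` into its sets from level `m + 1` on, where `m` is chosen with probability
`G(m) - G(m + 1)` and `G(ℓ) = e_ℓ(r_{<k}) / e_ℓ(r_{≤k})` is the `P_ℓ`-probability that `k` is
absent. These are probabilities because `G` is nonincreasing, which is the log-concavity of
`ℓ ↦ e_ℓ` for nonnegative weights; a direct computation then gives the level laws of the new chain.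
-/

open Finset

noncomputable section

namespace ChainCoupling

lemma prod_ite_mem_eq_prod_odds_mul {ι : Type*} [Fintype ι] [DecidableEq ι] {q : ι → ℝ}
    (hq : ∀ j, q j ≠ 1) (t : Finset ι) :
    ∏ j, (if j ∈ t then q j else 1 - q j) = (∏ j ∈ t, q j / (1 - q j)) * ∏ j, (1 - q j) := by
  have hq' : ∀ j ∈ t, 1 - q j ≠ 0 := fun j _ => sub_ne_zero.2 (hq j).symm
  rw [prod_ite, ← prod_mul_prod_compl t, prod_div_distrib, filter_mem_eq_inter, univ_inter,
    filter_not, filter_mem_eq_inter, univ_inter, ← compl_eq_univ_sdiff,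
    ← mul_assoc, div_mul_cancel₀ _ (prod_ne_zero_iff.2 hq')]

section Esymm

variable {ι : Type*} (r : ι → ℝ)

def esymm (s : Finset ι) (ℓ : ℕ) : ℝ := ∑ t ∈ s.powersetCard ℓ, ∏ j ∈ t, r j

variable {r}

@[simp] lemma esymm_zero (s : Finset ι) : esymm r s 0 = 1 := by simp [esymm]

lemma esymm_of_card_lt {s : Finset ι} {ℓ : ℕ} (h : s.card < ℓ) : esymm r s ℓ = 0 := by
  rw [esymm, powersetCard_eq_empty.2 h, sum_empty]

lemma esymm_nonneg (hr : ∀ j, 0 ≤ r j) (s : Finset ι) (ℓ : ℕ) : 0 ≤ esymm r s ℓ :=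
  sum_nonneg fun _ _ => prod_nonneg fun j _ => hr j

lemma esymm_pos (hr : ∀ j, 0 < r j) {s : Finset ι} {ℓ : ℕ} (h : ℓ ≤ s.card) :
    0 < esymm r s ℓ :=
  sum_pos (fun _ _ => prod_pos fun j _ => hr j) (powersetCard_nonempty.2 h)

lemma esymm_insert [DecidableEq ι] {x : ι} {s : Finset ι} (hx : x ∉ s) (ℓ : ℕ) :
    esymm r (insert x s) (ℓ + 1) = esymm r s (ℓ + 1) + r x * esymm r s ℓ := by
  have hxt : ∀ t ∈ s.powersetCard ℓ, x ∉ t := fun t ht => notMem_mono (mem_powersetCard.1 ht).1 hx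
  rw [esymm, powersetCard_succ_insert hx, sum_union, sum_image, esymm, esymm, mul_sum]
  · exact congrArg _ (sum_congr rfl fun t ht => prod_insert (hxt t ht))
  · exact insert_erase_invOn.2.injOn.mono fun t ht => hxt t ht
  · exact disjoint_left.2 fun t ht ht' => by
      obtain ⟨u, -, rfl⟩ := mem_image.1 ht'
      exact hx ((mem_powersetCard.1 ht).1 (mem_insert_self x u))

lemma esymm_mul_esymm_le [DecidableEq ι] (hr : ∀ j, 0 ≤ r j) (s : Finset ι) {a b : ℕ}
    (hab : a ≤ b) :
    esymm r s a * esymm r s (b + 2) ≤ esymm r s (a + 1) * esymm r s (b + 1) := by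
  induction s using Finset.induction_on generalizing a b with
  | empty =>
    rw [esymm_of_card_lt (s := ∅) (ℓ := b + 2) (by simp), mul_zero]
    exact mul_nonneg (esymm_nonneg hr _ _) (esymm_nonneg hr _ _)
  | insert x s hx ih =>
    have he := esymm_nonneg hr s
    have hw := hr x
    rcases a with _ | a
    · have h0 := ih (Nat.zero_le b)
      simp only [esymm_insert hx, esymm_zero, zero_add] at h0 ⊢
      nlinarith [mul_nonneg hw (he b), mul_nonneg hw (he (b + 1)), he 1,
        mul_nonneg (mul_nonneg hw hw) (he b)]
    · obtain ⟨b, rfl⟩ : ∃ b', b = b' + 1 := ⟨b - 1, by omega⟩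
      have outer := ih (Nat.le_of_succ_le_succ hab)
      have inner := ih hab
      have gap : esymm r s a * esymm r s (b + 3) ≤ esymm r s (a + 2) * esymm r s (b + 1) := by
        rcases (Nat.le_of_succ_le_succ hab).eq_or_lt with rfl | hlt
        · linarith [ih (Nat.le_succ a)]
        · exact (ih (Nat.le_succ_of_le (Nat.le_of_succ_le_succ hab))).trans (ih hlt)
      simp only [esymm_insert hx, add_assoc, Nat.reduceAdd] at inner ⊢
      nlinarith [mul_le_mul_of_nonneg_left gap hw,
        mul_le_mul_of_nonneg_left outer (mul_nonneg hw hw)]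

lemma esymm_div_esymm_insert_succ_le [DecidableEq ι] (hr : ∀ j, 0 < r j) {x : ι}
    {s : Finset ι} (hx : x ∉ s) {m : ℕ} (hm : m ≤ s.card) :
    esymm r s (m + 1) / esymm r (insert x s) (m + 1) ≤ esymm r s m / esymm r (insert x s) m := by
  have hcard : (insert x s).card = s.card + 1 := card_insert_of_notMem hx
  rw [div_le_div_iff₀ (esymm_pos hr (by omega)) (esymm_pos hr (by omega))]
  rcases m with _ | m
  · simp only [esymm_zero, esymm_insert hx, zero_add]
    nlinarith [hr x]
  · simp only [esymm_insert hx]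
    nlinarith [mul_le_mul_of_nonneg_left
      (esymm_mul_esymm_le (fun j => (hr j).le) s (le_refl m)) (hr x).le]

end Esymm

variable {n : ℕ}

def initSeg (n k : ℕ) : Finset (Fin n) := univ.filter fun j => (j : ℕ) < k

lemma mem_initSeg {k : ℕ} {j : Fin n} : j ∈ initSeg n k ↔ (j : ℕ) < k := by simp [initSeg]

lemma initSeg_zero : initSeg n 0 = ∅ := by ext; simp [mem_initSeg]

lemma initSeg_self : initSeg n n = univ := by ext j; simp [mem_initSeg, j.isLt]

lemma initSeg_succ {k : ℕ} (hk : k < n) : initSeg n (k + 1) = insert ⟨k, hk⟩ (initSeg n k) := by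
  ext j
  simp only [mem_initSeg, mem_insert, Fin.ext_iff]
  omega

lemma notMem_initSeg {k : ℕ} (hk : k < n) : (⟨k, hk⟩ : Fin n) ∉ initSeg n k := by
  simp [mem_initSeg]

lemma card_initSeg {k : ℕ} (hk : k ≤ n) : (initSeg n k).card = k := by
  rw [initSeg, Fin.card_filter_val_lt, min_eq_right hk]

section Ratios

variable (r : Fin n → ℝ)

def segRatio (k ℓ : ℕ) : ℝ := esymm r (initSeg n k) ℓ / esymm r (initSeg n (k + 1)) ℓ

def insertProb (k m : ℕ) : ℝ := segRatio r k m - segRatio r k (m + 1)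

variable {r}

lemma segRatio_zero (k : ℕ) : segRatio r k 0 = 1 := by simp [segRatio]

lemma segRatio_succ_self {k : ℕ} (hk : k < n) : segRatio r k (k + 1) = 0 := by
  rw [segRatio, esymm_of_card_lt (by rw [card_initSeg hk.le]; omega), zero_div]

lemma one_sub_segRatio_succ (hr : ∀ j, 0 < r j) {k ℓ : ℕ} (hk : k < n) (hℓ : ℓ ≤ k) :
    1 - segRatio r k (ℓ + 1) =
      r ⟨k, hk⟩ * esymm r (initSeg n k) ℓ / esymm r (initSeg n (k + 1)) (ℓ + 1) := by
  have hpos := esymm_pos hr (s := initSeg n (k + 1)) (ℓ := ℓ + 1) (by rw [card_initSeg hk]; omega)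
  rw [segRatio, one_sub_div hpos.ne', initSeg_succ hk, esymm_insert (notMem_initSeg hk)]
  ring

lemma insertProb_nonneg (hr : ∀ j, 0 < r j) {k m : ℕ} (hk : k < n) (hm : m ≤ k) :
    0 ≤ insertProb r k m := by
  rw [insertProb, sub_nonneg, segRatio, segRatio, initSeg_succ hk]
  exact esymm_div_esymm_insert_succ_le hr (notMem_initSeg hk) (by rwa [card_initSeg hk.le])

lemma sum_range_insertProb (k ℓ : ℕ) :
    ∑ m ∈ range ℓ, insertProb r k m = 1 - segRatio r k ℓ := by
  simp only [insertProb]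
  rw [sum_range_sub', segRatio_zero]

lemma sum_insertProb {k : ℕ} (hk : k < n) : ∑ m ∈ range (k + 1), insertProb r k m = 1 := by
  rw [sum_range_insertProb, segRatio_succ_self hk, sub_zero]

lemma sum_insertProb_lt {k ℓ : ℕ} (hℓ : ℓ ≤ k + 1) :
    ∑ m ∈ range (k + 1), (if m < ℓ then insertProb r k m else 0) = 1 - segRatio r k ℓ := by
  rw [← sum_filter, (by ext; simp; omega : (range (k + 1)).filter (· < ℓ) = range ℓ),
    sum_range_insertProb]

lemma sum_insertProb_ge {k ℓ : ℕ} (hk : k < n) (hℓ : ℓ ≤ k + 1) :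
    ∑ m ∈ range (k + 1), (if ℓ ≤ m then insertProb r k m else 0) = segRatio r k ℓ := by
  rw [← sum_filter, (by ext; simp; omega : (range (k + 1)).filter (ℓ ≤ ·) = Ico ℓ (k + 1)),
    sum_Ico_eq_sub _ hℓ, sum_insertProb hk, sum_range_insertProb]
  ring

end Ratios

/-- Element `k` enters the chain at level `m + 1`. The `min` only makes the index typecheck: it is
`ℓ` whenever `m ≤ k`. -/
def insertAt {k : ℕ} (hk : k < n) (c : Fin (k + 1) → Finset (Fin n)) (m : ℕ) :
    Fin (k + 2) → Finset (Fin n) :=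
  fun ℓ => if (ℓ : ℕ) ≤ m then c ⟨min ℓ k, by omega⟩ else insert ⟨k, hk⟩ (c ⟨ℓ - 1, by omega⟩)

lemma insertAt_eq_of_le {k m : ℕ} (hk : k < n) (c : Fin (k + 1) → Finset (Fin n))
    {ℓ : Fin (k + 2)} {i : Fin (k + 1)} (hi : (ℓ : ℕ) = i) (hm : (i : ℕ) ≤ m) :
    insertAt hk c m ℓ = c i := by
  rw [insertAt, if_pos (hi ▸ hm)]
  exact congrArg c (Fin.ext (by simp only; omega))

lemma insertAt_eq_insert {k m : ℕ} (hk : k < n) (c : Fin (k + 1) → Finset (Fin n))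
    {ℓ : Fin (k + 2)} {i : Fin (k + 1)} (hi : (ℓ : ℕ) = i + 1) (hm : m < ℓ) :
    insertAt hk c m ℓ = insert ⟨k, hk⟩ (c i) := by
  rw [insertAt, if_neg (by omega)]
  exact congrArg _ (congrArg c (Fin.ext (by simp only; omega)))

/-- `c` is a maximal chain `c 0 ⊂ c 1 ⊂ ⋯ ⊂ c k = initSeg n k`. -/
def IsSegChain (k : ℕ) (c : Fin (k + 1) → Finset (Fin n)) : Prop :=
  Monotone c ∧ ∀ ℓ, (c ℓ).card = ℓ ∧ c ℓ ⊆ initSeg n k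

lemma IsSegChain.ssubset {k : ℕ} {c : Fin (k + 1) → Finset (Fin n)} (hc : IsSegChain k c)
    (ℓ : Fin k) : c ℓ.castSucc ⊂ c ℓ.succ := by
  refine (hc.1 (Fin.castSucc_le_succ ℓ)).ssubset_of_ne fun h => ?_
  have := congrArg card h
  simp [(hc.2 _).1] at this

lemma IsSegChain.notMem {k : ℕ} (hk : k < n) {c : Fin (k + 1) → Finset (Fin n)}
    (hc : IsSegChain k c) (ℓ : Fin (k + 1)) : (⟨k, hk⟩ : Fin n) ∉ c ℓ :=
  fun h => notMem_initSeg hk ((hc.2 ℓ).2 h)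

lemma IsSegChain.insertAt {k m : ℕ} (hk : k < n) {c : Fin (k + 1) → Finset (Fin n)}
    (hc : IsSegChain k c) (hm : m ≤ k) : IsSegChain (k + 1) (insertAt hk c m) := by
  refine ⟨Fin.monotone_iff_le_succ.2 fun i => ?_, fun ℓ => ?_⟩
  · rcases lt_trichotomy (i : ℕ) m with hlt | rfl | hgt
    · rw [insertAt_eq_of_le hk c (i := i) rfl hlt.le,
        insertAt_eq_of_le hk c (i := ⟨i + 1, by omega⟩) (by simp) hlt]
      exact hc.1 (Fin.mk_le_mk.2 (Nat.le_succ _))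
    · rw [insertAt_eq_of_le hk c (i := i) rfl le_rfl,
        insertAt_eq_insert hk c (i := i) (by simp) (by simp)]
      exact subset_insert _ _
    · rw [insertAt_eq_insert hk c (i := ⟨i - 1, by omega⟩) (by simp; omega) (by simpa),
        insertAt_eq_insert hk c (i := i) (by simp) (by simp; omega)]
      exact insert_subset_insert _ (hc.1 (Fin.mk_le_mk.2 (Nat.sub_le _ _)))
  · rw [initSeg_succ hk]
    by_cases hℓ : (ℓ : ℕ) ≤ m
    · rw [insertAt_eq_of_le hk c (i := ⟨ℓ, by omega⟩) rfl hℓ]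
      exact ⟨(hc.2 _).1, (hc.2 _).2.trans (subset_insert _ _)⟩
    · have hi : (ℓ : ℕ) = (⟨ℓ - 1, by omega⟩ : Fin (k + 1)) + 1 := by simp only; omega
      rw [insertAt_eq_insert hk c hi (by omega), card_insert_of_notMem (hc.notMem hk _),
        (hc.2 _).1, ← hi]
      exact ⟨rfl, insert_subset_insert _ (hc.2 _).2⟩

section Weights

variable (r : Fin n → ℝ)

def chainWeight : (k : ℕ) → (Fin (k + 1) → Finset (Fin n)) → ℝ
  | 0, c => if c = fun _ => ∅ then 1 else 0
  | k + 1, c =>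
    if hk : k < n then
      ∑ m ∈ range (k + 1), ∑ c',
        if c = insertAt hk c' m then insertProb r k m * chainWeight k c' else 0
    else 0

variable {r}

lemma sum_chainWeight_zero_mul (F : (Fin 1 → Finset (Fin n)) → ℝ) :
    ∑ c, chainWeight r 0 c * F c = F fun _ => ∅ := by
  simp [chainWeight]

lemma sum_chainWeight_succ_mul {k : ℕ} (hk : k < n) (F : (Fin (k + 2) → Finset (Fin n)) → ℝ) :
    ∑ c, chainWeight r (k + 1) c * F c =
      ∑ m ∈ range (k + 1), insertProb r k m * ∑ c, chainWeight r k c * F (insertAt hk c m) := by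
  simp only [chainWeight, dif_pos hk, sum_mul, ite_mul, zero_mul]
  rw [sum_comm]
  refine sum_congr rfl fun m _ => ?_
  rw [sum_comm, mul_sum]
  refine sum_congr rfl fun c' _ => ?_
  rw [sum_ite_eq' univ, if_pos (mem_univ _), mul_assoc]

lemma sum_chainWeight (k : ℕ) (hk : k ≤ n) : ∑ c, chainWeight r k c = 1 := by
  induction k with
  | zero => simpa using sum_chainWeight_zero_mul (r := r) fun _ => 1
  | succ k ih =>
    simpa [ih (by omega), sum_insertProb (by omega : k < n)] using
      sum_chainWeight_succ_mul (r := r) (by omega : k < n) fun _ => 1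

lemma chainWeight_nonneg (hr : ∀ j, 0 < r j) (k : ℕ) (hk : k ≤ n)
    (c : Fin (k + 1) → Finset (Fin n)) : 0 ≤ chainWeight r k c := by
  induction k with
  | zero => unfold chainWeight; split_ifs <;> norm_num
  | succ k ih =>
    rw [chainWeight, dif_pos (by omega)]
    refine sum_nonneg fun m hm => sum_nonneg fun c' _ => ?_
    split_ifs
    · exact mul_nonneg (insertProb_nonneg hr (by omega) (by simpa [Nat.lt_succ_iff] using hm))
        (ih (by omega) c')
    · exact le_rfl

lemma isSegChain_of_chainWeight_ne_zero (k : ℕ) (hk : k ≤ n) {c : Fin (k + 1) → Finset (Fin n)}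
    (hc : chainWeight r k c ≠ 0) :
    IsSegChain k c := by
  induction k with
  | zero =>
    obtain rfl : c = fun _ => ∅ := by by_contra h; simp [chainWeight, h] at hc
    exact ⟨monotone_const, fun ℓ => by simp [Fin.fin_one_eq_zero ℓ]⟩
  | succ k ih =>
    rw [chainWeight, dif_pos (by omega)] at hc
    obtain ⟨m, hm, hc⟩ := exists_ne_zero_of_sum_ne_zero hc
    obtain ⟨c', -, hc⟩ := exists_ne_zero_of_sum_ne_zero hc
    split_ifs at hc with hceq
    · rw [hceq]
      exact (ih (by omega) (right_ne_zero_of_mul hc)).insertAt _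
        (by simpa [Nat.lt_succ_iff] using hm)
    · exact (hc rfl).elim

lemma sum_chainWeight_mul_congr {k : ℕ} (hk : k ≤ n) {F G : (Fin (k + 1) → Finset (Fin n)) → ℝ}
    (hFG : ∀ c, IsSegChain k c → F c = G c) :
    ∑ c, chainWeight r k c * F c = ∑ c, chainWeight r k c * G c := by
  refine sum_congr rfl fun c _ => ?_
  by_cases hc : chainWeight r k c = 0
  · simp [hc]
  · rw [hFG c (isSegChain_of_chainWeight_ne_zero k hk hc)]

variable (r) in
def HasLevelMarginals (k : ℕ) : Prop :=
  ∀ (ℓ : Fin (k + 1)) (s : Finset (Fin n)), s ⊆ initSeg n k → s.card = ℓ →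
    ∑ c, chainWeight r k c * (if c ℓ = s then 1 else 0) = (∏ j ∈ s, r j) / esymm r (initSeg n k) ℓ

lemma hasLevelMarginals_zero : HasLevelMarginals r 0 := by
  intro ℓ s hs _
  rw [initSeg_zero, subset_empty] at hs
  subst hs
  rw [sum_chainWeight_zero_mul]
  simp

lemma HasLevelMarginals.succ_of_notMem (hr : ∀ j, 0 < r j) {k : ℕ} (hk : k < n)
    (ih : HasLevelMarginals r k) (ℓ : Fin (k + 2)) {s : Finset (Fin n)}
    (hs : s ⊆ initSeg n k) (hcard : s.card = ℓ) :
    ∑ c, chainWeight r (k + 1) c * (if c ℓ = s then 1 else 0) =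
      (∏ j ∈ s, r j) / esymm r (initSeg n (k + 1)) ℓ := by
  have hℓk : (ℓ : ℕ) ≤ k := hcard ▸ card_initSeg (n := n) hk.le ▸ card_le_card hs
  have hterm : ∀ m ∈ range (k + 1),
      insertProb r k m * ∑ c, chainWeight r k c * (if insertAt hk c m ℓ = s then 1 else 0) =
        (if (ℓ : ℕ) ≤ m then insertProb r k m else 0) *
          ((∏ j ∈ s, r j) / esymm r (initSeg n k) ℓ) := by
    intro m hm
    split_ifs with hℓm
    · simp only [insertAt_eq_of_le hk _ (i := ⟨ℓ, by omega⟩) rfl hℓm]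
      rw [ih _ s hs hcard]
    · have hne : ∀ c, insertAt hk c m ℓ ≠ s := fun c h => by
        rw [insertAt_eq_insert hk c (i := ⟨ℓ - 1, by omega⟩) (by simp only; omega) (by omega)] at h
        exact notMem_initSeg hk (hs (h ▸ mem_insert_self _ _))
      simp [hne]
  have hpos := esymm_pos hr (s := initSeg n k) (ℓ := ℓ) (by rw [card_initSeg hk.le]; omega)
  rw [sum_chainWeight_succ_mul hk, sum_congr rfl hterm, ← sum_mul,
    sum_insertProb_ge hk (by omega), segRatio]
  field_simp

lemma HasLevelMarginals.succ_of_mem (hr : ∀ j, 0 < r j) {k : ℕ} (hk : k < n)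
    (ih : HasLevelMarginals r k) (ℓ : Fin (k + 2)) {s : Finset (Fin n)}
    (hs : s ⊆ initSeg n (k + 1)) (hx : ⟨k, hk⟩ ∈ s) (hcard : s.card = ℓ) :
    ∑ c, chainWeight r (k + 1) c * (if c ℓ = s then 1 else 0) =
      (∏ j ∈ s, r j) / esymm r (initSeg n (k + 1)) ℓ := by
  set x : Fin n := ⟨k, hk⟩
  obtain ⟨ℓ', hℓ'⟩ : ∃ ℓ', (ℓ : ℕ) = ℓ' + 1 := ⟨s.card - 1, by have := card_pos.2 ⟨x, hx⟩; omega⟩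
  have hℓk : ℓ' ≤ k := by omega
  have hs' : s.erase x ⊆ initSeg n k := fun j hj => by
    have := hs (mem_of_mem_erase hj)
    rw [initSeg_succ hk, mem_insert] at this
    exact this.resolve_left (ne_of_mem_erase hj)
  have hterm : ∀ m ∈ range (k + 1),
      insertProb r k m * ∑ c, chainWeight r k c * (if insertAt hk c m ℓ = s then 1 else 0) =
        (if m < ℓ then insertProb r k m else 0) *
          ((∏ j ∈ s.erase x, r j) / esymm r (initSeg n k) ℓ') := by
    intro m hm
    split_ifs with hmℓ
    · rw [← ih ⟨ℓ', by omega⟩ _ hs' (by rw [card_erase_of_mem hx]; simp; omega)]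
      congr 1
      refine sum_chainWeight_mul_congr hk.le fun c hc => ?_
      rw [insertAt_eq_insert hk c (i := ⟨ℓ', by omega⟩) hℓ' hmℓ]
      have hxc := hc.notMem hk ⟨ℓ', by omega⟩
      refine if_congr ⟨fun h => ?_, fun h => ?_⟩ rfl rfl
      · rw [← h, erase_insert hxc]
      · rw [h, insert_erase hx]
    · have hmk := mem_range.1 hm
      have hne : ∀ c, IsSegChain k c → insertAt hk c m ℓ ≠ s := fun c hc h => by
        rw [insertAt_eq_of_le hk c (i := ⟨ℓ, by omega⟩) rfl (by simp only; omega)] at h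
        exact hc.notMem hk _ (h ▸ hx)
      rw [sum_chainWeight_mul_congr hk.le (G := fun _ => 0) fun c hc => if_neg (hne c hc)]
      simp
  have hpos := esymm_pos hr (s := initSeg n k) (ℓ := ℓ') (by rw [card_initSeg hk.le]; omega)
  rw [sum_chainWeight_succ_mul hk, sum_congr rfl hterm, ← sum_mul,
    sum_insertProb_lt (by omega), hℓ', one_sub_segRatio_succ hr hk hℓk, ← mul_prod_erase s r hx]
  field_simp
  ring

lemma HasLevelMarginals.succ (hr : ∀ j, 0 < r j) {k : ℕ} (hk : k < n)
    (ih : HasLevelMarginals r k) : HasLevelMarginals r (k + 1) := by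
  intro ℓ s hs hcard
  by_cases hx : (⟨k, hk⟩ : Fin n) ∈ s
  · exact ih.succ_of_mem hr hk ℓ hs hx hcard
  · refine ih.succ_of_notMem hr hk ℓ (fun j hj => ?_) hcard
    have := hs hj
    rw [initSeg_succ hk, mem_insert] at this
    exact this.resolve_left fun h => hx (h ▸ hj)

lemma hasLevelMarginals (hr : ∀ j, 0 < r j) (k : ℕ) (hk : k ≤ n) : HasLevelMarginals r k := by
  induction k with
  | zero => exact hasLevelMarginals_zero
  | succ k ih => exact (ih (by omega)).succ hr (by omega)

end Weights

end ChainCoupling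

end

open ChainCoupling

/-- There is a distribution on maximal chains `∅ = c₀ ⊂ c₁ ⊂ ⋯ ⊂ cₙ = [n]`
such that `c_ℓ` is distributed according to `P` conditioned on `|z| = ℓ`. -/
theorem chain_distribution (n : ℕ) (p : Fin n → ℝ)
    (hp : ∀ j, 0 < p j ∧ p j < 1) :
    ∃ μ : ((Fin (n + 1)) → Finset (Fin n)) → ℝ,
      (∀ c, 0 ≤ μ c) ∧
      (∑ c : (Fin (n + 1)) → Finset (Fin n), μ c = 1) ∧
      (∀ c, μ c ≠ 0 →
        (∀ ℓ : Fin (n + 1), (c ℓ).card = (ℓ : ℕ)) ∧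
        (∀ ℓ : Fin n, c ℓ.castSucc ⊂ c ℓ.succ)) ∧
      (∀ ℓ : Fin (n + 1), ∀ s : Finset (Fin n), s.card = (ℓ : ℕ) →
        (∑ c ∈ (Finset.univ : Finset ((Fin (n + 1)) → Finset (Fin n))).filter
            (fun c => c ℓ = s), μ c) =
          (∏ j, if j ∈ s then p j else 1 - p j) /
            (∑ t ∈ (Finset.univ : Finset (Fin n)).powersetCard (ℓ : ℕ),
              ∏ j, if j ∈ t then p j else 1 - p j)) := by
  set r : Fin n → ℝ := fun j => p j / (1 - p j)
  have hr : ∀ j, 0 < r j := fun j => div_pos (hp j).1 (sub_pos.2 (hp j).2)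
  have hp1 : ∀ j, p j ≠ 1 := fun j => (hp j).2.ne
  refine ⟨chainWeight r n, chainWeight_nonneg hr n le_rfl, sum_chainWeight n le_rfl,
    fun c hc => ?_, fun ℓ s hs => ?_⟩
  · have hc := isSegChain_of_chainWeight_ne_zero n le_rfl hc
    exact ⟨fun ℓ => (hc.2 ℓ).1, hc.ssubset⟩
  · have hC : ∏ j, (1 - p j) ≠ 0 := prod_ne_zero_iff.2 fun j _ => sub_ne_zero.2 (hp1 j).symm
    simp only [prod_ite_mem_eq_prod_odds_mul hp1, ← sum_mul, mul_div_mul_right _ _ hC,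
      sum_filter]
    simpa only [mul_boole, initSeg_self, esymm] using
      hasLevelMarginals hr n le_rfl ℓ s (initSeg_self ▸ subset_univ s) hs
end

section
/- Let P be a non-trivial product distribution on {0,1}^n and let ℓ ∈ {0,1,...,n-1}. Then there is a probability distribution on pairs (c_ℓ, c_{ℓ+1}) of subsets of [n] with |c_ℓ| = ℓ and |c_{ℓ+1}| = ℓ+1 such that: (1) c_ℓ ⊂ c_{ℓ+1} almost surely; (2) the marginal of c_ℓ is P conditioned on Hamming weight ℓ; (3) the marginal of c_{ℓ+1} is P conditioned on Hamming weight ℓ+1. -/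
open Finset

namespace Cpl

variable {n : ℕ}

noncomputable def W (x : Fin n → ℝ) (s : Finset (Fin n)) : ℝ := ∏ j ∈ s, x j

noncomputable def E (n : ℕ) (x : Fin n → ℝ) (k : ℕ) : ℝ :=
  ∑ s ∈ (univ : Finset (Fin n)).powersetCard k, W x s

def up (s : Finset (Fin n)) : Finset (Fin (n+1)) := s.map Fin.castSuccEmb

lemma mem_up {s : Finset (Fin n)} {j : Fin (n+1)} :
    j ∈ up s ↔ ∃ a ∈ s, Fin.castSucc a = j := by
  simp only [up, Finset.mem_map, Fin.castSuccEmb]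
  rfl

lemma last_not_mem_up (s : Finset (Fin n)) : Fin.last n ∉ up s := by
  simp only [mem_up]
  rintro ⟨a, _, ha⟩
  exact (Fin.castSucc_lt_last a).ne ha

lemma up_card (s : Finset (Fin n)) : (up s).card = s.card := Finset.card_map _

lemma up_injective : Function.Injective (up (n := n)) :=
  fun _ _ h => Finset.map_injective _ h

lemma up_ssubset_up {s t : Finset (Fin n)} : up s ⊂ up t ↔ s ⊂ t := by
  unfold up
  constructor
  · intro h
    exact ⟨(Finset.map_subset_map).1 h.1, fun hc => h.2 ((Finset.map_subset_map).2 hc)⟩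
  · intro h
    exact ⟨(Finset.map_subset_map).2 h.1, fun hc => h.2 ((Finset.map_subset_map).1 hc)⟩

lemma exists_up {S : Finset (Fin (n+1))} (h : Fin.last n ∉ S) : ∃ s, up s = S := by
  classical
  refine ⟨S.preimage Fin.castSucc (Fin.castSucc_injective n).injOn, ?_⟩
  ext j
  simp only [mem_up, Finset.mem_preimage]
  constructor
  · rintro ⟨a, ha, rfl⟩; exact ha
  · intro hj
    have hne : j ≠ Fin.last n := fun hj' => h (hj' ▸ hj)
    obtain ⟨a, ha⟩ := Fin.exists_castSucc_eq.2 hne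
    exact ⟨a, ha ▸ hj, ha⟩

lemma W_up (x : Fin (n+1) → ℝ) (s : Finset (Fin n)) :
    W x (up s) = W (x ∘ Fin.castSucc) s := Finset.prod_map _ _ _

lemma W_insert_last (x : Fin (n+1) → ℝ) (s : Finset (Fin n)) :
    W x (insert (Fin.last n) (up s)) = x (Fin.last n) * W (x ∘ Fin.castSucc) s := by
  rw [W, Finset.prod_insert (last_not_mem_up s), ← W_up x s]; rfl

lemma insert_last_injective :
    Function.Injective (fun s : Finset (Fin n) => insert (Fin.last n) (up s)) := by
  intro s t h
  apply up_injective
  have hs := last_not_mem_up s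
  have ht := last_not_mem_up t
  have : (insert (Fin.last n) (up s)).erase (Fin.last n)
      = (insert (Fin.last n) (up t)).erase (Fin.last n) := by
    simp only at h; rw [h]
  rwa [Finset.erase_insert hs, Finset.erase_insert ht] at this

/-- Splitting a sum over all subsets of `Fin (n+1)` by membership of `last`. -/
lemma sum_split (f : Finset (Fin (n+1)) → ℝ) :
    ∑ S : Finset (Fin (n+1)), f S
      = (∑ s : Finset (Fin n), f (up s))
        + ∑ s : Finset (Fin n), f (insert (Fin.last n) (up s)) := by
  classical
  have h1 : (univ : Finset (Finset (Fin (n+1)))).filter (fun S => Fin.last n ∉ S)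
      = (univ : Finset (Finset (Fin n))).image up := by
    ext S
    simp only [Finset.mem_filter, Finset.mem_image, Finset.mem_univ, true_and]
    constructor
    · intro h; obtain ⟨s, hs⟩ := exists_up h; exact ⟨s, hs⟩
    · rintro ⟨s, rfl⟩; exact last_not_mem_up s
  have h2 : (univ : Finset (Finset (Fin (n+1)))).filter (fun S => Fin.last n ∈ S)
      = (univ : Finset (Finset (Fin n))).image (fun s => insert (Fin.last n) (up s)) := by
    ext S
    simp only [Finset.mem_filter, Finset.mem_image, Finset.mem_univ, true_and]
    constructor
    · intro h
      obtain ⟨s, hs⟩ := exists_up (Finset.notMem_erase (Fin.last n) S)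
      exact ⟨s, by rw [hs, Finset.insert_erase h]⟩
    · rintro ⟨s, rfl⟩; exact Finset.mem_insert_self _ _
  have h1' : (univ : Finset (Finset (Fin (n+1)))).filter (fun S => ¬ Fin.last n ∈ S)
      = (univ : Finset (Finset (Fin n))).image up := h1
  rw [← Finset.sum_filter_add_sum_filter_not univ (fun S => Fin.last n ∈ S) f, h1', h2,
    Finset.sum_image (fun x _ y _ h => up_injective h),
    Finset.sum_image (fun x _ y _ h => insert_last_injective h), add_comm]


lemma E_eq (x : Fin n → ℝ) (k : ℕ) :
    E n x k = ∑ S : Finset (Fin n), if S.card = k then W x S else 0 := by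
  rw [E, Finset.powersetCard_eq_filter, Finset.powerset_univ, Finset.sum_filter]

lemma E_zero (x : Fin n → ℝ) : E n x 0 = 1 := by
  simp [E, W]

lemma W_nonneg {x : Fin n → ℝ} (hx : ∀ j, 0 ≤ x j) (s : Finset (Fin n)) : 0 ≤ W x s :=
  Finset.prod_nonneg fun j _ => hx j

lemma W_pos {x : Fin n → ℝ} (hx : ∀ j, 0 < x j) (s : Finset (Fin n)) : 0 < W x s :=
  Finset.prod_pos fun j _ => hx j

lemma E_nonneg {x : Fin n → ℝ} (hx : ∀ j, 0 ≤ x j) (k : ℕ) : 0 ≤ E n x k :=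
  Finset.sum_nonneg fun s _ => W_nonneg hx s

lemma E_pos {x : Fin n → ℝ} (hx : ∀ j, 0 < x j) {k : ℕ} (hk : k ≤ n) : 0 < E n x k := by
  refine Finset.sum_pos (fun s _ => W_pos hx s) ?_
  rw [Finset.powersetCard_nonempty]
  simpa using hk

lemma E_succ (x : Fin (n+1) → ℝ) (k : ℕ) :
    E (n+1) x (k+1) = E n (x ∘ Fin.castSucc) (k+1)
      + x (Fin.last n) * E n (x ∘ Fin.castSucc) k := by
  rw [E_eq, sum_split]
  congr 1
  · rw [E_eq]
    refine Finset.sum_congr rfl fun s _ => ?_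
    rw [up_card, W_up]
  · rw [E_eq, Finset.mul_sum]
    refine Finset.sum_congr rfl fun s _ => ?_
    rw [Finset.card_insert_of_notMem (last_not_mem_up s), up_card, W_insert_last]
    by_cases h : s.card = k <;> simp [h]


lemma E_eq_zero {x : Fin n → ℝ} {k : ℕ} (hk : n < k) : E n x k = 0 := by
  rw [E, Finset.powersetCard_eq_empty.2 (by simpa using hk), Finset.sum_empty]

lemma newton : ∀ (n : ℕ) (x : Fin n → ℝ), (∀ j, 0 ≤ x j) → ∀ a b : ℕ, a ≤ b →
    E n x a * E n x (b+2) ≤ E n x (a+1) * E n x (b+1) := by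
  intro n
  induction n with
  | zero =>
    intro x hx a b hab
    have h1 : E 0 x (a+1) = 0 := E_eq_zero (by omega)
    have h2 : E 0 x (b+2) = 0 := E_eq_zero (by omega)
    rw [h1, h2, mul_zero, zero_mul]
  | succ n ih =>
    intro x hx a b hab
    set x' : Fin n → ℝ := x ∘ Fin.castSucc with hx'
    have hx'0 : ∀ j, 0 ≤ x' j := fun j => hx _
    have hu : 0 ≤ x (Fin.last n) := hx _
    set u := x (Fin.last n) with hu'
    have hEnn : ∀ k, 0 ≤ E n x' k := fun k => E_nonneg hx'0 k
    match a, hab with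
    | 0, hab =>
      rw [E_zero, E_succ, E_succ, E_succ]
      have h1 := ih x' hx'0 0 b (Nat.zero_le b)
      have hE0 : E n x' 0 = 1 := E_zero x'
      rw [hE0] at h1
      have e1 : E n x' (b+1+1) = E n x' (b+2) := rfl
      have e2 : E n x' (0+1) = E n x' 1 := rfl
      rw [e1, e2] at *
      simp only [← hx', ← hu'] at *
      rw [hE0]
      nlinarith [h1, hE0, hu, hEnn b, hEnn (b+1), hEnn (b+2), hEnn 1,
        mul_nonneg hu (hEnn b), mul_nonneg (mul_nonneg hu hu) (hEnn b),
        mul_nonneg hu (mul_nonneg (hEnn 1) (hEnn b))]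
    | a'+1, hab =>
      obtain ⟨b', rfl⟩ : ∃ b', b = b'+1 := ⟨b-1, by omega⟩
      have hab' : a' ≤ b' := by omega
      rw [E_succ, E_succ, E_succ, E_succ]
      have h1 : E n x' (a'+1) * E n x' (b'+3) ≤ E n x' (a'+2) * E n x' (b'+2) := by
        have := ih x' hx'0 (a'+1) (b'+1) (by omega)
        convert this using 3 <;> omega
      have h3 : E n x' a' * E n x' (b'+2) ≤ E n x' (a'+1) * E n x' (b'+1) :=
        ih x' hx'0 a' b' hab'
      have h2 : E n x' a' * E n x' (b'+3) ≤ E n x' (a'+2) * E n x' (b'+1) := by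
        rcases eq_or_lt_of_le hab' with rfl | hlt
        · exact le_of_le_of_eq (ih x' hx'0 a' (a'+1) (by omega)) (mul_comm _ _)
        · calc E n x' a' * E n x' (b'+3)
              ≤ E n x' (a'+1) * E n x' (b'+2) := ih x' hx'0 a' (b'+1) (by omega)
            _ ≤ E n x' (a'+2) * E n x' (b'+1) := by
                obtain ⟨b'', rfl⟩ : ∃ b'', b' = b''+1 := ⟨b'-1, by omega⟩
                exact ih x' hx'0 (a'+1) (b''+1) (by omega)
      have e1 : E n x' (b'+1+1) = E n x' (b'+2) := rfl
      have e2 : E n x' (b'+1+2) = E n x' (b'+3) := rfl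
      have e3 : E n x' (b'+1+1+1) = E n x' (b'+3) := rfl
      have e4 : E n x' (a'+1+1) = E n x' (a'+2) := rfl
      rw [e1, e2, e3, e4] at *
      simp only [← hx', ← hu'] at *
      nlinarith [h1, h2, h3, hu, mul_nonneg hu hu, hEnn a', hEnn (a'+1), hEnn (a'+2),
        hEnn (b'+1), hEnn (b'+2), hEnn (b'+3),
        mul_le_mul_of_nonneg_left h2 hu,
        mul_le_mul_of_nonneg_left h3 (mul_nonneg hu hu)]


lemma sum_ite_inj {α β : Type*} [Fintype α] [DecidableEq β] {F : α → β}
    (hF : Function.Injective F) (a₀ : α) (h : α → ℝ) :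
    ∑ a : α, (if F a₀ = F a then h a else 0) = h a₀ := by
  rw [Finset.sum_eq_single a₀]
  · simp
  · intro b _ hb
    rw [if_neg fun hc => hb (hF hc.symm)]
  · simp

lemma sum_ite_none {α β : Type*} [Fintype α] [DecidableEq β] {F : α → β} {c : β}
    (hc : ∀ a, c ≠ F a) (h : α → ℝ) :
    ∑ a : α, (if c = F a then h a else 0) = 0 :=
  Finset.sum_eq_zero fun a _ => if_neg (hc a)

lemma sum_ite_const {α : Type*} [Fintype α] (c : Prop) [Decidable c] (f : α → ℝ) :
    ∑ a : α, (if c then f a else 0) = if c then ∑ a : α, f a else 0 := by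
  by_cases h : c <;> simp [h]

variable {γ : Type*} [Fintype γ] [DecidableEq γ] {α : Type*} [Fintype α]

lemma redAll (F G : α → γ) (g : α → ℝ) :
    ∑ X : γ × γ, ∑ a : α, (if X = (F a, G a) then g a else 0) = ∑ a : α, g a := by
  rw [Finset.sum_comm]
  exact Finset.sum_congr rfl fun a _ => by simp [Finset.sum_ite_eq']

lemma redT (F G : α → γ) (g : α → ℝ) (s₀ : γ) :
    ∑ T : γ, ∑ a : α, (if (s₀, T) = (F a, G a) then g a else 0)
      = ∑ a : α, (if s₀ = F a then g a else 0) := by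
  rw [Finset.sum_comm]
  refine Finset.sum_congr rfl fun a _ => ?_
  by_cases h : s₀ = F a <;> simp [Prod.ext_iff, h, Finset.sum_ite_eq']

lemma redS (F G : α → γ) (g : α → ℝ) (t₀ : γ) :
    ∑ S : γ, ∑ a : α, (if (S, t₀) = (F a, G a) then g a else 0)
      = ∑ a : α, (if t₀ = G a then g a else 0) := by
  rw [Finset.sum_comm]
  refine Finset.sum_congr rfl fun a _ => ?_
  by_cases h : t₀ = G a <;> simp [Prod.ext_iff, h, Finset.sum_ite_eq', and_comm]

lemma insert_last_ssubset {s t : Finset (Fin n)} (h : s ⊂ t) :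
    insert (Fin.last n) (up s) ⊂ insert (Fin.last n) (up t) := by
  have h' : up s ⊂ up t := up_ssubset_up.2 h
  refine ⟨Finset.insert_subset_insert _ h'.1, fun hc => ?_⟩
  obtain ⟨j, hj2, hj1⟩ := Finset.exists_of_ssubset h'
  have hjlast : j ≠ Fin.last n := fun hl => last_not_mem_up t (hl ▸ hj2)
  have : j ∈ insert (Fin.last n) (up s) := hc (Finset.mem_insert_of_mem hj2)
  rcases Finset.mem_insert.1 this with h1 | h1
  · exact hjlast h1
  · exact hj1 h1

lemma rep_mem {S : Finset (Fin (n+1))} (h : Fin.last n ∈ S) :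
    ∃ c, S = insert (Fin.last n) (up c) ∧ c.card + 1 = S.card := by
  obtain ⟨c, hc⟩ := exists_up (Finset.notMem_erase (Fin.last n) S)
  have hS : S = insert (Fin.last n) (up c) := by rw [hc, Finset.insert_erase h]
  refine ⟨c, hS, ?_⟩
  rw [hS, Finset.card_insert_of_notMem (last_not_mem_up c), up_card]

lemma rep_notMem {S : Finset (Fin (n+1))} (h : Fin.last n ∉ S) :
    ∃ c, S = up c ∧ c.card = S.card := by
  obtain ⟨c, hc⟩ := exists_up h
  exact ⟨c, hc.symm, by rw [← hc, up_card]⟩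


theorem key : ∀ (n : ℕ) (x : Fin n → ℝ), (∀ j, 0 < x j) → ∀ ℓ : ℕ, ℓ < n →
    ∃ μ : Finset (Fin n) × Finset (Fin n) → ℝ,
      (∀ y, 0 ≤ μ y) ∧ (∑ y : Finset (Fin n) × Finset (Fin n), μ y = 1) ∧
      (∀ y, μ y ≠ 0 → y.1 ⊂ y.2 ∧ y.1.card = ℓ ∧ y.2.card = ℓ + 1) ∧
      (∀ s : Finset (Fin n), s.card = ℓ →
        (∑ t : Finset (Fin n), μ (s, t)) = W x s / E n x ℓ) ∧
      (∀ t : Finset (Fin n), t.card = ℓ + 1 →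
        (∑ s : Finset (Fin n), μ (s, t)) = W x t / E n x (ℓ + 1)) := by
  intro n
  induction n with
  | zero => intro x hx ℓ hℓ; omega
  | succ m ih =>
    intro x hx ℓ hℓ

    rcases Nat.eq_zero_or_pos ℓ with rfl | hℓpos
    · -- bottom case ℓ = 0
      classical
      have hE1 : 0 < E (m+1) x 1 := E_pos hx (by omega)
      refine ⟨fun y => if y.1 = ∅ then (if y.2.card = 1 then W x y.2 / E (m+1) x 1 else 0) else 0,
        ?_, ?_, ?_, ?_, ?_⟩
      · intro y
        dsimp only
        split_ifs with h1 h2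
        · exact div_nonneg (W_nonneg (fun j => (hx j).le) _) hE1.le
        · exact le_rfl
        · exact le_rfl
      · have hsum : (∑ t : Finset (Fin (m+1)),
            if t.card = 1 then W x t / E (m+1) x 1 else 0) = 1 := by
          have : (∑ t : Finset (Fin (m+1)), if t.card = 1 then W x t / E (m+1) x 1 else 0)
              = (∑ t : Finset (Fin (m+1)), if t.card = 1 then W x t else 0) / E (m+1) x 1 := by
            rw [Finset.sum_div]
            exact Finset.sum_congr rfl fun t _ => by split_ifs <;> simp
          rw [this, ← E_eq, div_self hE1.ne']
        rw [Fintype.sum_prod_type,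
          Finset.sum_congr rfl fun s _ => sum_ite_const (s = (∅ : Finset (Fin (m+1)))) _,
          Finset.sum_ite_eq' Finset.univ (∅ : Finset (Fin (m+1)))]
        simpa using hsum
      · intro y hy
        dsimp only at hy
        have h1 : y.1 = ∅ := by by_contra h; simp [h] at hy
        have h2 : y.2.card = 1 := by by_contra h; simp [h1, h] at hy
        refine ⟨?_, by simp [h1], by simpa using h2⟩
        rw [h1, Finset.empty_ssubset]
        exact Finset.card_pos.1 (by omega)
      · intro s hs
        have hs' : s = ∅ := Finset.card_eq_zero.1 hs
        subst hs'
        have : (∑ t : Finset (Fin (m+1)),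
            if (∅ : Finset (Fin (m+1))) = ∅ then
              (if t.card = 1 then W x t / E (m+1) x 1 else 0) else 0)
            = (∑ t : Finset (Fin (m+1)), if t.card = 1 then W x t / E (m+1) x 1 else 0) := by
          simp
        rw [this]
        have : (∑ t : Finset (Fin (m+1)),
            if t.card = 1 then W x t / E (m+1) x 1 else 0) = 1 := by
          have h2 : (∑ t : Finset (Fin (m+1)), if t.card = 1 then W x t / E (m+1) x 1 else 0)
              = (∑ t : Finset (Fin (m+1)), if t.card = 1 then W x t else 0) / E (m+1) x 1 := by
            rw [Finset.sum_div]
            exact Finset.sum_congr rfl fun t _ => by split_ifs <;> simp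
          rw [h2, ← E_eq, div_self hE1.ne']
        rw [this, W, Finset.prod_empty, E_zero]
        norm_num
      · intro t ht
        rw [Finset.sum_ite_eq' Finset.univ (∅ : Finset (Fin (m+1)))]
        simp [ht]
    rcases Nat.lt_or_ge ℓ m with hℓm | hℓtop
    swap
    · -- top case ℓ = m
      classical
      have hℓeq : ℓ = m := by omega
      have hEl : 0 < E (m+1) x ℓ := E_pos hx (by omega)
      have hWu : 0 < W x (Finset.univ : Finset (Fin (m+1))) := W_pos hx _
      have hEtop : E (m+1) x (ℓ+1) = W x (Finset.univ : Finset (Fin (m+1))) := by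
        rw [show ℓ + 1 = m + 1 from by omega]
        have h5 : ((Finset.univ : Finset (Fin (m+1))).powersetCard (m+1)) = {Finset.univ} := by
          have := Finset.powersetCard_self (Finset.univ : Finset (Fin (m+1)))
          simpa using this
        rw [E, h5, Finset.sum_singleton]
      have hsum : (∑ s : Finset (Fin (m+1)),
          if s.card = ℓ then W x s / E (m+1) x ℓ else 0) = 1 := by
        have h2 : (∑ s : Finset (Fin (m+1)), if s.card = ℓ then W x s / E (m+1) x ℓ else 0)
            = (∑ s : Finset (Fin (m+1)), if s.card = ℓ then W x s else 0) / E (m+1) x ℓ := by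
          rw [Finset.sum_div]
          exact Finset.sum_congr rfl fun t _ => by split_ifs <;> simp
        rw [h2, ← E_eq, div_self hEl.ne']
      refine ⟨fun y => if y.2 = Finset.univ then
          (if y.1.card = ℓ then W x y.1 / E (m+1) x ℓ else 0) else 0, ?_, ?_, ?_, ?_, ?_⟩
      · intro y
        dsimp only
        split_ifs with h1 h2
        · exact div_nonneg (W_nonneg (fun j => (hx j).le) _) hEl.le
        · exact le_rfl
        · exact le_rfl
      · rw [Fintype.sum_prod_type]
        have h6 : ∀ s : Finset (Fin (m+1)), (∑ t : Finset (Fin (m+1)),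
            if t = Finset.univ then (if s.card = ℓ then W x s / E (m+1) x ℓ else 0) else 0)
            = (if s.card = ℓ then W x s / E (m+1) x ℓ else 0) := by
          intro s
          rw [Finset.sum_ite_eq' Finset.univ Finset.univ]
          simp
        rw [Finset.sum_congr rfl fun s _ => h6 s, hsum]
      · intro y hy
        dsimp only at hy
        have h1 : y.2 = Finset.univ := by by_contra h; simp [h] at hy
        have h2 : y.1.card = ℓ := by by_contra h; simp [h1, h] at hy
        refine ⟨?_, h2, ?_⟩
        · rw [h1, Finset.ssubset_univ_iff]
          intro hc
          rw [hc] at h2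
          simp at h2
          omega
        · rw [h1]
          simp
          omega
      · intro s hs
        have h6 : (∑ t : Finset (Fin (m+1)),
            if t = Finset.univ then (if s.card = ℓ then W x s / E (m+1) x ℓ else 0) else 0)
            = (if s.card = ℓ then W x s / E (m+1) x ℓ else 0) := by
          rw [Finset.sum_ite_eq' Finset.univ Finset.univ]
          simp
        rw [h6, if_pos hs]
      · intro t ht
        have ht' : t = Finset.univ := by
          rw [← Finset.card_eq_iff_eq_univ]
          simp only [Fintype.card_fin]
          omega
        subst ht'
        simp only [if_pos rfl, if_true]
        rw [hsum, hEtop, div_self hWu.ne']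
    · -- main inductive case: 1 ≤ ℓ, ℓ < m
      classical
      obtain ⟨ℓ', rfl⟩ : ∃ ℓ', ℓ = ℓ' + 1 := ⟨ℓ - 1, by omega⟩
      set x' : Fin m → ℝ := x ∘ Fin.castSucc with hx'def
      have hx' : ∀ j, 0 < x' j := fun j => hx _
      set u := x (Fin.last m) with hudef
      have hu : 0 < u := hx _
      have hE1 : 0 < E (m+1) x (ℓ'+1) := E_pos hx (by omega)
      have hE2 : 0 < E (m+1) x (ℓ'+2) := E_pos hx (by omega)
      have hE'0 : 0 < E m x' ℓ' := E_pos hx' (by omega)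
      have hE'1 : 0 < E m x' (ℓ'+1) := E_pos hx' (by omega)
      have hE'2 : 0 < E m x' (ℓ'+2) := E_pos hx' (by omega)
      have hEs1 : E (m+1) x (ℓ'+1) = E m x' (ℓ'+1) + u * E m x' ℓ' := E_succ x ℓ'
      have hEs2 : E (m+1) x (ℓ'+2) = E m x' (ℓ'+2) + u * E m x' (ℓ'+1) := E_succ x (ℓ'+1)
      obtain ⟨μ₁, h1nn, h1sum, h1supp, h1margs, h1margt⟩ := ih x' hx' ℓ' (by omega)
      obtain ⟨μ₂, h2nn, h2sum, h2supp, h2margs, h2margt⟩ := ih x' hx' (ℓ'+1) (by omega)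
      set α1 := u * E m x' ℓ' / E (m+1) x (ℓ'+1) with hα1def
      set α2 := u * E m x' (ℓ'+1) / E (m+1) x (ℓ'+2) with hα2def
      have hα1 : 0 ≤ α1 := div_nonneg (mul_nonneg hu.le hE'0.le) hE1.le
      have hα2le1 : α2 ≤ 1 := by
        rw [hα2def, div_le_one hE2, hEs2]
        nlinarith [hE'2]
      have hα12 : α1 ≤ α2 := by
        rw [hα1def, hα2def, div_le_div_iff₀ hE1 hE2, hEs1, hEs2]
        have hnewton := newton m x' (fun j => (hx' j).le) ℓ' ℓ' le_rfl
        nlinarith [mul_le_mul_of_nonneg_left hnewton hu.le, mul_nonneg hu.le hu.le,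
          hE'0.le, hE'1.le]
      -- the coupling
      set ν : Finset (Fin m) → ℝ :=
        fun s => if s.card = ℓ'+1 then W x' s / E m x' (ℓ'+1) else 0 with hνdef
      have hν_nn : ∀ s, 0 ≤ ν s := by
        intro s
        rw [hνdef]
        dsimp only
        split_ifs
        · exact div_nonneg (W_nonneg (fun j => (hx' j).le) _) hE'1.le
        · exact le_rfl
      have hν_sum : ∑ s : Finset (Fin m), ν s = 1 := by
        rw [hνdef]
        have h2 : (∑ s : Finset (Fin m), if s.card = ℓ'+1 then W x' s / E m x' (ℓ'+1) else 0)
            = (∑ s : Finset (Fin m), if s.card = ℓ'+1 then W x' s else 0) / E m x' (ℓ'+1) := by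
          rw [Finset.sum_div]
          exact Finset.sum_congr rfl fun t _ => by split_ifs <;> simp
        rw [h2, ← E_eq, div_self hE'1.ne']
      set μ : Finset (Fin (m+1)) × Finset (Fin (m+1)) → ℝ :=
        fun X =>
          α1 * (∑ y : Finset (Fin m) × Finset (Fin m),
              if X = (insert (Fin.last m) (up y.1), insert (Fin.last m) (up y.2))
                then μ₁ y else 0)
          + (α2 - α1) * (∑ s : Finset (Fin m),
              if X = (up s, insert (Fin.last m) (up s)) then ν s else 0)
          + (1 - α2) * (∑ y : Finset (Fin m) × Finset (Fin m),
              if X = (up y.1, up y.2) then μ₂ y else 0) with hμdef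
      refine ⟨μ, ?_, ?_, ?_, ?_, ?_⟩
      · -- nonnegativity
        intro y
        rw [hμdef]
        dsimp only
        refine add_nonneg (add_nonneg ?_ ?_) ?_
        · refine mul_nonneg hα1 (Finset.sum_nonneg fun a _ => ?_)
          split_ifs
          · exact h1nn a
          · exact le_rfl
        · refine mul_nonneg (by linarith) (Finset.sum_nonneg fun a _ => ?_)
          split_ifs
          · exact hν_nn a
          · exact le_rfl
        · refine mul_nonneg (by linarith) (Finset.sum_nonneg fun a _ => ?_)
          split_ifs
          · exact h2nn a
          · exact le_rfl
      · -- total mass 1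
        rw [hμdef]
        dsimp only
        rw [Finset.sum_add_distrib, Finset.sum_add_distrib,
          ← Finset.mul_sum, ← Finset.mul_sum, ← Finset.mul_sum,
          redAll (fun y : Finset (Fin m) × Finset (Fin m) => insert (Fin.last m) (up y.1))
            (fun y => insert (Fin.last m) (up y.2)) μ₁,
          redAll (fun s : Finset (Fin m) => up s)
            (fun s => insert (Fin.last m) (up s)) ν,
          redAll (fun y : Finset (Fin m) × Finset (Fin m) => up y.1) (fun y => up y.2) μ₂,
          h1sum, h2sum, hν_sum]
        ring
      · -- support
        intro y hy
        rw [hμdef] at hy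
        dsimp only at hy
        have h3 : (α1 * (∑ z : Finset (Fin m) × Finset (Fin m),
              if y = (insert (Fin.last m) (up z.1), insert (Fin.last m) (up z.2))
                then μ₁ z else 0) ≠ 0)
            ∨ ((α2 - α1) * (∑ s : Finset (Fin m),
              if y = (up s, insert (Fin.last m) (up s)) then ν s else 0) ≠ 0)
            ∨ ((1 - α2) * (∑ z : Finset (Fin m) × Finset (Fin m),
              if y = (up z.1, up z.2) then μ₂ z else 0) ≠ 0) := by
          by_contra hc
          push_neg at hc
          rw [hc.1, hc.2.1, hc.2.2] at hy
          simp at hy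
        rcases h3 with h3 | h3 | h3
        · have hsne := right_ne_zero_of_mul h3
          obtain ⟨a, -, ha⟩ := Finset.exists_ne_zero_of_sum_ne_zero hsne
          have hcond : y = (insert (Fin.last m) (up a.1), insert (Fin.last m) (up a.2)) := by
            by_contra h; rw [if_neg h] at ha; exact ha rfl
          rw [if_pos hcond] at ha
          obtain ⟨hss, hc1, hc2⟩ := h1supp a ha
          rw [hcond]
          refine ⟨insert_last_ssubset hss, ?_, ?_⟩
          · rw [Finset.card_insert_of_notMem (last_not_mem_up _), up_card, hc1]
          · rw [Finset.card_insert_of_notMem (last_not_mem_up _), up_card, hc2]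
        · have hsne := right_ne_zero_of_mul h3
          obtain ⟨a, -, ha⟩ := Finset.exists_ne_zero_of_sum_ne_zero hsne
          have hcond : y = (up a, insert (Fin.last m) (up a)) := by
            by_contra h; rw [if_neg h] at ha; exact ha rfl
          have hacard : a.card = ℓ'+1 := by
            by_contra h
            rw [if_pos hcond, hνdef] at ha
            dsimp only at ha
            rw [if_neg h] at ha
            exact ha rfl
          rw [hcond]
          refine ⟨Finset.ssubset_insert (last_not_mem_up a), ?_, ?_⟩
          · rw [up_card, hacard]
          · rw [Finset.card_insert_of_notMem (last_not_mem_up _), up_card, hacard]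
        · have hsne := right_ne_zero_of_mul h3
          obtain ⟨a, -, ha⟩ := Finset.exists_ne_zero_of_sum_ne_zero hsne
          have hcond : y = (up a.1, up a.2) := by
            by_contra h; rw [if_neg h] at ha; exact ha rfl
          rw [if_pos hcond] at ha
          obtain ⟨hss, hc1, hc2⟩ := h2supp a ha
          rw [hcond]
          exact ⟨up_ssubset_up.2 hss, by rw [up_card, hc1], by rw [up_card, hc2]⟩
      · -- first marginal
        intro s₀ hs₀
        have hexp : (∑ T : Finset (Fin (m+1)), μ (s₀, T))
            = α1 * (∑ z : Finset (Fin m) × Finset (Fin m),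
                if s₀ = insert (Fin.last m) (up z.1) then μ₁ z else 0)
              + (α2 - α1) * (∑ s : Finset (Fin m), if s₀ = up s then ν s else 0)
              + (1 - α2) * (∑ z : Finset (Fin m) × Finset (Fin m),
                if s₀ = up z.1 then μ₂ z else 0) := by
          rw [hμdef]
          dsimp only
          rw [Finset.sum_add_distrib, Finset.sum_add_distrib,
            ← Finset.mul_sum, ← Finset.mul_sum, ← Finset.mul_sum,
            redT (fun z : Finset (Fin m) × Finset (Fin m) => insert (Fin.last m) (up z.1))
              (fun z => insert (Fin.last m) (up z.2)) μ₁ s₀,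
            redT (fun s : Finset (Fin m) => up s)
              (fun s => insert (Fin.last m) (up s)) ν s₀,
            redT (fun z : Finset (Fin m) × Finset (Fin m) => up z.1) (fun z => up z.2) μ₂ s₀]
        rw [hexp]
        by_cases hlast : Fin.last m ∈ s₀
        · obtain ⟨c, rfl, hcc⟩ := rep_mem hlast
          have hc : c.card = ℓ' := by omega
          have e1 : (∑ z : Finset (Fin m) × Finset (Fin m),
              if insert (Fin.last m) (up c) = insert (Fin.last m) (up z.1)
                then μ₁ z else 0) = W x' c / E m x' ℓ' := by
            rw [Fintype.sum_prod_type,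
              Finset.sum_congr rfl fun z1 _ =>
                sum_ite_const (insert (Fin.last m) (up c) = insert (Fin.last m) (up z1)) _,
              sum_ite_inj (fun s t h => insert_last_injective h) c
                (fun z1 => ∑ z2 : Finset (Fin m), μ₁ (z1, z2)),
              h1margs c hc]
          have e2 : (∑ s : Finset (Fin m),
              if insert (Fin.last m) (up c) = up s then ν s else 0) = 0 :=
            sum_ite_none (fun s h =>
              last_not_mem_up s (by rw [← h]; exact Finset.mem_insert_self _ _)) _
          have e3 : (∑ z : Finset (Fin m) × Finset (Fin m),
              if insert (Fin.last m) (up c) = up z.1 then μ₂ z else 0) = 0 :=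
            Finset.sum_eq_zero fun z _ => if_neg (fun h =>
              last_not_mem_up z.1 (by rw [← h]; exact Finset.mem_insert_self _ _))
          rw [e1, e2, e3, W_insert_last, hα1def]
          simp only [mul_zero, add_zero, zero_add]
          field_simp
          ring
        · obtain ⟨c, rfl, hcc⟩ := rep_notMem hlast
          have hc : c.card = ℓ'+1 := by omega
          have e1 : (∑ z : Finset (Fin m) × Finset (Fin m),
              if up c = insert (Fin.last m) (up z.1) then μ₁ z else 0) = 0 :=
            Finset.sum_eq_zero fun z _ => if_neg (fun h =>
              last_not_mem_up c (by rw [h]; exact Finset.mem_insert_self _ _))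
          have e2 : (∑ s : Finset (Fin m), if up c = up s then ν s else 0)
              = W x' c / E m x' (ℓ'+1) := by
            rw [sum_ite_inj up_injective c ν, hνdef]
            dsimp only
            rw [if_pos hc]
          have e3 : (∑ z : Finset (Fin m) × Finset (Fin m),
              if up c = up z.1 then μ₂ z else 0) = W x' c / E m x' (ℓ'+1) := by
            rw [Fintype.sum_prod_type,
              Finset.sum_congr rfl fun z1 _ => sum_ite_const (up c = up z1) _,
              sum_ite_inj up_injective c
                (fun z1 => ∑ z2 : Finset (Fin m), μ₂ (z1, z2)),
              h2margs c hc]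
          rw [e1, e2, e3, W_up, hα1def]
          simp only [mul_zero, add_zero, zero_add]
          rw [hEs1]
          have hden : E m x' (ℓ'+1) + u * E m x' ℓ' ≠ 0 := by positivity
          field_simp
          ring
      · -- second marginal
        intro t₀ ht₀
        have hexp : (∑ S : Finset (Fin (m+1)), μ (S, t₀))
            = α1 * (∑ z : Finset (Fin m) × Finset (Fin m),
                if t₀ = insert (Fin.last m) (up z.2) then μ₁ z else 0)
              + (α2 - α1) * (∑ s : Finset (Fin m),
                if t₀ = insert (Fin.last m) (up s) then ν s else 0)
              + (1 - α2) * (∑ z : Finset (Fin m) × Finset (Fin m),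
                if t₀ = up z.2 then μ₂ z else 0) := by
          rw [hμdef]
          dsimp only
          rw [Finset.sum_add_distrib, Finset.sum_add_distrib,
            ← Finset.mul_sum, ← Finset.mul_sum, ← Finset.mul_sum,
            redS (fun z : Finset (Fin m) × Finset (Fin m) => insert (Fin.last m) (up z.1))
              (fun z => insert (Fin.last m) (up z.2)) μ₁ t₀,
            redS (fun s : Finset (Fin m) => up s)
              (fun s => insert (Fin.last m) (up s)) ν t₀,
            redS (fun z : Finset (Fin m) × Finset (Fin m) => up z.1) (fun z => up z.2) μ₂ t₀]
        rw [hexp]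
        by_cases hlast : Fin.last m ∈ t₀
        · obtain ⟨c, rfl, hcc⟩ := rep_mem hlast
          have hc : c.card = ℓ'+1 := by omega
          have e1 : (∑ z : Finset (Fin m) × Finset (Fin m),
              if insert (Fin.last m) (up c) = insert (Fin.last m) (up z.2)
                then μ₁ z else 0) = W x' c / E m x' (ℓ'+1) := by
            rw [Fintype.sum_prod_type_right,
              Finset.sum_congr rfl fun z2 _ =>
                sum_ite_const (insert (Fin.last m) (up c) = insert (Fin.last m) (up z2)) _,
              sum_ite_inj (fun s t h => insert_last_injective h) c
                (fun z2 => ∑ z1 : Finset (Fin m), μ₁ (z1, z2)),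
              h1margt c hc]
          have e2 : (∑ s : Finset (Fin m),
              if insert (Fin.last m) (up c) = insert (Fin.last m) (up s) then ν s else 0)
              = W x' c / E m x' (ℓ'+1) := by
            rw [sum_ite_inj (fun s t h => insert_last_injective h) c ν, hνdef]
            dsimp only
            rw [if_pos hc]
          have e3 : (∑ z : Finset (Fin m) × Finset (Fin m),
              if insert (Fin.last m) (up c) = up z.2 then μ₂ z else 0) = 0 :=
            Finset.sum_eq_zero fun z _ => if_neg (fun h =>
              last_not_mem_up z.2 (by rw [← h]; exact Finset.mem_insert_self _ _))
          rw [e1, e2, e3, W_insert_last, hα1def, hα2def]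
          simp only [mul_zero, add_zero, zero_add]
          rw [hEs1]
          have hden : E m x' (ℓ'+1) + u * E m x' ℓ' ≠ 0 := by positivity
          field_simp
          ring
        · obtain ⟨c, rfl, hcc⟩ := rep_notMem hlast
          have hc : c.card = ℓ'+2 := by omega
          have e1 : (∑ z : Finset (Fin m) × Finset (Fin m),
              if up c = insert (Fin.last m) (up z.2) then μ₁ z else 0) = 0 :=
            Finset.sum_eq_zero fun z _ => if_neg (fun h =>
              last_not_mem_up c (by rw [h]; exact Finset.mem_insert_self _ _))
          have e2 : (∑ s : Finset (Fin m),
              if up c = insert (Fin.last m) (up s) then ν s else 0) = 0 :=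
            sum_ite_none (fun s h =>
              last_not_mem_up c (by rw [h]; exact Finset.mem_insert_self _ _)) _
          have e3 : (∑ z : Finset (Fin m) × Finset (Fin m),
              if up c = up z.2 then μ₂ z else 0) = W x' c / E m x' (ℓ'+2) := by
            rw [Fintype.sum_prod_type_right,
              Finset.sum_congr rfl fun z2 _ => sum_ite_const (up c = up z2) _,
              sum_ite_inj up_injective c
                (fun z2 => ∑ z1 : Finset (Fin m), μ₂ (z1, z2)),
              h2margt c hc]
          rw [e1, e2, e3, W_up, hα2def]
          simp only [mul_zero, add_zero, zero_add]
          rw [hEs2]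
          have hden : E m x' (ℓ'+2) + u * E m x' (ℓ'+1) ≠ 0 := by positivity
          field_simp
          ring

end Cpl

/-- Coupling of consecutive levels: there is a distribution on pairs
`(c_ℓ, c_{ℓ+1})` with `c_ℓ ⊂ c_{ℓ+1}` a.s., whose marginals are `P` conditioned
on Hamming weight `ℓ` and `ℓ+1` respectively. -/
theorem consecutive_levels_coupling (n ℓ : ℕ) (hℓ : ℓ < n) (p : Fin n → ℝ)
    (hp : ∀ j, 0 < p j ∧ p j < 1) :
    ∃ μ : Finset (Fin n) × Finset (Fin n) → ℝ,
      (∀ x, 0 ≤ μ x) ∧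
      (∑ x : Finset (Fin n) × Finset (Fin n), μ x = 1) ∧
      (∀ x, μ x ≠ 0 → x.1 ⊂ x.2 ∧ x.1.card = ℓ ∧ x.2.card = ℓ + 1) ∧
      (∀ s : Finset (Fin n), s.card = ℓ →
        (∑ t : Finset (Fin n), μ (s, t)) =
          (∏ j, if j ∈ s then p j else 1 - p j) /
            (∑ t ∈ (Finset.univ : Finset (Fin n)).powersetCard ℓ,
              ∏ j, if j ∈ t then p j else 1 - p j)) ∧
      (∀ t : Finset (Fin n), t.card = ℓ + 1 →
        (∑ s : Finset (Fin n), μ (s, t)) =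
          (∏ j, if j ∈ t then p j else 1 - p j) /
            (∑ t' ∈ (Finset.univ : Finset (Fin n)).powersetCard (ℓ + 1),
              ∏ j, if j ∈ t' then p j else 1 - p j)) := by
  classical
  set x : Fin n → ℝ := fun j => p j / (1 - p j) with hxdef
  have hx : ∀ j, 0 < x j := fun j => div_pos (hp j).1 (by linarith [(hp j).2])
  obtain ⟨μ, hnn, hsum, hsupp, hms, hmt⟩ := Cpl.key n x hx ℓ hℓ
  have hC : 0 < ∏ j, (1 - p j) := Finset.prod_pos fun j _ => by linarith [(hp j).2]
  have conv : ∀ s : Finset (Fin n), (∏ j, if j ∈ s then p j else 1 - p j)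
      = Cpl.W x s * ∏ j, (1 - p j) := by
    intro s
    have h1 : Cpl.W x s = ∏ j, (if j ∈ s then x j else 1) := by
      rw [Finset.prod_ite_mem, Finset.univ_inter, Cpl.W]
    rw [h1, ← Finset.prod_mul_distrib]
    refine Finset.prod_congr rfl fun j _ => ?_
    by_cases h : j ∈ s
    · rw [if_pos h, if_pos h, hxdef]
      have : (1 : ℝ) - p j ≠ 0 := by linarith [(hp j).2]
      field_simp
    · rw [if_neg h, if_neg h, one_mul]
  have hden : ∀ k : ℕ, (∑ t ∈ (Finset.univ : Finset (Fin n)).powersetCard k,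
        ∏ j, if j ∈ t then p j else 1 - p j) = Cpl.E n x k * ∏ j, (1 - p j) := by
    intro k
    rw [Cpl.E, Finset.sum_mul]
    exact Finset.sum_congr rfl fun t _ => conv t
  refine ⟨μ, hnn, hsum, hsupp, ?_, ?_⟩
  · intro s hs
    rw [hms s hs, conv s, hden ℓ, mul_div_mul_right _ _ hC.ne']
  · intro t ht
    rw [hmt t ht, conv t, hden (ℓ+1), mul_div_mul_right _ _ hC.ne']
end

section
/- Let q_1,...,q_n > 0 be real numbers, and for ℓ ∈ {0,...,n} let g_ℓ(q) = Σ_{t ⊆ [n], |t|=ℓ} Π_{a∈t} q_a be the ℓ-th elementary symmetric polynomial. For a set s ⊆ [n] with |s| = ℓ and j ∉ s, define h_{s,j} = Σ_{t ⊆ [n], |t|=ℓ, j∉t} (1/|(s ∪ {j}) \ t|) Π_{a∈t} q_a (with h_{s,j} = 1 when ℓ = 0). Then for every s ⊆ [n] with |s| = ℓ < n, Σ_{j ∉ s} q_j · h_{s,j} = g_{ℓ+1}(q). -/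
open Finset

/-- For `|s| = ℓ < n`: `∑_{j ∉ s} q_j · h_{s,j} = g_{ℓ+1}(q)`, where
`h_{s,j} = ∑_{|t|=ℓ, j ∉ t} (1/|(s ∪ {j}) \ t|) ∏_{a ∈ t} q_a` and `g` is the
elementary symmetric polynomial. -/
theorem sum_q_h_eq_g_succ (n ℓ : ℕ) (hℓ : ℓ < n) (q : Fin n → ℝ)
    (hq : ∀ j, 0 < q j) (s : Finset (Fin n)) (hs : s.card = ℓ) :
    (∑ j ∈ sᶜ, q j *
      ∑ t ∈ ((Finset.univ : Finset (Fin n)).powersetCard ℓ).filter (fun t => j ∉ t),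
        (1 / (((insert j s) \ t).card : ℝ)) * ∏ a ∈ t, q a) =
    ∑ t ∈ (Finset.univ : Finset (Fin n)).powersetCard (ℓ + 1), ∏ a ∈ t, q a := by
  have key : ∀ t' ∈ (univ : Finset (Fin n)).powersetCard (ℓ+1),
      (∏ a ∈ t', q a) = ∑ j ∈ t' \ s, (1 / ((t' \ s).card : ℝ)) * ∏ a ∈ t', q a := by
    intro t' ht'
    rw [Finset.mem_powersetCard] at ht'
    have hpos : 0 < (t' \ s).card := by
      rw [Finset.card_pos]
      by_contra h
      rw [Finset.not_nonempty_iff_eq_empty, Finset.sdiff_eq_empty_iff_subset] at h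
      have := Finset.card_le_card h
      omega
    rw [Finset.sum_const, nsmul_eq_mul]
    have : ((t' \ s).card : ℝ) ≠ 0 := by positivity
    field_simp
  rw [Finset.sum_congr rfl key]
  simp_rw [Finset.mul_sum]
  rw [Finset.sum_sigma', Finset.sum_sigma']
  apply Finset.sum_bij' (fun p _ => (⟨insert p.1 p.2, p.1⟩ : Σ _ : Finset (Fin n), Fin n))
    (fun p _ => (⟨p.2, p.1.erase p.2⟩ : Σ _ : Fin n, Finset (Fin n)))
  · rintro ⟨j, t⟩ hp
    simp only [Finset.mem_sigma, Finset.mem_compl, Finset.mem_filter,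
      Finset.mem_powersetCard] at hp ⊢
    obtain ⟨hj, ⟨htsub, htcard⟩, hjt⟩ := hp
    refine ⟨⟨Finset.subset_univ _, ?_⟩, ?_⟩
    · rw [Finset.card_insert_of_notMem hjt, htcard]
    · simp [Finset.mem_sdiff, hj]
  · rintro ⟨t', j⟩ hp
    simp only [Finset.mem_sigma, Finset.mem_powersetCard, Finset.mem_sdiff,
      Finset.mem_compl, Finset.mem_filter] at hp ⊢
    obtain ⟨⟨_, htcard⟩, hjt, hjs⟩ := hp
    refine ⟨hjs, ⟨Finset.subset_univ _, ?_⟩, by simp⟩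
    rw [Finset.card_erase_of_mem hjt, htcard]; omega
  · rintro ⟨j, t⟩ hp
    simp only [Finset.mem_sigma, Finset.mem_compl, Finset.mem_filter,
      Finset.mem_powersetCard] at hp
    obtain ⟨hj, ⟨htsub, htcard⟩, hjt⟩ := hp
    simp [Finset.erase_insert hjt]
  · rintro ⟨t', j⟩ hp
    simp only [Finset.mem_sigma, Finset.mem_powersetCard, Finset.mem_sdiff] at hp
    obtain ⟨⟨_, htcard⟩, hjt, hjs⟩ := hp
    simp [Finset.insert_erase hjt]
  · rintro ⟨j, t⟩ hp
    simp only [Finset.mem_sigma, Finset.mem_compl, Finset.mem_filter,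
      Finset.mem_powersetCard] at hp
    obtain ⟨hj, ⟨htsub, htcard⟩, hjt⟩ := hp
    have hjs : j ∉ s := by simpa using hj
    have hcard : (insert j s \ t).card = (insert j t \ s).card := by
      rw [Finset.insert_sdiff_of_notMem _ hjt,
        Finset.insert_sdiff_of_notMem _ hjs,
        Finset.card_insert_of_notMem (by simp [hjs]),
        Finset.card_insert_of_notMem (by simp [hjt]),
        Finset.card_sdiff_comm (by rw [hs, htcard])]
    simp only
    rw [Finset.prod_insert hjt, hcard]
    ring
end

section
/- Let q_1,...,q_n > 0, let g_ℓ(q) be the ℓ-th elementary symmetric polynomial in q, and for |s| = ℓ and j ∉ s let h_{s,j} = Σ_{t ⊆ [n], |t|=ℓ, j∉t} (1/|(s ∪ {j}) \ t|) Π_{a∈t} q_a. Then for every set s' ⊆ [n] with |s'| = ℓ+1, we have Σ_{j ∈ s'} h_{s'\{j}, j} = g_ℓ(q). -/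
open Finset

/-- For `|s'| = ℓ + 1`: `∑_{j ∈ s'} h_{s'\{j}, j} = g_ℓ(q)`, where
`h_{s,j} = ∑_{|t|=ℓ, j ∉ t} (1/|(s ∪ {j}) \ t|) ∏_{a ∈ t} q_a` and `g_ℓ` is the
`ℓ`-th elementary symmetric polynomial. -/
theorem sum_h_eq_g (n ℓ : ℕ) (q : Fin n → ℝ) (hq : ∀ j, 0 < q j)
    (s' : Finset (Fin n)) (hs' : s'.card = ℓ + 1) :
    (∑ j ∈ s',
      ∑ t ∈ ((Finset.univ : Finset (Fin n)).powersetCard ℓ).filter (fun t => j ∉ t),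
        (1 / (((insert j (s' \ {j})) \ t).card : ℝ)) * ∏ a ∈ t, q a) =
    ∑ t ∈ (Finset.univ : Finset (Fin n)).powersetCard ℓ, ∏ a ∈ t, q a := by
  have hrw : ∀ j ∈ s',
      (∑ t ∈ ((Finset.univ : Finset (Fin n)).powersetCard ℓ).filter (fun t => j ∉ t),
        (1 / (((insert j (s' \ {j})) \ t).card : ℝ)) * ∏ a ∈ t, q a)
      = ∑ t ∈ (Finset.univ : Finset (Fin n)).powersetCard ℓ,
          if j ∉ t then (1 / ((s' \ t).card : ℝ)) * ∏ a ∈ t, q a else 0 := by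
    intro j hj
    rw [Finset.sum_filter]
    refine Finset.sum_congr rfl fun t ht => ?_
    congr 3
    rw [Finset.sdiff_singleton_eq_erase, Finset.insert_erase hj]
  rw [Finset.sum_congr rfl hrw, Finset.sum_comm]
  refine Finset.sum_congr rfl fun t ht => ?_
  rw [← Finset.sum_filter, ← Finset.sdiff_eq_filter, Finset.sum_const, nsmul_eq_mul]
  have hcard : ((s' \ t).card : ℝ) ≠ 0 := by
    have htc : t.card = ℓ := (Finset.mem_powersetCard.mp ht).2
    have : 0 < (s' \ t).card := by
      have h1 : (s' ∩ t).card ≤ t.card := Finset.card_le_card (Finset.inter_subset_right)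
      have := Finset.card_sdiff_add_card_inter s' t
      omega
    exact_mod_cast this.ne'
  field_simp
end

section
/- There is a constant C₁ > 0 such that for any independent random variables z_1,...,z_n where z_j takes value 1 with probability p_j and value -1 with probability 1-p_j, and for any integer t, the probability that z_1 + ... + z_n = t is at most C₁/σ, where σ² = Σ_j p_j(1-p_j). -/
/-!
Fourier inversion on `ℤ` writes `Pr[z₁ + ⋯ + zₙ = t]` as `(2π)⁻¹ ∫_{-π}^{π} φ(θ) e^{-itθ} dθ`, where
`φ = ∏ⱼ φⱼ` and `φⱼ(θ) = pⱼ e^{iθ} + (1 - pⱼ) e^{-iθ}`. Since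
`|φⱼ(θ)|² = 1 - 4 pⱼ (1 - pⱼ) sin² θ ≤ exp (-4 pⱼ (1 - pⱼ) sin² θ)`, we get
`|φ(θ)| ≤ exp (-2σ² sin² θ)`, and Jordan's inequality `sin θ ≥ 2θ/π` on `[0, π/2]` bounds the
integral of the latter by a Gaussian integral of order `1/σ`.
-/

open Finset MeasureTheory Complex
open scoped Real

theorem integral_cexp_int_mul_I (k : ℤ) :
    ∫ θ in (-π)..π, cexp (k * θ * I) = if k = 0 then ((2 * π : ℝ) : ℂ) else 0 := by
  split_ifs with hk
  · simp [hk, two_mul]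
  have hkI : (k : ℂ) * I ≠ 0 := by simp [hk, I_ne_zero]
  have hperiodic : cexp (k * I * π) = cexp (k * I * (-π : ℝ)) := by
    rw [show (k : ℂ) * I * (-π : ℝ) = k * I * π - k * (2 * π * I) by push_cast; ring,
      Complex.exp_sub, exp_int_mul_two_pi_mul_I, div_one]
  simp_rw [mul_right_comm _ _ I]
  rw [integral_exp_mul_complex hkI, hperiodic, sub_self, zero_div]

theorem two_pi_mul_sum_filter_eq_integral {α : Type*} (s : Finset α) (x : α → ℤ) (w : α → ℂ)
    (t : ℤ) :
    ((2 * π : ℝ) : ℂ) * ∑ a ∈ s with x a = t, w a =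
      ∫ θ in (-π)..π, (∑ a ∈ s, w a * cexp (x a * θ * I)) * cexp (-t * θ * I) := by
  have hshift : ∀ θ : ℝ, (∑ a ∈ s, w a * cexp (x a * θ * I)) * cexp (-t * θ * I) =
      ∑ a ∈ s, w a * cexp ((x a - t : ℤ) * θ * I) := fun θ => by
    rw [sum_mul]
    refine sum_congr rfl fun a _ => ?_
    rw [mul_assoc, ← Complex.exp_add]
    push_cast
    ring_nf
  simp_rw [hshift]
  rw [intervalIntegral.integral_finsetSum fun a _ =>
      (by fun_prop : Continuous _).intervalIntegrable _ _, sum_filter, mul_sum]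
  refine sum_congr rfl fun a _ => ?_
  simp only [intervalIntegral.integral_const_mul, integral_cexp_int_mul_I, sub_eq_zero]
  split_ifs <;> ring

noncomputable def pmOneCharFun (p θ : ℝ) : ℂ := p * cexp (θ * I) + (1 - p) * cexp (-θ * I)

theorem pmOneCharFun_eq_cos_add_sin_mul_I (p θ : ℝ) :
    pmOneCharFun p θ = Real.cos θ + ((2 * p - 1) * Real.sin θ : ℝ) * I := by
  rw [pmOneCharFun, exp_mul_I, show -(θ : ℂ) * I = (-θ : ℝ) * I by push_cast; ring, exp_mul_I]
  push_cast
  rw [Complex.cos_neg, Complex.sin_neg]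
  ring

theorem norm_pmOneCharFun_sq (p θ : ℝ) :
    ‖pmOneCharFun p θ‖ ^ 2 = 1 - 4 * (p * (1 - p)) * Real.sin θ ^ 2 := by
  rw [pmOneCharFun_eq_cos_add_sin_mul_I, Complex.sq_norm, normSq_add_mul_I]
  linear_combination Real.cos_sq_add_sin_sq θ

theorem norm_pmOneCharFun_le (p θ : ℝ) :
    ‖pmOneCharFun p θ‖ ≤ Real.exp (-(2 * (p * (1 - p))) * Real.sin θ ^ 2) := by
  refine (pow_le_pow_iff_left₀ (norm_nonneg _) (Real.exp_pos _).le two_ne_zero).mp ?_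
  rw [norm_pmOneCharFun_sq, ← Real.exp_nat_mul, Nat.cast_ofNat]
  linarith [Real.add_one_le_exp (2 * (-(2 * (p * (1 - p))) * Real.sin θ ^ 2))]

theorem norm_prod_pmOneCharFun_le {ι : Type*} (s : Finset ι) (p : ι → ℝ) (θ : ℝ) :
    ‖∏ j ∈ s, pmOneCharFun (p j) θ‖ ≤
      Real.exp (-(2 * ∑ j ∈ s, p j * (1 - p j)) * Real.sin θ ^ 2) := by
  rw [norm_prod, mul_sum, ← sum_neg_distrib, sum_mul, Real.exp_sum]
  exact prod_le_prod (fun _ _ => norm_nonneg _) fun j _ => norm_pmOneCharFun_le (p j) θ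

theorem prod_pmOneCharFun_eq_sum {ι : Type*} [Fintype ι] [DecidableEq ι] (p : ι → ℝ) (θ : ℝ) :
    ∏ j, pmOneCharFun (p j) θ =
      ∑ z : ι → Bool, ((∏ j, if z j then p j else 1 - p j : ℝ) : ℂ) *
        cexp ((∑ j, if z j then (1 : ℤ) else -1 : ℤ) * θ * I) := by
  have hfactor : ∀ j, pmOneCharFun (p j) θ =
      ∑ b : Bool, ((if b then p j else 1 - p j : ℝ) : ℂ) *
        cexp ((if b then (1 : ℤ) else -1 : ℤ) * θ * I) := fun j => by
    simp [pmOneCharFun]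
  simp_rw [hfactor, Fintype.prod_sum, prod_mul_distrib, ← Complex.exp_sum, ← sum_mul]
  push_cast
  rfl

theorem integral_neg_pi_pi_eq_four_mul {f : ℝ → ℝ} (hf : Continuous f)
    (h_neg : ∀ x, f (-x) = f x) (h_pi_sub : ∀ x, f (π - x) = f x) :
    ∫ x in (-π)..π, f x = 4 * ∫ x in 0..π / 2, f x := by
  have hf_int : ∀ a b : ℝ, IntervalIntegrable f volume a b := hf.intervalIntegrable
  have hleft : ∫ x in (-π)..0, f x = ∫ x in 0..π, f x := by
    simpa [h_neg] using (intervalIntegral.integral_comp_neg (a := 0) (b := π) f).symm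
  have hright : ∫ x in π / 2..π, f x = ∫ x in 0..π / 2, f x := by
    have := intervalIntegral.integral_comp_sub_left (a := 0) (b := π / 2) f π
    rw [sub_zero, sub_half] at this
    simpa [h_pi_sub] using this.symm
  rw [← intervalIntegral.integral_add_adjacent_intervals (hf_int _ 0) (hf_int 0 _), hleft,
    ← intervalIntegral.integral_add_adjacent_intervals (hf_int 0 (π / 2)) (hf_int _ π), hright]
  ring

theorem integral_exp_neg_mul_sin_sq_le {c : ℝ} (hc : 0 < c) :
    ∫ x in (-π)..π, Real.exp (-c * Real.sin x ^ 2) ≤ π * √(π / c) := by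
  set b := 4 * c / π ^ 2 with hb
  have hJordan : ∀ x ∈ Set.Icc 0 (π / 2),
      Real.exp (-c * Real.sin x ^ 2) ≤ Real.exp (-b * x ^ 2) := fun x hx => by
    have hsq : (2 / π * x) ^ 2 ≤ Real.sin x ^ 2 :=
      pow_le_pow_left₀ (by have := hx.1; positivity) (Real.mul_le_sin hx.1 hx.2) 2
    rw [Real.exp_le_exp, hb]
    calc -(4 * c / π ^ 2) * x ^ 2 = -c * (2 / π * x) ^ 2 := by ring
      _ ≥ -c * Real.sin x ^ 2 := by nlinarith
  rw [integral_neg_pi_pi_eq_four_mul (by fun_prop) (by simp) (by simp)]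
  calc 4 * ∫ x in 0..π / 2, Real.exp (-c * Real.sin x ^ 2)
      ≤ 4 * ∫ x in 0..π / 2, Real.exp (-b * x ^ 2) := by
        gcongr
        exact intervalIntegral.integral_mono_on (by positivity)
          ((by fun_prop : Continuous _).intervalIntegrable _ _)
          ((by fun_prop : Continuous _).intervalIntegrable _ _) hJordan
    _ ≤ 4 * ∫ x in Set.Ioi 0, Real.exp (-b * x ^ 2) := by
        rw [intervalIntegral.integral_of_le (by positivity)]
        refine mul_le_mul_of_nonneg_left ?_ zero_le_four
        exact setIntegral_mono_set (integrable_exp_neg_mul_sq (by positivity)).integrableOn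
          (.of_forall fun x => (Real.exp_pos _).le) (.of_forall Set.Ioc_subset_Ioi_self)
    _ = π * √(π / c) := by
        rw [integral_gaussian_Ioi, hb, show π / (4 * c / π ^ 2) = (π / 2) ^ 2 * (π / c) by
          field_simp; ring, Real.sqrt_mul (by positivity), Real.sqrt_sq (by positivity)]
        ring

theorem sum_filter_sum_sign_eq_le {ι : Type*} [Fintype ι] [DecidableEq ι] (p : ι → ℝ)
    (hσ : 0 < ∑ j, p j * (1 - p j)) (t : ℤ) :
    ∑ z ∈ (univ : Finset (ι → Bool)).filter (fun z => (∑ j, if z j then (1 : ℤ) else -1) = t),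
        ∏ j, (if z j then p j else 1 - p j) ≤
      √(π / 8) / √(∑ j, p j * (1 - p j)) := by
  set σ2 := ∑ j, p j * (1 - p j)
  set S := ∑ z ∈ (univ : Finset (ι → Bool)).filter
    (fun z => (∑ j, if z j then (1 : ℤ) else -1) = t), ∏ j, (if z j then p j else 1 - p j)
  have hfourier : ((2 * π : ℝ) : ℂ) * S =
      ∫ θ in (-π)..π, (∏ j, pmOneCharFun (p j) θ) * cexp (-t * θ * I) := by
    simp_rw [prod_pmOneCharFun_eq_sum, S, ofReal_sum]
    exact two_pi_mul_sum_filter_eq_integral _ _ _ t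
  have hintegral : ‖∫ θ in (-π)..π, (∏ j, pmOneCharFun (p j) θ) * cexp (-t * θ * I)‖ ≤
      π * √(π / (2 * σ2)) := by
    refine (intervalIntegral.norm_integral_le_of_norm_le (by linarith [Real.pi_pos])
      (.of_forall fun θ _ => ?_) ((by fun_prop : Continuous fun θ : ℝ =>
        Real.exp (-(2 * σ2) * Real.sin θ ^ 2)).intervalIntegrable _ _)).trans
      (integral_exp_neg_mul_sin_sq_le (by positivity))
    rw [norm_mul, show -(t : ℂ) * θ * I = ((-t * θ : ℝ) : ℂ) * I by push_cast; ring,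
      norm_exp_ofReal_mul_I, mul_one]
    exact norm_prod_pmOneCharFun_le univ p θ
  have hconst : π * √(π / (2 * σ2)) = 2 * π * (√(π / 8) / √σ2) := by
    rw [← Real.sqrt_div' _ hσ.le, show π / (2 * σ2) = 2 ^ 2 * (π / 8 / σ2) by field_simp; ring,
      Real.sqrt_mul (by positivity), Real.sqrt_sq (by positivity)]
    ring
  refine le_of_mul_le_mul_left ?_ (by positivity : 0 < 2 * π)
  calc 2 * π * S ≤ ‖((2 * π : ℝ) : ℂ) * S‖ := by
        rw [← ofReal_mul, norm_real, Real.norm_eq_abs]; exact le_abs_self _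
    _ ≤ 2 * π * (√(π / 8) / √σ2) := by rw [hfourier, ← hconst]; exact hintegral

/-- Anti-concentration for sums of independent ±1 random variables:
`Pr[z₁ + ⋯ + zₙ = t] ≤ C₁/σ` where `Pr[z_j = 1] = p_j`, `Pr[z_j = -1] = 1 - p_j`
and `σ² = ∑_j p_j (1 - p_j)`. -/
theorem anticoncentration_pm_one :
    ∃ C : ℝ, 0 < C ∧ ∀ (n : ℕ) (p : Fin n → ℝ),
      (∀ j, 0 ≤ p j ∧ p j ≤ 1) →
      0 < ∑ j, p j * (1 - p j) →
      ∀ t : ℤ,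
        (∑ z ∈ (Finset.univ : Finset (Fin n → Bool)).filter
            (fun z => (∑ j, if z j then (1 : ℤ) else -1) = t),
          ∏ j, if z j then p j else 1 - p j) ≤
        C / Real.sqrt (∑ j, p j * (1 - p j)) :=
  ⟨√(π / 8), by positivity, fun _ p _ hσ t => sum_filter_sum_sign_eq_le p hσ t⟩
end

section
/- There is a constant C₀ > 1 such that for every unit vector u ∈ ℝⁿ (‖u‖₂ = 1), if x is uniformly distributed in {-1,1}ⁿ, then Pr[1/C₀ ≤ |⟨x,u⟩| ≤ C₀] ≥ 1/C₀. -/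
open Finset

lemma cube_sum_succ {n : ℕ} (f : (Fin (n+1) → Bool) → ℝ) :
    ∑ x : Fin (n+1) → Bool, f x
      = ∑ y : Fin n → Bool, (f (Fin.cons true y) + f (Fin.cons false y)) := by
  rw [← Fintype.sum_equiv (Fin.consEquiv fun _ => Bool)
      (fun p => f (Fin.cons p.1 p.2)) f (fun p => rfl)]
  rw [Fintype.sum_prod_type_right]
  simp [add_comm]

lemma cube_S_cons {n : ℕ} (u : Fin (n+1) → ℝ) (b : Bool) (y : Fin n → Bool) :
    (∑ j, (if (Fin.cons b y : Fin (n+1) → Bool) j then (1:ℝ) else -1) * u j)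
      = (if b then (1:ℝ) else -1) * u 0
        + ∑ j, (if y j then (1:ℝ) else -1) * u j.succ := by
  rw [Fin.sum_univ_succ]; simp

lemma cube_m2 : ∀ (n : ℕ) (u : Fin n → ℝ),
    ∑ x : Fin n → Bool, (∑ j, (if x j then (1:ℝ) else -1) * u j)^2
      = 2^n * ∑ j, u j ^ 2
  | 0, u => by simp
  | (n+1), u => by
    rw [cube_sum_succ]
    simp only [cube_S_cons, Bool.false_eq_true, if_true, if_false, one_mul, neg_one_mul]
    have key : ∀ y : Fin n → Bool,
        (u 0 + ∑ j, (if y j then (1:ℝ) else -1) * u j.succ)^2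
          + (-(u 0) + ∑ j, (if y j then (1:ℝ) else -1) * u j.succ)^2
        = 2 * u 0 ^ 2 + 2 * (∑ j, (if y j then (1:ℝ) else -1) * u j.succ)^2 := by
      intro y; ring
    rw [Finset.sum_congr rfl fun y _ => key y, Finset.sum_add_distrib,
      Finset.sum_const, ← Finset.mul_sum, cube_m2 n (fun j => u j.succ),
      Fin.sum_univ_succ]
    have hc : (Finset.univ : Finset (Fin n → Bool)).card = 2^n := by
      simp [Finset.card_univ]
    rw [hc]
    push_cast
    ring

lemma cube_m4 : ∀ (n : ℕ) (u : Fin n → ℝ),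
    ∑ x : Fin n → Bool, (∑ j, (if x j then (1:ℝ) else -1) * u j)^4
      ≤ 3 * 2^n * (∑ j, u j ^ 2)^2
  | 0, u => by simp
  | (n+1), u => by
    rw [cube_sum_succ]
    simp only [cube_S_cons, Bool.false_eq_true, if_true, if_false, one_mul, neg_one_mul]
    have key : ∀ y : Fin n → Bool,
        (u 0 + ∑ j, (if y j then (1:ℝ) else -1) * u j.succ)^4
          + (-(u 0) + ∑ j, (if y j then (1:ℝ) else -1) * u j.succ)^4
        = 2 * (∑ j, (if y j then (1:ℝ) else -1) * u j.succ)^4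
          + 12 * (u 0)^2 * (∑ j, (if y j then (1:ℝ) else -1) * u j.succ)^2
          + 2 * (u 0)^4 := by
      intro y; ring
    rw [Finset.sum_congr rfl fun y _ => key y, Finset.sum_add_distrib,
      Finset.sum_add_distrib, ← Finset.mul_sum, ← Finset.mul_sum,
      Finset.sum_const, nsmul_eq_mul]
    have h4 := cube_m4 n (fun j => u j.succ)
    have h2 := cube_m2 n (fun j => u j.succ)
    rw [h2, Fin.sum_univ_succ]
    have hcard : ((Finset.univ : Finset (Fin n → Bool)).card : ℝ) = 2^n := by
      simp [Finset.card_univ]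
    rw [hcard]
    have hSig : (0:ℝ) ≤ ∑ j : Fin n, (u j.succ) ^ 2 :=
      Finset.sum_nonneg fun j _ => sq_nonneg _
    have hN : (0:ℝ) < 2^n := by positivity
    have hpow : (2:ℝ)^(n+1) = 2 * 2^n := by ring
    rw [hpow]
    nlinarith [h4, sq_nonneg (u 0), sq_nonneg ((u 0)^2), mul_nonneg hN.le hSig,
      mul_nonneg hN.le (sq_nonneg ((u 0)^2)),
      mul_nonneg (mul_nonneg hN.le (sq_nonneg (u 0))) hSig]

lemma cube_main (n : ℕ) (u : Fin n → ℝ) (hu : (∑ j, (u j) ^ 2) = 1)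
    (A : Finset (Fin n → Bool))
    (hA : ∀ x, x ∈ A ↔ ((1:ℝ)/12 ≤ |∑ j, (if x j then (1 : ℝ) else -1) * u j| ∧
        |∑ j, (if x j then (1 : ℝ) else -1) * u j| ≤ 12)) :
    (1 : ℝ) / 12 ≤ (A.card : ℝ) / 2 ^ n := by
  set S : (Fin n → Bool) → ℝ := fun x => ∑ j, (if x j then (1 : ℝ) else -1) * u j with hSdef
  have hN : (0:ℝ) < 2^n := by positivity
  have hT : ∑ x : Fin n → Bool, (S x)^2 = 2^n := by
    rw [hSdef]; rw [cube_m2 n u, hu, mul_one]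
  have hQ : ∑ x : Fin n → Bool, (S x)^4 ≤ 3 * 2^n := by
    have := cube_m4 n u
    rw [hu] at this
    simpa only [one_pow, mul_one] using this
  have hsplit : ∑ x ∈ (Finset.univ \ A), (S x)^2 + ∑ x ∈ A, (S x)^2
      = ∑ x : Fin n → Bool, (S x)^2 :=
    Finset.sum_sdiff (Finset.subset_univ A)
  have hout : ∑ x ∈ (Finset.univ \ A), (S x)^2
      ≤ ∑ x ∈ (Finset.univ \ A), ((1:ℝ)/144 + (S x)^4 / 144) := by
    apply Finset.sum_le_sum
    intro x hx
    rw [Finset.mem_sdiff] at hx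
    have hx' : ¬((1:ℝ)/12 ≤ |S x| ∧ |S x| ≤ 12) := fun hc => hx.2 ((hA x).mpr hc)
    rw [not_and_or, not_le, not_le] at hx'
    rcases hx' with h | h
    · nlinarith [sq_abs (S x), abs_nonneg (S x), sq_nonneg ((S x)^2)]
    · have h2 : (144:ℝ) ≤ (S x)^2 := by nlinarith [sq_abs (S x), abs_nonneg (S x)]
      have h3 : (0:ℝ) ≤ (S x)^2 * ((S x)^2 - 144) :=
        mul_nonneg (sq_nonneg _) (by linarith)
      nlinarith [h3]
  have hcard_out : ((Finset.univ \ A).card : ℝ) ≤ 2^n := by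
    have := Finset.card_le_card (Finset.subset_univ (Finset.univ \ A))
    have hcu : ((Finset.univ : Finset (Fin n → Bool)).card : ℝ) = 2^n := by
      simp [Finset.card_univ]
    calc ((Finset.univ \ A).card : ℝ) ≤ ((Finset.univ : Finset (Fin n → Bool)).card : ℝ) := by
          exact_mod_cast this
      _ = 2^n := hcu
  have hq_out : ∑ x ∈ (Finset.univ \ A), (S x)^4 ≤ 3 * 2^n := by
    refine le_trans (Finset.sum_le_sum_of_subset_of_nonneg (Finset.subset_univ _)
      (fun x _ _ => by positivity)) hQ
  have hout2 : ∑ x ∈ (Finset.univ \ A), ((1:ℝ)/144 + (S x)^4 / 144)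
      ≤ 2^n / 144 + (3 * 2^n) / 144 := by
    rw [Finset.sum_add_distrib, Finset.sum_const, nsmul_eq_mul]
    have : ∑ x ∈ (Finset.univ \ A), (S x)^4 / 144
        = (∑ x ∈ (Finset.univ \ A), (S x)^4) / 144 := by
      rw [Finset.sum_div]
    rw [this]
    linarith [hcard_out, hq_out]
  -- combine
  have hin : (2:ℝ)^n * (35/36) ≤ ∑ x ∈ A, (S x)^2 := by
    have : ∑ x ∈ (Finset.univ \ A), (S x)^2 ≤ 2^n / 144 + (3 * 2^n) / 144 :=
      le_trans hout hout2
    linarith [hsplit, hT, this]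
  have hCS : (∑ x ∈ A, (S x)^2)^2 ≤ (A.card : ℝ) * (3 * 2^n) := by
    have hq_in : ∑ x ∈ A, ((S x)^2)^2 ≤ 3 * 2^n := by
      refine le_trans ?_ hQ
      refine le_trans (le_of_eq ?_) (Finset.sum_le_sum_of_subset_of_nonneg
        (Finset.subset_univ A) (fun x _ _ => by positivity))
      exact Finset.sum_congr rfl fun x _ => by ring
    calc (∑ x ∈ A, (S x)^2)^2 ≤ (A.card : ℝ) * ∑ x ∈ A, ((S x)^2)^2 :=
          sq_sum_le_card_mul_sum_sq
      _ ≤ (A.card : ℝ) * (3 * 2^n) :=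
          mul_le_mul_of_nonneg_left hq_in (by positivity)
  have hfinal : (1:ℝ)/12 * 2^n ≤ (A.card : ℝ) := by
    nlinarith [hin, hCS, hN, sq_nonneg ((2:ℝ)^n), Finset.sum_nonneg
      (fun x (_ : x ∈ A) => sq_nonneg (S x))]
  rw [le_div_iff₀ hN]
  linarith [hfinal]



/-- There is `C₀ > 1` so that for every unit vector `u ∈ ℝⁿ` and uniformly random
`x ∈ {-1,1}ⁿ`, `Pr[1/C₀ ≤ |⟨x,u⟩| ≤ C₀] ≥ 1/C₀`. -/
theorem paley_zygmund_cube :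
    ∃ C : ℝ, 1 < C ∧ ∀ (n : ℕ) (u : Fin n → ℝ), (∑ j, (u j) ^ 2) = 1 →
      (1 : ℝ) / C ≤
        ((Finset.univ : Finset (Fin n → Bool)).filter (fun x =>
            1 / C ≤ |∑ j, (if x j then (1 : ℝ) else -1) * u j| ∧
            |∑ j, (if x j then (1 : ℝ) else -1) * u j| ≤ C)).card / 2 ^ n := by
  refine ⟨12, by norm_num, fun n u hu => ?_⟩
  exact cube_main n u hu _ (fun x => by simp [Finset.mem_filter])
end

section
/- There is a constant C₃ > 1 such that the following holds. Suppose v ∈ ℝⁿ can be partitioned into S blocks v⁽¹⁾,...,v⁽ᔆ⁾ with ‖v⁽ˢ⁾‖₂ ≥ 4C₀²‖v⁽ˢ⁺¹⁾‖₂ for all s < S (where C₀ is the constant from the Paley–Zygmund claim), and let δ = ‖v⁽ᔆ⁾‖₂ ≥ 0 be the smallest scale. Then for every a ∈ ℝ and b ≥ 2, for uniformly random x ∈ {-1,1}ⁿ, Pr[|⟨x,v⟩ - a| < bδ] < C₃ exp(-S/C₃ + C₃ log b). -/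
/-!
Let `Q(X, r) = sup_a Pr[|X - a| < r]`. Adding an independent summand never increases `Q`. If
the independent summand `Y` is symmetric and `r ≤ |Y| ≤ R - r` with probability at least `p`,
then on that event the windows of radius `r` around `a - Y` and `a + Y` are disjoint and lie in
the window of radius `R` around `a`, so `Q(X + Y, r) ≤ (1 - p/2) Q(X, R)`.
By Paley–Zygmund, `|⟨x⁽ᵏ⁾, v⁽ᵏ⁾⟩|` lies between `‖v⁽ᵏ⁾‖/C₀` and `C₀‖v⁽ᵏ⁾‖` with probability at
least `1/C₀`, and the gap `4C₀²` between consecutive scales makes `r = ‖v⁽ᵏ⁺¹⁾‖/(2C₀)`,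
`R = ‖v⁽ᵏ⁾‖/(2C₀)` admissible. Iterating over the blocks,
`Q(⟨x, v⁽⁰⁾ + ⋯ + v⁽ᵏ⁾⟩, ‖v⁽ᵏ⁾‖/(2C₀)) ≤ (1 - 1/(2C₀))ᵏ`. Finally `bδ ≤ ‖v⁽ᴷ⁾‖/(2C₀)` once
`(4C₀²)^(S-1-K) ≥ 2C₀b`, i.e. for `K ≈ S - log b`, and the blocks after `K` cannot increase `Q`.
-/

open Finset
open scoped BigOperators

section SmallBall

variable {α β γ : Type*} [Fintype α] [Fintype β] [Fintype γ]

lemma Fintype.expect_prod_fst [Nonempty γ] (F : β → ℝ) : 𝔼 q : β × γ, F q.1 = 𝔼 y, F y := by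
  rw [← univ_product_univ, expect_product]
  exact Finset.expect_congr rfl fun y _ => Fintype.expect_const (F y)

noncomputable def smallBallProb (f : α → ℝ) (a r : ℝ) : ℝ :=
  𝔼 x, if |f x - a| < r then 1 else 0

lemma smallBallProb_nonneg (f : α → ℝ) (a r : ℝ) : 0 ≤ smallBallProb f a r :=
  expect_nonneg fun _ _ => by split_ifs <;> norm_num

lemma smallBallProb_le_one [Nonempty α] (f : α → ℝ) (a r : ℝ) : smallBallProb f a r ≤ 1 :=
  expect_le univ_nonempty fun _ _ => by split_ifs <;> norm_num

lemma smallBallProb_of_nonpos (f : α → ℝ) (a : ℝ) {r : ℝ} (hr : r ≤ 0) :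
    smallBallProb f a r = 0 :=
  expect_eq_zero fun _ _ => if_neg (hr.trans (abs_nonneg _)).not_gt

lemma smallBallProb_mono (f : α → ℝ) (a : ℝ) {r R : ℝ} (hrR : r ≤ R) :
    smallBallProb f a r ≤ smallBallProb f a R :=
  expect_le_expect fun x _ => by
    split_ifs with h1 h2 <;> norm_num
    exact h2 (h1.trans_le hrR)

lemma smallBallProb_comp_equiv (e : β ≃ α) (f : α → ℝ) (a r : ℝ) :
    smallBallProb (f ∘ e) a r = smallBallProb f a r :=
  Fintype.expect_equiv e _ _ fun _ => rfl

lemma smallBallProb_add_prod (g : β → ℝ) (h : γ → ℝ) (a r : ℝ) :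
    smallBallProb (fun q : β × γ => g q.1 + h q.2) a r = 𝔼 y, smallBallProb h (a - g y) r := by
  rw [smallBallProb, ← univ_product_univ, expect_product]
  simp only [smallBallProb, sub_sub_eq_add_sub, add_comm (g _)]

lemma smallBallProb_add_le [Nonempty β] (g : β → ℝ) {h : γ → ℝ} {r D : ℝ}
    (hD : ∀ c, smallBallProb h c r ≤ D) (a : ℝ) :
    smallBallProb (fun q : β × γ => g q.1 + h q.2) a r ≤ D := by
  rw [smallBallProb_add_prod]
  exact expect_le univ_nonempty fun y _ => hD _

lemma smallBallProb_sub_add_smallBallProb_add_le (h : γ → ℝ) {a c r R : ℝ} (hc : r ≤ |c|)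
    (hcR : |c| + r ≤ R) :
    smallBallProb h (a - c) r + smallBallProb h (a + c) r ≤ smallBallProb h a R := by
  rw [smallBallProb, smallBallProb, ← expect_add_distrib]
  refine expect_le_expect fun z _ => ?_
  have hsub : |h z - a| ≤ |h z - (a - c)| + |c| :=
    (abs_sub_le (h z) (a - c) a).trans_eq (by rw [sub_sub_cancel_left, abs_neg])
  have hadd : |h z - a| ≤ |h z - (a + c)| + |c| :=
    (abs_sub_le (h z) (a + c) a).trans_eq (by rw [add_sub_cancel_left])
  have hboth : |c| + |c| ≤ |h z - (a - c)| + |h z - (a + c)| := by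
    calc |c| + |c| = |(a + c) - (a - c)| := by
          rw [show a + c - (a - c) = 2 * c by ring, abs_mul, abs_two]; ring
      _ ≤ |(a + c) - h z| + |h z - (a - c)| := abs_sub_le _ _ _
      _ = _ := by rw [abs_sub_comm (a + c), add_comm]
  split_ifs <;> norm_num <;> (try simp only [not_lt] at *) <;> linarith

lemma smallBallProb_add_le_of_symm [Nonempty β] {g : β → ℝ} (σ : Equiv.Perm β)
    (hσ : ∀ y, g (σ y) = -g y) {h : γ → ℝ} {p r R D : ℝ} (hrR : r ≤ R)
    (hD : ∀ c, smallBallProb h c R ≤ D)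
    (hp : p ≤ 𝔼 y, if r ≤ |g y| ∧ |g y| + r ≤ R then 1 else 0) (a : ℝ) :
    smallBallProb (fun q : β × γ => g q.1 + h q.2) a r ≤ (1 - p / 2) * D := by
  have hD0 : 0 ≤ D := (smallBallProb_nonneg h 0 R).trans (hD 0)
  -- pairing `y` with `σ y` puts the two windows `a ∓ g y` side by side
  have hflip : 𝔼 y, smallBallProb h (a + g y) r = 𝔼 y, smallBallProb h (a - g y) r :=
    Fintype.expect_equiv σ _ _ fun y => by rw [hσ, sub_neg_eq_add]
  have hpair : ∀ y, smallBallProb h (a - g y) r + smallBallProb h (a + g y) r ≤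
      2 * D - D * (if r ≤ |g y| ∧ |g y| + r ≤ R then 1 else 0) := by
    intro y
    split_ifs with hy
    · linarith [smallBallProb_sub_add_smallBallProb_add_le h (a := a) hy.1 hy.2, hD a]
    · linarith [(smallBallProb_mono h (a - g y) hrR).trans (hD _),
        (smallBallProb_mono h (a + g y) hrR).trans (hD _)]
  have hmean := expect_le_expect (s := univ) fun y _ => hpair y
  rw [expect_add_distrib, hflip, expect_sub_distrib, Fintype.expect_const, ← mul_expect]
    at hmean
  rw [smallBallProb_add_prod]
  nlinarith [mul_le_mul_of_nonneg_left hp hD0]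

end SmallBall

section SignCube

variable {ι : Type*} [Fintype ι]

def signSum (v : ι → ℝ) (x : ι → Bool) : ℝ :=
  ∑ i, (if x i then 1 else -1) * v i

@[simp]
lemma signSum_zero (x : ι → Bool) : signSum (fun _ => 0) x = 0 := by
  simp [signSum]

lemma signSum_not (v : ι → ℝ) (x : ι → Bool) : signSum v (fun i => !x i) = -signSum v x := by
  simp only [signSum, ← sum_neg_distrib]
  exact sum_congr rfl fun i _ => by by_cases h : x i <;> simp [h]

lemma signSum_symm_piEquivPiSubtypeProd (p : ι → Prop) [DecidablePred p] (v : ι → ℝ)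
    (y : {i // p i} → Bool) (z : {i // ¬p i} → Bool) :
    signSum v ((Equiv.piEquivPiSubtypeProd p fun _ => Bool).symm (y, z)) =
      signSum (fun i : {i // p i} => v i) y + signSum (fun i : {i // ¬p i} => v i) z := by
  simp only [signSum, ← Fintype.sum_subtype_add_sum_subtype p,
    Equiv.piEquivPiSubtypeProd_symm_apply]
  congr 1 <;> exact sum_congr rfl fun i _ => by simp [i.2]

lemma signSum_add_comp_symm_piEquivPiSubtypeProd (p : ι → Prop) [DecidablePred p]
    {u u' : ι → ℝ} (hu : ∀ i, ¬p i → u i = 0) (hu' : ∀ i, p i → u' i = 0) :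
    signSum (u + u') ∘ (Equiv.piEquivPiSubtypeProd p fun _ => Bool).symm =
      fun q => signSum (fun i : {i // p i} => u i) q.1 +
        signSum (fun i : {i // ¬p i} => u' i) q.2 := by
  funext q
  rw [Function.comp_apply, ← Prod.mk.eta (p := q), signSum_symm_piEquivPiSubtypeProd]
  congr 2
  · funext i; simp [hu' _ i.2]
  · funext i; simp [hu _ i.2]

variable [DecidableEq ι]

def SignSumNearScale (C₀ : ℝ) (u : ι → ℝ) (ρ : ℝ) : Prop :=
  1 / C₀ ≤ 𝔼 x, if ρ / C₀ ≤ |signSum u x| ∧ |signSum u x| ≤ C₀ * ρ then 1 else 0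

lemma expect_signSum_eq_of_support (p : ι → Prop) [DecidablePred p] {u : ι → ℝ}
    (hu : ∀ i, ¬p i → u i = 0) (F : ℝ → ℝ) :
    𝔼 x, F (signSum u x) = 𝔼 y, F (signSum (fun i : {i // p i} => u i) y) := by
  have hfst := signSum_add_comp_symm_piEquivPiSubtypeProd (u' := 0) p hu fun _ _ => rfl
  simp only [add_zero, Pi.zero_apply, signSum_zero] at hfst
  calc 𝔼 x, F (signSum u x)
      = 𝔼 q, F (signSum u ((Equiv.piEquivPiSubtypeProd p fun _ => Bool).symm q)) :=
        (Fintype.expect_equiv _ _ _ fun _ => rfl).symm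
    _ = 𝔼 q : _ × ({i // ¬p i} → Bool), F (signSum (fun i : {i // p i} => u i) q.1) :=
        expect_congr rfl fun q _ => congrArg F (congrFun hfst q)
    _ = _ := Fintype.expect_prod_fst fun y => F (signSum (fun i : {i // p i} => u i) y)

lemma smallBallProb_signSum_eq_of_support (p : ι → Prop) [DecidablePred p] {u : ι → ℝ}
    (hu : ∀ i, ¬p i → u i = 0) (a r : ℝ) :
    smallBallProb (signSum u) a r =
      smallBallProb (signSum (fun i : {i // p i} => u i)) a r :=
  expect_signSum_eq_of_support p hu fun t => if |t - a| < r then 1 else 0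

lemma smallBallProb_signSum_add_le {u u' : ι → ℝ} (hdisj : ∀ i, u i = 0 ∨ u' i = 0)
    {r D : ℝ} (hD : ∀ c, smallBallProb (signSum u') c r ≤ D) (a : ℝ) :
    smallBallProb (signSum (u + u')) a r ≤ D := by
  classical
  let p i := u i ≠ 0
  have hu' : ∀ i, p i → u' i = 0 := fun i hi => (hdisj i).resolve_left hi
  rw [← smallBallProb_comp_equiv (Equiv.piEquivPiSubtypeProd p fun _ => Bool).symm,
    signSum_add_comp_symm_piEquivPiSubtypeProd p (fun i hi => not_not.mp hi) hu']
  refine smallBallProb_add_le _ (fun c => ?_) a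
  rw [← smallBallProb_signSum_eq_of_support (¬p ·) (fun i hi => hu' i (not_not.mp hi))]
  exact hD c

lemma smallBallProb_signSum_add_le_of_symm {u u' : ι → ℝ} (hdisj : ∀ i, u i = 0 ∨ u' i = 0)
    {p r R D : ℝ} (hrR : r ≤ R) (hD : ∀ c, smallBallProb (signSum u') c R ≤ D)
    (hp : p ≤ 𝔼 x, if r ≤ |signSum u x| ∧ |signSum u x| + r ≤ R then 1 else 0) (a : ℝ) :
    smallBallProb (signSum (u + u')) a r ≤ (1 - p / 2) * D := by
  classical
  let s i := u i ≠ 0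
  have hu : ∀ i, ¬s i → u i = 0 := fun i hi => not_not.mp hi
  have hu' : ∀ i, s i → u' i = 0 := fun i hi => (hdisj i).resolve_left hi
  rw [← smallBallProb_comp_equiv (Equiv.piEquivPiSubtypeProd s fun _ => Bool).symm,
    signSum_add_comp_symm_piEquivPiSubtypeProd s hu hu']
  refine smallBallProb_add_le_of_symm
    (Function.Involutive.toPerm (fun y i => !y i) fun y => by simp)
    (fun y => signSum_not _ y) hrR (fun c => ?_) ?_ a
  · rw [← smallBallProb_signSum_eq_of_support (¬s ·) (fun i hi => hu' i (not_not.mp hi))]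
    exact hD c
  · rwa [expect_signSum_eq_of_support s hu fun t => if r ≤ |t| ∧ |t| + r ≤ R then 1 else 0]
      at hp

end SignCube

lemma pow_mul_le_of_succ_le {ρ : ℕ → ℝ} {c : ℝ} (hc : 0 ≤ c) {S : ℕ}
    (h : ∀ k, k + 1 < S → c * ρ (k + 1) ≤ ρ k) :
    ∀ d k, k + d < S → c ^ d * ρ (k + d) ≤ ρ k
  | 0, k, _ => by simp
  | d + 1, k, hkd => calc
      c ^ (d + 1) * ρ (k + (d + 1)) = c ^ d * (c * ρ (k + d + 1)) := by ring_nf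
      _ ≤ c ^ d * ρ (k + d) := by gcongr; exact h _ (by omega)
      _ ≤ ρ k := pow_mul_le_of_succ_le hc h d k (by omega)

section Blocks

-- `w i` is the block of coordinate `i`, so `{i | w i ≤ k}.indicator v` is `v⁽⁰⁾ + ⋯ + v⁽ᵏ⁾`.
variable {ι : Type*} (v : ι → ℝ) (w : ι → ℕ)

lemma indicator_le_succ_eq_add (k : ℕ) :
    {i | w i ≤ k + 1}.indicator v = {i | w i = k + 1}.indicator v + {i | w i ≤ k}.indicator v := by
  funext i
  by_cases h : w i = k + 1
  · simp [h]
  · have hk : w i ≤ k + 1 ↔ w i ≤ k := by omega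
    simp [Set.indicator_apply, h, hk]

lemma indicator_eq_succ_or_indicator_le_eq_zero (k : ℕ) (i : ι) :
    {i | w i = k + 1}.indicator v i = 0 ∨ {i | w i ≤ k}.indicator v i = 0 := by
  by_cases h : w i = k + 1 <;> simp [Set.indicator_apply, h]

variable [Fintype ι]

noncomputable def blockNorm (k : ℕ) : ℝ :=
  √(∑ i ∈ univ.filter (fun i => w i = k), v i ^ 2)

lemma blockNorm_nonneg (k : ℕ) : 0 ≤ blockNorm v w k :=
  Real.sqrt_nonneg _

lemma sqrt_sum_indicator_sq (k : ℕ) :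
    √(∑ i, {i | w i = k}.indicator v i ^ 2) = blockNorm v w k := by
  rw [blockNorm, sum_filter]
  congr 1
  exact sum_congr rfl fun i _ => by by_cases h : w i = k <;> simp [h]

variable [DecidableEq ι] {v w}

lemma smallBallProb_partialSum_le {C₀ : ℝ} (hC₀ : 1 < C₀) {S : ℕ}
    (hdec : ∀ k, k + 1 < S → 4 * C₀ ^ 2 * blockNorm v w (k + 1) ≤ blockNorm v w k)
    (hgood : ∀ k < S, SignSumNearScale C₀ ({i | w i = k}.indicator v) (blockNorm v w k)) :
    ∀ k < S, ∀ a r, r ≤ blockNorm v w k / (2 * C₀) →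
      smallBallProb (signSum ({i | w i ≤ k}.indicator v)) a r ≤ (1 - 1 / (2 * C₀)) ^ k := by
  have hC₀' : 0 < C₀ := by linarith
  intro k
  induction k with
  | zero => exact fun _ a r _ => (smallBallProb_le_one _ a r).trans_eq (pow_zero _).symm
  | succ k ih =>
    intro hk a r hr
    have hdec' := hdec k hk
    set ρ := blockNorm v w (k + 1)
    have hρ : 0 ≤ ρ := blockNorm_nonneg v w _
    have hρR : ρ / (2 * C₀) + C₀ * ρ ≤ blockNorm v w k / (2 * C₀) := by
      rw [div_add' _ _ _ (by positivity)]
      gcongr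
      nlinarith [mul_le_mul_of_nonneg_left (show 1 ≤ 2 * C₀ ^ 2 by nlinarith) hρ]
    have hwindow : ∀ t, ρ / C₀ ≤ |t| ∧ |t| ≤ C₀ * ρ →
        r ≤ |t| ∧ |t| + r ≤ blockNorm v w k / (2 * C₀) := by
      intro t ⟨ht, ht'⟩
      have : ρ / (2 * C₀) ≤ ρ / C₀ := by gcongr; linarith
      constructor <;> linarith
    have hrR : r ≤ blockNorm v w k / (2 * C₀) := by nlinarith [div_nonneg hρ hC₀'.le]
    rw [indicator_le_succ_eq_add]
    refine (smallBallProb_signSum_add_le_of_symm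
      (indicator_eq_succ_or_indicator_le_eq_zero v w k) hrR (fun c => ih (by omega) c _ le_rfl)
      (le_trans (hgood (k + 1) hk) (expect_le_expect fun x _ => ?_)) a).trans_eq (by ring)
    split_ifs with h₁ h₂ <;> norm_num
    exact h₂ (hwindow _ h₁)

lemma smallBallProb_partialSum_le_of_le {K : ℕ} {r D : ℝ}
    (hK : ∀ c, smallBallProb (signSum ({i | w i ≤ K}.indicator v)) c r ≤ D) {m : ℕ}
    (hKm : K ≤ m) (a : ℝ) :
    smallBallProb (signSum ({i | w i ≤ m}.indicator v)) a r ≤ D := by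
  induction m, hKm using Nat.le_induction generalizing a with
  | base => exact hK a
  | succ m _ ih =>
    rw [indicator_le_succ_eq_add]
    exact smallBallProb_signSum_add_le (indicator_eq_succ_or_indicator_le_eq_zero v w m) ih a

lemma smallBallProb_signSum_le {C₀ : ℝ} (hC₀ : 1 < C₀) {S : ℕ} (hS : 0 < S)
    (hw : ∀ i, w i < S)
    (hdec : ∀ k, k + 1 < S → 4 * C₀ ^ 2 * blockNorm v w (k + 1) ≤ blockNorm v w k)
    (hgood : ∀ k < S, SignSumNearScale C₀ ({i | w i = k}.indicator v) (blockNorm v w k))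
    {M : ℕ} {r : ℝ} (hr : 2 * C₀ * r ≤ (4 * C₀ ^ 2) ^ M * blockNorm v w (S - 1)) (a : ℝ) :
    smallBallProb (signSum v) a r ≤ (1 - 1 / (2 * C₀)) ^ (S - 1 - M) := by
  rcases le_or_gt M (S - 1) with hM | hM
  · have hchain := pow_mul_le_of_succ_le (by positivity) hdec M (S - 1 - M) (by omega)
    rw [Nat.sub_add_cancel hM] at hchain
    have hv : {i | w i ≤ S - 1}.indicator v = v := funext fun i =>
      Set.indicator_of_mem (show i ∈ {i | w i ≤ S - 1} by show w i ≤ S - 1; have := hw i; omega) v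
    rw [← hv]
    refine smallBallProb_partialSum_le_of_le (fun c => smallBallProb_partialSum_le hC₀ hdec hgood
      _ (by omega) c r ?_) (Nat.sub_le _ _) a
    rw [le_div_iff₀ (by linarith)]
    linarith
  · rw [show S - 1 - M = 0 by omega, pow_zero]
    exact smallBallProb_le_one _ a r

end Blocks

lemma le_pow_ceil_log_add_one {C₀ b : ℝ} (hC₀ : 1 ≤ C₀) (hb : 0 < b) :
    2 * C₀ * b ≤ (4 * C₀ ^ 2) ^ (⌈Real.log b⌉₊ + 1) := by
  have hb' : b ≤ 4 ^ ⌈Real.log b⌉₊ := calc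
    b = Real.exp (Real.log b) := (Real.exp_log hb).symm
    _ ≤ Real.exp ⌈Real.log b⌉₊ := Real.exp_le_exp.mpr (Nat.le_ceil _)
    _ = Real.exp 1 ^ ⌈Real.log b⌉₊ := by rw [← Real.exp_nat_mul, mul_one]
    _ ≤ 4 ^ ⌈Real.log b⌉₊ := by gcongr; exact Real.exp_one_lt_d9.le.trans (by norm_num)
  calc 2 * C₀ * b ≤ 4 * C₀ ^ 2 * 4 ^ ⌈Real.log b⌉₊ :=
        mul_le_mul (by nlinarith) hb' hb.le (by positivity)
    _ ≤ (4 * C₀ ^ 2) ^ (⌈Real.log b⌉₊ + 1) := by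
      rw [pow_succ' (4 * C₀ ^ 2)]; gcongr; nlinarith

lemma one_sub_pow_lt_exp {C₀ b : ℝ} (hC₀ : 1 < C₀) (hb : 1 ≤ b) (S : ℕ) :
    (1 - 1 / (2 * C₀)) ^ (S - 1 - (⌈Real.log b⌉₊ + 1)) <
      8 * C₀ * Real.exp (-(S : ℝ) / (8 * C₀) + 8 * C₀ * Real.log b) := by
  set L := Real.log b
  set N := ⌈L⌉₊
  set K := S - 1 - (N + 1)
  have hC₀' : 0 < C₀ := by linarith
  have hL : 0 ≤ L := Real.log_nonneg hb
  have hN : (N : ℝ) < L + 1 := Nat.ceil_lt_add_one hL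
  have hK : (S : ℝ) ≤ K + N + 2 := by exact_mod_cast (by omega : S ≤ K + N + 2)
  have hlog : 2 < Real.log (8 * C₀) := calc
    (2 : ℝ) < 3 * Real.log 2 := by linarith [Real.log_two_gt_d9]
    _ = Real.log 8 := by rw [show (8 : ℝ) = 2 ^ 3 by norm_num, Real.log_pow]; norm_num
    _ ≤ Real.log (8 * C₀) := Real.log_le_log (by norm_num) (by linarith)
  have hq : (1 - 1 / (2 * C₀)) ^ K ≤ Real.exp (-(K : ℝ) / (2 * C₀)) := calc
    _ ≤ Real.exp (-(1 / (2 * C₀))) ^ K := by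
      gcongr
      · rw [sub_nonneg, div_le_one (by positivity)]; linarith
      · exact Real.one_sub_le_exp_neg _
    _ = _ := by rw [← Real.exp_nat_mul]; ring_nf
  have hexp : -(K : ℝ) / (2 * C₀) < Real.log (8 * C₀) + (-(S : ℝ) / (8 * C₀) + 8 * C₀ * L) := by
    have h₁ : (S : ℝ) / (8 * C₀) ≤ (K + N + 2) / (2 * C₀) := by
      gcongr; linarith
    have h₂ : ((N : ℝ) + 2) / (2 * C₀) ≤ (N + 2) / 2 := by
      gcongr; linarith
    have h₃ : L ≤ 8 * C₀ * L := le_mul_of_one_le_left hL (by linarith)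
    rw [add_div, add_div] at h₁
    rw [neg_div, neg_div]
    linarith [add_div (N : ℝ) 2 (2 * C₀)]
  calc _ ≤ _ := hq
    _ < Real.exp (Real.log (8 * C₀) + (-(S : ℝ) / (8 * C₀) + 8 * C₀ * L)) :=
      Real.exp_lt_exp.mpr hexp
    _ = _ := by rw [Real.exp_add, Real.exp_log (by positivity)]

lemma Fintype.expect_boole {α : Type*} [Fintype α] (P : α → Prop) [DecidablePred P] :
    𝔼 x, (if P x then 1 else 0 : ℝ) = #{x | P x} / Fintype.card α := by
  rw [Fintype.expect_eq_sum_div_card, sum_boole]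

def PaleyZygmundBound (C₀ : ℝ) : Prop :=
  ∀ (n : ℕ) (u : Fin n → ℝ), (∑ j, (u j) ^ 2) = 1 →
    (1 : ℝ) / C₀ ≤
      ((Finset.univ : Finset (Fin n → Bool)).filter (fun x =>
          1 / C₀ ≤ |∑ j, (if x j then (1 : ℝ) else -1) * u j| ∧
          |∑ j, (if x j then (1 : ℝ) else -1) * u j| ≤ C₀)).card / 2 ^ n

lemma PaleyZygmundBound.le_expect {C₀ : ℝ} (hPZ : PaleyZygmundBound C₀) {n : ℕ}
    (u : Fin n → ℝ) (hu : 0 < √(∑ j, u j ^ 2)) :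
    SignSumNearScale C₀ u √(∑ j, u j ^ 2) := by
  set ρ := √(∑ j, u j ^ 2)
  have hunit : ∑ j, (u j / ρ) ^ 2 = 1 := by
    simp_rw [div_pow, ← sum_div, ρ, Real.sq_sqrt (sum_nonneg fun j _ => sq_nonneg (u j))]
    exact div_self (Real.sqrt_pos.mp hu).ne'
  have h := hPZ n (fun j => u j / ρ) hunit
  rw [show (2 : ℝ) ^ n = Fintype.card (Fin n → Bool) by simp, ← Fintype.expect_boole] at h
  refine h.trans_eq (expect_congr rfl fun x _ => if_congr ?_ rfl rfl)
  have hx : ∑ j, (if x j then (1 : ℝ) else -1) * (u j / ρ) = signSum u x / ρ := by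
    simp_rw [signSum, sum_div, mul_div_assoc]
  rw [hx, abs_div, abs_of_pos hu, le_div_iff₀ hu, div_le_iff₀ hu, one_div_mul_eq_div]

/-- Strong anti-concentration for vectors with many scales: if `C₀ > 1` satisfies
the Paley–Zygmund claim, then there is `C₃ > 1` so that for every `v ∈ ℝⁿ`
partitioned into `S` blocks whose ℓ₂-norms decrease by factors of `4C₀²`,
with smallest block norm `δ`, and for every `a ∈ ℝ` and `b ≥ 2`,
`Pr_{x ∈ {-1,1}ⁿ}[|⟨x,v⟩ - a| < bδ] < C₃ exp(-S/C₃ + C₃ log b)`. -/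
theorem many_scales_anticoncentration
    (C₀ : ℝ) (hC₀ : 1 < C₀)
    (hPZ : ∀ (n : ℕ) (u : Fin n → ℝ), (∑ j, (u j) ^ 2) = 1 →
      (1 : ℝ) / C₀ ≤
        ((Finset.univ : Finset (Fin n → Bool)).filter (fun x =>
            1 / C₀ ≤ |∑ j, (if x j then (1 : ℝ) else -1) * u j| ∧
            |∑ j, (if x j then (1 : ℝ) else -1) * u j| ≤ C₀)).card / 2 ^ n) :
    ∃ C₃ : ℝ, 1 < C₃ ∧
      ∀ (n S : ℕ) (hS : 0 < S) (v : Fin n → ℝ) (π : Fin n → Fin S),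
        (∀ s : Fin S, (s : ℕ) + 1 < S →
          Real.sqrt (∑ j ∈ Finset.univ.filter (fun j => π j = s), (v j) ^ 2) ≥
            4 * C₀ ^ 2 *
              Real.sqrt (∑ j ∈ Finset.univ.filter (fun j => (π j : ℕ) = (s : ℕ) + 1),
                (v j) ^ 2)) →
        ∀ (a b : ℝ), 2 ≤ b →
          (((Finset.univ : Finset (Fin n → Bool)).filter (fun x =>
              |(∑ j, (if x j then (1 : ℝ) else -1) * v j) - a| <
                b * Real.sqrt (∑ j ∈ Finset.univ.filter
                  (fun j => (π j : ℕ) = S - 1), (v j) ^ 2))).card / 2 ^ n : ℝ) <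
            C₃ * Real.exp (-(S : ℝ) / C₃ + C₃ * Real.log b) := by
  refine ⟨8 * C₀, by linarith, fun n S hS v π hdec a b hb => ?_⟩
  let w : Fin n → ℕ := fun j => π j
  have hdec' : ∀ k, k + 1 < S → 4 * C₀ ^ 2 * blockNorm v w (k + 1) ≤ blockNorm v w k :=
    fun k hk => by simpa only [blockNorm, w, Fin.ext_iff] using hdec ⟨k, by omega⟩ hk
  rw [show (2 : ℝ) ^ n = Fintype.card (Fin n → Bool) by simp, ← Fintype.expect_boole]
  change smallBallProb (signSum v) a (b * blockNorm v w (S - 1)) < _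
  rcases (blockNorm_nonneg v w (S - 1)).eq_or_lt with hδ | hδ
  · rw [← hδ, mul_zero, smallBallProb_of_nonpos _ _ le_rfl]
    positivity
  have hgood : ∀ k < S, SignSumNearScale C₀ ({i | w i = k}.indicator v) (blockNorm v w k) := by
    intro k hk
    have hchain := pow_mul_le_of_succ_le (by positivity) hdec' (S - 1 - k) k (by omega)
    rw [Nat.add_sub_cancel' (by omega : k ≤ S - 1)] at hchain
    have hρ : 0 < blockNorm v w k := lt_of_lt_of_le (by positivity) hchain
    rw [← sqrt_sum_indicator_sq] at hρ ⊢
    exact PaleyZygmundBound.le_expect hPZ _ hρ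
  calc _ ≤ (1 - 1 / (2 * C₀)) ^ (S - 1 - (⌈Real.log b⌉₊ + 1)) :=
        smallBallProb_signSum_le hC₀ hS (fun i => (π i).isLt) hdec' hgood
          (by rw [← mul_assoc]; gcongr; exact le_pow_ceil_log_add_one hC₀.le (by linarith)) a
    _ < _ := one_sub_pow_lt_exp hC₀ (by linarith) S
end

section
/- Bang's lemma: Let M be a k×k real symmetric matrix with all diagonal entries equal to 1, let γ_1,...,γ_k ∈ ℝ, and let θ ≥ 0. Then there exists a sign vector ε ∈ {-1,1}^k such that for every i ∈ [k], |θ(Mε)_i - γ_i| ≥ θ. -/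
/-!
Maximize `Φ(ε) = θ ⟪ε, M ε⟫ - 2 ⟪γ, ε⟫` over the sign vectors `ε ∈ {-1, 1}ᵏ`. Flipping the sign
of `εᵢ` changes `Φ` by `-4 (εᵢ (θ (Mε)ᵢ - γᵢ) - θ Mᵢᵢ)` when `M` is symmetric, so at a maximizer
`εᵢ (θ (Mε)ᵢ - γᵢ) ≥ θ Mᵢᵢ = θ` for every `i`, and since `|εᵢ| = 1` this is the claim.
-/

open Matrix

variable {n R : Type*} [Fintype n] [DecidableEq n]

theorem Matrix.IsSymm.dotProduct_mulVec_sub_single [CommRing R] {M : Matrix n n R}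
    (hM : M.IsSymm) (x : n → R) (i : n) (c : R) :
    (x - Pi.single i c) ⬝ᵥ M *ᵥ (x - Pi.single i c) =
      x ⬝ᵥ M *ᵥ x - 2 * c * (M *ᵥ x) i + c ^ 2 * M i i := by
  have hx : x ⬝ᵥ M *ᵥ Pi.single i c = c * (M *ᵥ x) i := by
    rw [dotProduct_mulVec, ← mulVec_transpose, hM.eq, dotProduct_single, mul_comm]
  rw [mulVec_sub, dotProduct_sub, sub_dotProduct, sub_dotProduct, hx, single_dotProduct,
    single_dotProduct, mulVec_single]
  simp only [Pi.smul_apply, col_apply, MulOpposite.smul_eq_mul_unop, MulOpposite.unop_op]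
  ring

section Potential

variable [CommRing R]

def bangPotential (θ : R) (M : Matrix n n R) (γ ε : n → R) : R :=
  θ * (ε ⬝ᵥ M *ᵥ ε) - 2 * (γ ⬝ᵥ ε)

theorem bangPotential_sub_single {M : Matrix n n R} (hM : M.IsSymm) (θ : R) (γ ε : n → R)
    (i : n) (c : R) :
    bangPotential θ M γ (ε - Pi.single i c) =
      bangPotential θ M γ ε - θ * (2 * c * (M *ᵥ ε) i - c ^ 2 * M i i) + 2 * c * γ i := by
  rw [bangPotential, bangPotential, hM.dotProduct_mulVec_sub_single, dotProduct_sub,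
    dotProduct_single]
  ring

end Potential

section SignVectors

variable [Ring R] [DecidableEq R]

variable (n R) in
def signVectors : Finset (n → R) :=
  Fintype.piFinset fun _ => {1, -1}

theorem mem_signVectors {ε : n → R} : ε ∈ signVectors n R ↔ ∀ i, ε i = 1 ∨ ε i = -1 := by
  simp [signVectors]

theorem sub_single_two_mul_mem_signVectors {ε : n → R} (hε : ε ∈ signVectors n R) (i : n) :
    ε - Pi.single i (2 * ε i) ∈ signVectors n R := by
  rw [mem_signVectors] at hε ⊢
  intro j
  rcases eq_or_ne j i with rfl | hji
  · simpa [two_mul, sub_add_cancel_left, neg_eq_iff_eq_neg, or_comm] using hε j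
  · simpa [hji] using hε j

end SignVectors

section Ordered

variable [CommRing R] [LinearOrder R] [IsStrictOrderedRing R]

theorem le_mul_of_bangPotential_flip_le {M : Matrix n n R} (hM : M.IsSymm) (θ : R)
    (γ ε : n → R) (i : n) (hεi : ε i = 1 ∨ ε i = -1)
    (hflip : bangPotential θ M γ (ε - Pi.single i (2 * ε i)) ≤ bangPotential θ M γ ε) :
    θ * M i i ≤ ε i * (θ * (M *ᵥ ε) i - γ i) := by
  have hsq : ε i ^ 2 = 1 := by rcases hεi with h | h <;> simp [h]
  rw [bangPotential_sub_single hM] at hflip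
  have h4 : 4 * (θ * M i i) ≤ 4 * (ε i * (θ * (M *ᵥ ε) i - γ i)) := by
    linear_combination hflip - 4 * θ * M i i * hsq
  exact le_of_mul_le_mul_left h4 four_pos

theorem exists_mem_signVectors_forall_le_mul {M : Matrix n n R} (hM : M.IsSymm) (θ : R)
    (γ : n → R) :
    ∃ ε ∈ signVectors n R, ∀ i, θ * M i i ≤ ε i * (θ * (M *ᵥ ε) i - γ i) := by
  have hne : (signVectors n R).Nonempty := ⟨1, mem_signVectors.2 fun _ => .inl rfl⟩
  obtain ⟨ε, hε, hmax⟩ := (signVectors n R).exists_max_image (bangPotential θ M γ) hne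
  refine ⟨ε, hε, fun i => ?_⟩
  exact le_mul_of_bangPotential_flip_le hM θ γ ε i (mem_signVectors.1 hε i)
    (hmax _ (sub_single_two_mul_mem_signVectors hε i))

end Ordered

theorem bang_lemma_general (k : ℕ) (M : Matrix (Fin k) (Fin k) ℝ)
    (hsymm : M.IsSymm) (hdiag : ∀ i, M i i = 1)
    (γ : Fin k → ℝ) (θ : ℝ) :
    ∃ ε : Fin k → ℝ, (∀ i, ε i = 1 ∨ ε i = -1) ∧
      ∀ i, |θ * (M.mulVec ε) i - γ i| ≥ θ := by
  obtain ⟨ε, hε, hle⟩ := exists_mem_signVectors_forall_le_mul hsymm θ γ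
  have hsign := mem_signVectors.1 hε
  refine ⟨ε, hsign, fun i => ?_⟩
  have habs : |ε i| = 1 := by rcases hsign i with h | h <;> simp [h]
  calc θ = θ * M i i := by rw [hdiag, mul_one]
    _ ≤ ε i * (θ * (M *ᵥ ε) i - γ i) := hle i
    _ ≤ |ε i * (θ * (M *ᵥ ε) i - γ i)| := le_abs_self _
    _ = |θ * (M *ᵥ ε) i - γ i| := by rw [abs_mul, habs, one_mul]

/-- Bang's lemma: for a real symmetric `k × k` matrix `M` with unit diagonal,
`γ ∈ ℝᵏ` and `θ ≥ 0`, there is `ε ∈ {-1,1}ᵏ` with `|θ(Mε)_i - γ_i| ≥ θ` for all `i`. -/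
theorem bang_lemma (k : ℕ) (M : Matrix (Fin k) (Fin k) ℝ)
    (hsymm : M.IsSymm) (hdiag : ∀ i, M i i = 1)
    (γ : Fin k → ℝ) (θ : ℝ) (hθ : 0 ≤ θ) :
    ∃ ε : Fin k → ℝ, (∀ i, ε i = 1 ∨ ε i = -1) ∧
      ∀ i, |θ * (M.mulVec ε) i - γ i| ≥ θ :=
  bang_lemma_general k M hsymm hdiag γ θ
end

section
/- Let P be a non-trivial product distribution on {0,1}ⁿ with σ_P² = Σ_j p_j(1-p_j) > 0. Sample x ∼ P and, independently, a coordinate j ∈ [n] with probability p_j(1-p_j)/σ_P² (squared-variance weights σ_j²/σ_P² where σ_j² = p_j(1-p_j)), and set y = x + e_j (flip coordinate j). Then for every u ∈ {0,1}ⁿ and every u-monotone function f : {0,1}ⁿ → {0,1}, Pr[f(x) ≠ f(y)] ≤ 1/σ_P. -/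
/-!
Write `σ_j² = p_j (1 - p_j)` and `σ_P² = ∑ σ_j²`. The probability in question is
`∑_j σ_j² Inf_j(f) / σ_P²`, where `Inf_j(f) = Pr[f(x) ≠ f(x + e_j)]`. Conditioning on the other
coordinates gives `σ_j² Inf_j(f) = ε_j E[f(x) (x_j - p_j)]` for a `u`-monotone `f`, with
`ε_j = ±1` according to `u_j`. Summing over `j`, the numerator is `E[f g]` with
`g = ∑_j ε_j (x_j - p_j)`; by Cauchy–Schwarz and `0 ≤ f ≤ 1` it is at most `√E[g²]`, and
independence of the coordinates gives `E[g²] = σ_P²`. Hence the probability is at most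
`σ_P / σ_P² = 1 / σ_P`.
-/

open Finset Function

lemma sum_mul_mul_le_sqrt_sum_mul_sq {α : Type*} [Fintype α] {w F : α → ℝ}
    (hw : ∀ x, 0 ≤ w x) (hw₁ : ∑ x, w x = 1) (hF : ∀ x, F x ^ 2 ≤ 1) (g : α → ℝ) :
    ∑ x, w x * (F x * g x) ≤ √(∑ x, w x * g x ^ 2) := by
  refine Real.le_sqrt_of_sq_le ?_
  calc (∑ x, w x * (F x * g x)) ^ 2 ≤ (∑ x, w x) * ∑ x, w x * g x ^ 2 :=
        sum_sq_le_sum_mul_sum_of_sq_le_mul _ (fun x _ => hw x)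
          (fun x _ => mul_nonneg (hw x) (sq_nonneg _)) fun x _ => by
            calc (w x * (F x * g x)) ^ 2 = w x * (w x * g x ^ 2) * F x ^ 2 := by ring
              _ ≤ w x * (w x * g x ^ 2) :=
                mul_le_of_le_one_right (mul_nonneg (hw x) (mul_nonneg (hw x) (sq_nonneg _))) (hF x)
    _ = ∑ x, w x * g x ^ 2 := by rw [hw₁, one_mul]

section

variable {ι : Type*}

def centeredCoord (p : ι → ℝ) (j : ι) (x : ι → Bool) : ℝ :=
  (if x j then 1 else 0) - p j

section

variable [DecidableEq ι]

def flipCoord (j : ι) : Equiv.Perm (ι → Bool) :=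
  Involutive.toPerm (fun x => update x j (!x j)) fun x => by
    ext i
    rcases eq_or_ne i j with rfl | h <;> simp [*]

@[simp]
lemma flipCoord_apply (j : ι) (x : ι → Bool) :
    flipCoord j x = update x j (!x j) := rfl

/-- `u`-monotonicity of the paper: `x ↦ f (x + u)` is monotone in each coordinate. -/
def XorMonotone (u : ι → Bool) (f : (ι → Bool) → Bool) : Prop :=
  ∀ (x : ι → Bool) (j : ι),
    f (fun i => xor (update x j false i) (u i)) ≤ f (fun i => xor (update x j true i) (u i))

lemma XorMonotone.update_le {u : ι → Bool} {f : (ι → Bool) → Bool} (hf : XorMonotone u f)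
    (x : ι → Bool) (j : ι) : f (update x j (u j)) ≤ f (update x j (!u j)) := by
  have hxor : ∀ b, (fun i => xor (update (fun i => xor (x i) (u i)) j b i) (u i))
      = update x j (xor b (u j)) := fun b => by
    ext i
    rcases eq_or_ne i j with rfl | h <;> simp [*]
  simpa [hxor] using hf (fun i => xor (x i) (u i)) j

lemma ne_update_not_iff {α : Type*} (f : (ι → Bool) → α) (x : ι → Bool) (j : ι) :
    f x ≠ f (update x j (!x j)) ↔ f (update x j false) ≠ f (update x j true) := by
  conv_lhs => rw [← update_eq_self j x]
  cases x j <;> simp [ne_comm]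

lemma XorMonotone.sign_mul_sub_eq {u : ι → Bool} {f : (ι → Bool) → Bool}
    (hf : XorMonotone u f) (x : ι → Bool) (j : ι) :
    (if u j then -1 else 1) *
        ((if f (update x j true) then 1 else 0) - if f (update x j false) then 1 else 0)
      = if f x ≠ f (update x j (!x j)) then (1 : ℝ) else 0 := by
  have hmono := hf.update_le x j
  simp only [ne_update_not_iff]
  revert hmono
  cases u j <;> simp only [Bool.not_false, Bool.not_true] <;>
    cases f (update x j false) <;> cases f (update x j true) <;> norm_num

end

variable [Fintype ι]

noncomputable def bernoulliWeight (p : ι → ℝ) (x : ι → Bool) : ℝ :=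
  ∏ i, if x i then p i else 1 - p i

lemma bernoulliWeight_nonneg {p : ι → ℝ} (hp₀ : ∀ i, 0 ≤ p i) (hp₁ : ∀ i, p i ≤ 1)
    (x : ι → Bool) : 0 ≤ bernoulliWeight p x :=
  prod_nonneg fun i _ => by split_ifs <;> linarith [hp₀ i, hp₁ i]

variable [DecidableEq ι]

lemma sum_bernoulliWeight (p : ι → ℝ) : ∑ x, bernoulliWeight p x = 1 := by
  simp [bernoulliWeight, ← Fintype.prod_sum fun i (b : Bool) => if b then p i else 1 - p i]

lemma bernoulliWeight_update (p : ι → ℝ) (x : ι → Bool) (j : ι) (b : Bool) :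
    bernoulliWeight p (update x j b)
      = (if b then p j else 1 - p j) * ∏ i ∈ univ \ {j}, if x i then p i else 1 - p i := by
  rw [bernoulliWeight, ← prod_update_of_mem (mem_univ j)]
  exact prod_congr rfl fun i _ => by rcases eq_or_ne i j with rfl | h <;> simp [*]

lemma sum_eq_sum_update_false_add_true {M : Type*} [AddCommMonoid M] (j : ι)
    (g : (ι → Bool) → M) :
    ∑ x, g x = ∑ x, if x j then 0 else g x + g (update x j true) := by
  have hflip : ∑ x, (if x j then g x else 0)
      = ∑ x, (if x j then 0 else g (update x j true)) :=
    Fintype.sum_equiv (flipCoord j) _ _ fun x => by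
      cases hx : x j
      · simp [hx]
      · simp only [flipCoord_apply, hx, update_self, update_idem]
        simp [← hx]
  calc ∑ x, g x = ∑ x, ((if x j then 0 else g x) + if x j then g x else 0) :=
        sum_congr rfl fun x _ => by cases x j <;> simp
    _ = _ := by
        rw [sum_add_distrib, hflip, ← sum_add_distrib]
        exact sum_congr rfl fun x _ => by cases x j <;> simp

/-- Conditional expectation of `G` given all coordinates but `j`. -/
def expectCoord (p : ι → ℝ) (j : ι) (G : (ι → Bool) → ℝ) (x : ι → Bool) : ℝ :=
  p j * G (update x j true) + (1 - p j) * G (update x j false)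

lemma sum_bernoulliWeight_mul_expectCoord (p : ι → ℝ) (j : ι) (G : (ι → Bool) → ℝ) :
    ∑ x, bernoulliWeight p x * expectCoord p j G x = ∑ x, bernoulliWeight p x * G x := by
  rw [sum_eq_sum_update_false_add_true j,
    sum_eq_sum_update_false_add_true j fun x => bernoulliWeight p x * G x]
  refine sum_congr rfl fun x _ => ?_
  cases hx : x j
  · have hx₀ : update x j false = x := by rw [← hx, update_eq_self]
    have hW₀ := bernoulliWeight_update p x j false
    have hW₁ := bernoulliWeight_update p x j true
    rw [hx₀] at hW₀
    simp only [expectCoord, update_idem, hx₀, hW₀, hW₁, if_true, Bool.false_eq_true,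
      if_false]
    ring
  · simp

lemma sum_bernoulliWeight_mul_centeredCoord (p : ι → ℝ) (j : ι) (g : (ι → Bool) → ℝ) :
    ∑ x, bernoulliWeight p x * (g x * centeredCoord p j x)
      = p j * (1 - p j) *
          ∑ x, bernoulliWeight p x * (g (update x j true) - g (update x j false)) := by
  rw [← sum_bernoulliWeight_mul_expectCoord p j, mul_sum]
  refine sum_congr rfl fun x _ => ?_
  simp only [expectCoord, centeredCoord, update_self, if_true, Bool.false_eq_true, if_false]
  ring

lemma sum_bernoulliWeight_mul_centeredCoord_mul (p : ι → ℝ) (j k : ι) :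
    ∑ x, bernoulliWeight p x * (centeredCoord p k x * centeredCoord p j x)
      = if j = k then p j * (1 - p j) else 0 := by
  rw [sum_bernoulliWeight_mul_centeredCoord]
  split_ifs with hjk
  · subst hjk
    simp [centeredCoord, sum_bernoulliWeight]
  · simp [centeredCoord, update_of_ne (Ne.symm hjk)]

lemma sum_bernoulliWeight_mul_sq_sum_centeredCoord (p c : ι → ℝ) :
    ∑ x, bernoulliWeight p x * (∑ j, c j * centeredCoord p j x) ^ 2
      = ∑ j, c j ^ 2 * (p j * (1 - p j)) := by
  have hexpand : ∀ x, bernoulliWeight p x * (∑ j, c j * centeredCoord p j x) ^ 2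
      = ∑ j, ∑ k, c j * c k *
          (bernoulliWeight p x * (centeredCoord p k x * centeredCoord p j x)) := fun x => by
    rw [sq, sum_mul_sum, mul_sum]
    exact sum_congr rfl fun j _ => by rw [mul_sum]; exact sum_congr rfl fun k _ => by ring
  simp_rw [hexpand]
  rw [sum_comm]
  refine sum_congr rfl fun j _ => ?_
  rw [sum_comm]
  simp_rw [← mul_sum, sum_bernoulliWeight_mul_centeredCoord_mul]
  simp [sq, mul_assoc]

noncomputable def influence (p : ι → ℝ) (f : (ι → Bool) → Bool) (j : ι) : ℝ :=
  ∑ x, bernoulliWeight p x * if f x ≠ f (update x j (!x j)) then 1 else 0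

lemma XorMonotone.mul_influence_eq {u : ι → Bool} {f : (ι → Bool) → Bool}
    (hf : XorMonotone u f) (p : ι → ℝ) (j : ι) :
    p j * (1 - p j) * influence p f j
      = ∑ x, bernoulliWeight p x *
          ((if u j then -1 else 1) * (if f x then 1 else 0) * centeredCoord p j x) := by
  rw [sum_bernoulliWeight_mul_centeredCoord]
  simp_rw [← mul_sub, hf.sign_mul_sub_eq]
  rfl

lemma XorMonotone.sum_mul_influence_eq {u : ι → Bool} {f : (ι → Bool) → Bool}
    (hf : XorMonotone u f) (p : ι → ℝ) :
    ∑ j, p j * (1 - p j) * influence p f j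
      = ∑ x, bernoulliWeight p x *
          ((if f x then 1 else 0) * ∑ j, (if u j then -1 else 1) * centeredCoord p j x) := by
  simp_rw [hf.mul_influence_eq, mul_sum]
  rw [sum_comm]
  exact sum_congr rfl fun _ _ => sum_congr rfl fun _ _ => by ring

end

/-- Sample `x ∼ P` (a non-trivial product distribution on `{0,1}ⁿ`) and flip a
random coordinate `j` chosen with probability `p_j(1-p_j)/σ_P²` to obtain `y`.
Then for every `u` and every `u`-monotone `f : {0,1}ⁿ → {0,1}`,
`Pr[f(x) ≠ f(y)] ≤ 1/σ_P`. -/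
theorem monotone_edge_bound (n : ℕ) (p : Fin n → ℝ)
    (hp : ∀ j, 0 < p j ∧ p j < 1)
    (u : Fin n → Bool) (f : (Fin n → Bool) → Bool)
    (hf : ∀ (x : Fin n → Bool) (j : Fin n),
      f (fun i => xor (Function.update x j false i) (u i)) ≤
        f (fun i => xor (Function.update x j true i) (u i))) :
    (∑ x : Fin n → Bool, (∏ i, if x i then p i else 1 - p i) *
        ∑ j : Fin n, (p j * (1 - p j) / ∑ i, p i * (1 - p i)) *
          (if f x ≠ f (Function.update x j (!(x j))) then (1 : ℝ) else 0)) ≤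
      1 / Real.sqrt (∑ i, p i * (1 - p i)) := by
  set S := ∑ i, p i * (1 - p i)
  have hW : ∀ x, 0 ≤ bernoulliWeight p x :=
    bernoulliWeight_nonneg (fun i => (hp i).1.le) fun i => (hp i).2.le
  have hvariance : ∑ x, bernoulliWeight p x *
      (∑ j, (if u j then -1 else 1) * centeredCoord p j x) ^ 2 = S := by
    rw [sum_bernoulliWeight_mul_sq_sum_centeredCoord]
    exact sum_congr rfl fun j _ => by split_ifs <;> ring
  calc _ = (∑ j, p j * (1 - p j) * influence p f j) / S := by
        simp_rw [influence, bernoulliWeight, mul_sum, sum_div]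
        rw [sum_comm]
        exact sum_congr rfl fun _ _ => sum_congr rfl fun _ _ => by ring
    _ ≤ √S / S := by
        rw [XorMonotone.sum_mul_influence_eq hf, ← hvariance]
        gcongr
        · exact sum_nonneg fun x _ => mul_nonneg (hW x) (sq_nonneg _)
        · exact sum_mul_mul_le_sqrt_sum_mul_sq hW (sum_bernoulliWeight p)
            (fun x => by split_ifs <;> norm_num) _
    _ = 1 / √S := Real.sqrt_div_self'
end

section
/- If k hyperplanes in ℝⁿ with everywhere-nonzero (skew) normal vectors cover all 2ⁿ vertices of {-1,1}ⁿ (every vertex lies on at least one hyperplane), then 2k hyperplanes suffice to slice all edges of {-1,1}ⁿ. Consequently, if slicing all edges requires at least m hyperplanes, then covering all vertices by skew hyperplanes requires at least m/2 hyperplanes. -/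
open Finset

/-- If `k` skew hyperplanes cover all vertices of `{-1,1}ⁿ`, then `2k` hyperplanes
slice all edges of `{-1,1}ⁿ`. -/
theorem cover_to_slice (n k : ℕ) (v : Fin k → Fin n → ℝ) (μ : Fin k → ℝ)
    (hskew : ∀ i j, v i j ≠ 0)
    (hcover : ∀ x : Fin n → Bool,
      ∃ i, (∑ j, (if x j then (1 : ℝ) else -1) * v i j) = μ i) :
    ∃ (w : Fin (2 * k) → Fin n → ℝ) (ν : Fin (2 * k) → ℝ),
      ∀ (x : Fin n → Bool) (j : Fin n),
        ∃ i, ((∑ j', (if x j' then (1 : ℝ) else -1) * w i j') - ν i) *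
            ((∑ j', (if Function.update x j (!(x j)) j' then (1 : ℝ) else -1) * w i j')
              - ν i) < 0 := by
  classical
  rcases Nat.eq_zero_or_pos n with hn | hn
  · subst hn
    exact ⟨0, 0, fun x j => j.elim0⟩
  rcases Nat.eq_zero_or_pos k with hk | hk
  · obtain ⟨i, _⟩ := hcover (fun _ => true)
    subst hk
    exact i.elim0
  -- minimal |v i j|
  set S : Finset ℝ := Finset.univ.image (fun p : Fin k × Fin n => |v p.1 p.2|) with hSdef
  have hSne : S.Nonempty := ⟨|v ⟨0, hk⟩ ⟨0, hn⟩|, by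
    simp [hSdef]⟩
  set β := S.min' hSne with hβdef
  have hβpos : 0 < β := by
    obtain ⟨p, -, hp⟩ := Finset.mem_image.mp (S.min'_mem hSne)
    rw [hβdef, ← hp]
    exact abs_pos.mpr (hskew p.1 p.2)
  have hβle : ∀ i j, β ≤ |v i j| := by
    intro i j
    exact S.min'_le _ (Finset.mem_image.mpr ⟨(i, j), Finset.mem_univ _, rfl⟩)
  -- index map
  have hlt : ∀ i : Fin (2 * k), ¬ i.val < k → i.val - k < k := fun i h => by
    have := i.2; omega
  set f : Fin (2 * k) → Fin k :=
    fun i => if h : i.val < k then ⟨i.val, h⟩ else ⟨i.val - k, hlt i h⟩ with hfdef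
  refine ⟨fun i => v (f i), fun i => if i.val < k then μ (f i) + β else μ (f i) - β,
    fun x j => ?_⟩
  obtain ⟨i, hi⟩ := hcover x
  set y := Function.update x j (!(x j)) with hydef
  set d : ℝ := -2 * (if x j then (1 : ℝ) else -1) * v i j with hddef
  have hyj : y j = !(x j) := Function.update_self _ _ _
  have key : (∑ j', (if y j' then (1 : ℝ) else -1) * v i j')
      - (∑ j', (if x j' then (1 : ℝ) else -1) * v i j') = d := by
    have h1 : (∑ j', (if y j' then (1 : ℝ) else -1) * v i j')
        - (∑ j', (if x j' then (1 : ℝ) else -1) * v i j')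
        = ∑ j', ((if y j' then (1 : ℝ) else -1) - (if x j' then (1 : ℝ) else -1)) * v i j' := by
      rw [← Finset.sum_sub_distrib]
      congr 1; ext j'; ring
    rw [h1, Finset.sum_eq_single j]
    · rw [hyj]
      cases hxj : x j <;> simp [hddef, hxj] <;> [norm_num; ring]
    · intro b _ hb
      have hyb : y b = x b := Function.update_of_ne hb _ _
      rw [hyb, sub_self, zero_mul]
    · intro h; exact absurd (Finset.mem_univ j) h
  have hsum' : (∑ j', (if y j' then (1 : ℝ) else -1) * v i j') = μ i + d := by
    rw [← hi]; linarith [key]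
  have hdabs : |d| = 2 * |v i j| := by
    rw [hddef]
    cases hxj : x j <;> simp [hxj, abs_mul]
  have hβd : β < |d| := by
    rw [hdabs]
    have := hβle i j
    have := abs_pos.mpr (hskew i j)
    linarith
  have hdne : d ≠ 0 := by
    rw [hddef]
    cases hxj : x j <;> simp [hxj, hskew i j]
  rcases hdne.lt_or_gt with hd | hd
  · -- d < 0 : use the hyperplane μ i - β
    refine ⟨⟨i.val + k, by omega⟩, ?_⟩
    have hnotlt : ¬ (i.val + k < k) := by omega
    have hf : f ⟨i.val + k, by omega⟩ = i := by
      simp only [hfdef, hnotlt, dif_neg, not_false_iff]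
      exact Fin.ext (by simp)
    simp only [hnotlt, if_neg, not_false_iff, hf, hi, hsum']
    have h1 : μ i - (μ i - β) = β := by ring
    have h2 : μ i + d - (μ i - β) = d + β := by ring
    rw [h1, h2]
    have : d + β < 0 := by
      have : |d| = -d := abs_of_neg hd
      linarith
    exact mul_neg_of_pos_of_neg hβpos this
  · -- d > 0 : use the hyperplane μ i + β
    refine ⟨⟨i.val, by omega⟩, ?_⟩
    have hltk : (i.val : ℕ) < k := i.2
    have hf : f ⟨i.val, by omega⟩ = i := by
      simp only [hfdef, hltk, dif_pos]
    simp only [hltk, if_pos, hf, hi, hsum']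
    have h1 : μ i - (μ i + β) = -β := by ring
    have h2 : μ i + d - (μ i + β) = d - β := by ring
    rw [h1, h2]
    have : 0 < d - β := by
      have : |d| = d := abs_of_pos hd
      linarith
    exact mul_neg_of_neg_of_pos (by linarith) this
end
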